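/- arXiv:2411.03681 — 10 statements merged into one kernel-verified Lean document; each statement's English description precedes it below -/
import Mathlib

section
/- For all integers a, b and every natural number n, the identity 2a²·M^{a,b}_n = (4a² − b²)·T^{a,b}_n + 2b·T^{a,b}_{n+1} − T^{a,b}_{n+2} holds in ℤ. (In particular, for a = b = 1: 2M_n = 3T_n + 2T_{n+1} − T_{n+2}.) -/
open Polynomial

/-- The generalized central trinomial coefficient `T^{a,b}_n`:
the coefficient of `X^n` in `(a + bX + aX^2)^n`. -/
noncomputable def genTrinomial (a b : ℤ) (n : ℕ) : ℤ :=
  ((C a + C b * X + C a * X ^ 2) ^ n).coeff n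

/-- The generalized Motzkin number `M^{a,b}_n`:
the coefficient of `X^n` in `(a + bX + aX^2)^n * (1 - X^2)`. -/
noncomputable def genMotzkin (a b : ℤ) (n : ℕ) : ℤ :=
  (((C a + C b * X + C a * X ^ 2) ^ n) * (1 - X ^ 2)).coeff n

/-!
Write `P = a + bX + aX²` and `c_k` for the coefficient of `X^k` in `P^n`. Since `P` is
palindromic of degree 2, `P^n` is palindromic of degree `2n`, i.e. `c_{n+k} = c_{n-k}`. Hence
`M_n = c_n - c_{n+2}`, and multiplying by `P` once or twice gives
`T_{n+1} = 2a c_{n+1} + b c_n` and `T_{n+2} = 2a² c_{n+2} + 4ab c_{n+1} + (2a² + b²) c_n`;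
the identity is the linear combination of these three expressions.
-/

namespace Polynomial

section Reflect

variable {R : Type*} [Semiring R] {p : R[X]} {N : ℕ}

theorem coeff_X_pow_mul_of_reflect_eq (hp : reflect N p = p) (hdeg : p.natDegree ≤ N)
    {j m : ℕ} (hm : m ≤ j + N) : (X ^ j * p).coeff m = p.coeff (j + N - m) := by
  have hrefl : reflect (j + N) (X ^ j * p) = p := by
    rw [reflect_mul _ _ (natDegree_X_pow_le j) hdeg, reflect_monomial, hp,
      revAt_le le_rfl, Nat.sub_self, pow_zero, one_mul]
  calc (X ^ j * p).coeff m = (reflect (j + N) (X ^ j * p)).coeff (j + N - m) := by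
        rw [coeff_reflect, revAt_le (Nat.sub_le _ _), Nat.sub_sub_self hm]
    _ = p.coeff (j + N - m) := by rw [hrefl]

theorem reflect_pow_of_reflect_eq (hp : reflect N p = p) (hdeg : p.natDegree ≤ N) (k : ℕ) :
    reflect (N * k) (p ^ k) = p ^ k := by
  induction k with
  | zero => simp
  | succ k ih =>
    have hdeg_pow : (p ^ k).natDegree ≤ N * k :=
      (natDegree_pow_le_of_le k hdeg).trans_eq (mul_comm _ _)
    rw [pow_succ, Nat.mul_succ, reflect_mul _ _ hdeg_pow hdeg, ih, hp]

end Reflect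

theorem coeff_mul_one_sub_X_sq_of_reflect_eq {R : Type*} [Ring R] {q : R[X]} {n : ℕ}
    (hq : reflect (2 * n) q = q) (hdeg : q.natDegree ≤ 2 * n) :
    (q * (1 - X ^ 2)).coeff n = q.coeff n - q.coeff (n + 2) := by
  rw [mul_one_sub, coeff_sub, ← X_pow_mul, coeff_X_pow_mul_of_reflect_eq hq hdeg (by omega)]
  congr 2; omega

section SymmQuadratic

variable {R : Type*} [CommSemiring R] (a b : R)

noncomputable def symmQuadratic : R[X] := C a + C b * X + C a * X ^ 2

theorem natDegree_symmQuadratic_le : (symmQuadratic a b).natDegree ≤ 2 := by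
  unfold symmQuadratic; compute_degree

theorem reflect_symmQuadratic : reflect 2 (symmQuadratic a b) = symmQuadratic a b := by
  have h : symmQuadratic a b = C a * X ^ 0 + C b * X ^ 1 + C a * X ^ 2 := by
    simp [symmQuadratic]
  rw [h, reflect_add, reflect_add, reflect_C_mul_X_pow, reflect_C_mul_X_pow,
    reflect_C_mul_X_pow]
  rw [revAt_le (by norm_num), revAt_le (by norm_num), revAt_le le_rfl]
  ring

theorem reflect_symmQuadratic_pow (n : ℕ) :
    reflect (2 * n) (symmQuadratic a b ^ n) = symmQuadratic a b ^ n :=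
  reflect_pow_of_reflect_eq (reflect_symmQuadratic a b) (natDegree_symmQuadratic_le a b) n

theorem natDegree_symmQuadratic_pow_le (n : ℕ) :
    (symmQuadratic a b ^ n).natDegree ≤ 2 * n :=
  (natDegree_pow_le_of_le n (natDegree_symmQuadratic_le a b)).trans_eq (mul_comm _ _)

theorem coeff_symmQuadratic_mul (q : R[X]) (k : ℕ) :
    (symmQuadratic a b * q).coeff (k + 2) =
      a * q.coeff (k + 2) + b * q.coeff (k + 1) + a * q.coeff k := by
  simp only [symmQuadratic, add_mul, coeff_add, mul_assoc, coeff_C_mul, coeff_X_mul,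
    coeff_X_pow_mul]

theorem coeff_symmQuadratic_mul_of_reflect_eq {q : R[X]} {n : ℕ}
    (hq : reflect (2 * n) q = q) (hdeg : q.natDegree ≤ 2 * n) :
    (symmQuadratic a b * q).coeff (n + 1) = 2 * a * q.coeff (n + 1) + b * q.coeff n := by
  have hX2 : (X ^ 2 * q).coeff (n + 1) = q.coeff (n + 1) := by
    rw [coeff_X_pow_mul_of_reflect_eq hq hdeg (by omega)]; congr 1; omega
  simp only [symmQuadratic, add_mul, coeff_add, mul_assoc, coeff_C_mul, coeff_X_mul, hX2]
  ring

theorem coeff_symmQuadratic_pow_succ_self (n : ℕ) :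
    (symmQuadratic a b ^ (n + 1)).coeff (n + 1) =
      2 * a * (symmQuadratic a b ^ n).coeff (n + 1) + b * (symmQuadratic a b ^ n).coeff n := by
  rw [pow_succ']
  exact coeff_symmQuadratic_mul_of_reflect_eq a b (reflect_symmQuadratic_pow a b n)
    (natDegree_symmQuadratic_pow_le a b n)

end SymmQuadratic

end Polynomial

theorem genTrinomial_eq_coeff (a b : ℤ) (n : ℕ) :
    genTrinomial a b n = (symmQuadratic a b ^ n).coeff n := rfl

theorem genMotzkin_eq_coeff (a b : ℤ) (n : ℕ) :
    genMotzkin a b n = (symmQuadratic a b ^ n * (1 - X ^ 2)).coeff n := rfl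

theorem stmt0 (a b : ℤ) (n : ℕ) :
    2 * a ^ 2 * genMotzkin a b n =
      (4 * a ^ 2 - b ^ 2) * genTrinomial a b n + 2 * b * genTrinomial a b (n + 1)
        - genTrinomial a b (n + 2) := by
  simp only [genMotzkin_eq_coeff, genTrinomial_eq_coeff]
  rw [coeff_mul_one_sub_X_sq_of_reflect_eq (reflect_symmQuadratic_pow a b n)
      (natDegree_symmQuadratic_pow_le a b n),
    coeff_symmQuadratic_pow_succ_self a b (n + 1), coeff_symmQuadratic_pow_succ_self a b n,
    pow_succ' (symmQuadratic a b) n, coeff_symmQuadratic_mul]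
  ring
end

section
/- For all integers a, b and every natural number n ≥ 1, the coefficient of X^{n−1} in the polynomial ((a + bX + aX^2)^n : ℤ[X]) equals a·n·M^{a,b}_{n−1}. (Equivalently, the constant term of X·(aX^{-1} + b + aX)^n equals a·n·M^{a,b}_{n−1}.) -/
open Polynomial

/-!
The Euler operator `q ↦ X q'` multiplies the coefficient of `X^k` by `k`. For the palindromic
trinomial `P = a + bX + aX^2` one has `X P' - P = -a (1 - X^2)`, hence
`X (P^(n+1))' - (n+1) P^(n+1) = -(n+1) a P^n (1 - X^2)`; reading off the coefficient of `X^n`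
gives `-[X^n] P^(n+1)` on the left and `-(n+1) a M^{a,b}_n` on the right.
-/

namespace Polynomial

variable {R : Type*} [CommRing R]

theorem coeff_X_mul_derivative (q : R[X]) (k : ℕ) :
    (X * derivative q).coeff k = k * q.coeff k := by
  cases k with
  | zero => simp
  | succ k =>
    rw [coeff_X_mul, coeff_derivative]
    push_cast
    ring

theorem X_mul_derivative_pow_succ_sub (p : R[X]) (n : ℕ) :
    X * derivative (p ^ (n + 1)) - C ((n : R) + 1) * p ^ (n + 1) =
      C ((n : R) + 1) * p ^ n * (X * derivative p - p) := by
  rw [derivative_pow_succ, map_add, map_one, map_natCast]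
  ring

theorem X_mul_derivative_palindromicTrinomial_sub (a b : R) :
    X * derivative (C a + C b * X + C a * X ^ 2) - (C a + C b * X + C a * X ^ 2) =
      -(C a * (1 - X ^ 2)) := by
  simp only [derivative_add, derivative_C, derivative_C_mul_X, derivative_C_mul_X_pow, C_mul,
    Nat.cast_ofNat, map_ofNat]
  ring

theorem coeff_palindromicTrinomial_pow_succ (a b : R) (n : ℕ) :
    ((C a + C b * X + C a * X ^ 2) ^ (n + 1)).coeff n =
      a * ((n : R) + 1) * (((C a + C b * X + C a * X ^ 2) ^ n) * (1 - X ^ 2)).coeff n := by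
  set P : R[X] := C a + C b * X + C a * X ^ 2
  have hP : X * derivative P - P = -(C a * (1 - X ^ 2)) :=
    X_mul_derivative_palindromicTrinomial_sub a b
  have euler : X * derivative (P ^ (n + 1)) - C ((n : R) + 1) * P ^ (n + 1) =
      C (-(a * ((n : R) + 1))) * (P ^ n * (1 - X ^ 2)) := by
    rw [X_mul_derivative_pow_succ_sub, hP, map_neg, map_mul]
    ring
  replace euler := congrArg (coeff · n) euler
  simp only [coeff_sub, coeff_X_mul_derivative, coeff_C_mul] at euler
  linear_combination -euler

end Polynomial

theorem stmt1 (a b : ℤ) (n : ℕ) (hn : 1 ≤ n) :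
    ((C a + C b * X + C a * X ^ 2) ^ n).coeff (n - 1) = a * (n : ℤ) * genMotzkin a b (n - 1) := by
  obtain ⟨m, rfl⟩ := Nat.exists_eq_add_of_le' hn
  rw [Nat.add_sub_cancel, genMotzkin, coeff_palindromicTrinomial_pow_succ]
  push_cast
  ring
end

section
/- Let p > 2 be a prime and a, b integers. Then for every natural number k with 0 ≤ k ≤ (p−1)/2, one has T^{a,b}_{p−1−k} ≡ (b² − 4a²)^{(p−1)/2 − k} · T^{a,b}_k (mod p). (In particular, for a = b = 1: T_{p−1−k} ≡ (−3)^{(p−1)/2 − k} · T_k (mod p).) -/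
open Polynomial Finset

section TrinAux

variable {R : Type*} [CommRing R]

noncomputable def fpoly (a b : R) : R[X] := C a + C b * X + C a * X ^ 2

noncomputable def tri (a b : R) (n : ℕ) : R := ((fpoly a b) ^ n).coeff n

lemma tri_zero (a b : R) : tri a b 0 = 1 := by simp [tri]

lemma tri_one (a b : R) : tri a b 1 = b := by
  simp [tri, fpoly, coeff_add, coeff_C, coeff_C_mul, coeff_X, coeff_X_pow]

lemma key (a b : R) (n : ℕ) :
    C (a^2) * (X * derivative ((X^2 - 1) * (fpoly a b) ^ (n+1))
      - (C ((n:R)+2)) * ((X^2 - 1) * (fpoly a b) ^ (n+1)))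
    = C a * ((fpoly a b)^(n+2) - C b * X * (fpoly a b)^(n+1))
      + C ((n:R)+1) * C a * ((fpoly a b)^(n+2) - 2 * (C b * X * (fpoly a b)^(n+1))
          + C (b^2 - 4*a^2) * X^2 * (fpoly a b)^n) := by
  have hd : derivative (fpoly a b) = C b + 2 * C a * X := by
    simp [fpoly, map_ofNat, Nat.cast_ofNat]
    ring
  rw [derivative_mul, derivative_pow, hd]
  simp only [derivative_sub, derivative_one, derivative_X_pow]
  have h1 : (fpoly a b) ^ (n+1) = (fpoly a b)^n * (fpoly a b) := by ring
  have h2 : (fpoly a b) ^ (n+2) = (fpoly a b)^n * (fpoly a b) * (fpoly a b) := by ring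
  rw [h1, h2]
  simp only [fpoly, Nat.add_sub_cancel, Nat.cast_add, Nat.cast_one, Nat.cast_ofNat, map_add,
    map_sub, map_mul, map_pow, map_one, map_ofNat, C_1]
  ring

lemma rec_mul (a b : R) (n : ℕ) :
    a * (((n:R)+2) * tri a b (n+2) - (2*(n:R)+3) * b * tri a b (n+1)
      + ((n:R)+1) * (b^2-4*a^2) * tri a b n) = 0 := by
  have h := congrArg (fun P : R[X] => P.coeff (n+2)) (key a b n)
  set f := fpoly a b with hf
  have e1 : (X * derivative ((X^2 - 1) * f ^ (n+1))).coeff (n+2)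
      = ((X^2 - 1) * f ^ (n+1)).coeff (n+2) * ((n:R)+2) := by
    rw [show n+2 = (n+1)+1 from rfl, coeff_X_mul, coeff_derivative]
    push_cast; ring
  have e2 : (C b * X * f^(n+1)).coeff (n+2) = b * tri a b (n+1) := by
    rw [mul_assoc, coeff_C_mul, show n+2 = (n+1)+1 from rfl, coeff_X_mul]; rfl
  have e3 : (C (b^2-4*a^2) * X^2 * f^n).coeff (n+2) = (b^2-4*a^2) * tri a b n := by
    rw [mul_assoc, coeff_C_mul, show n+2 = n+2 from rfl, coeff_X_pow_mul]; rfl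
  have e4 : (f ^ (n+2)).coeff (n+2) = tri a b (n+2) := rfl
  rw [coeff_C_mul, coeff_sub, e1, coeff_C_mul, coeff_add, coeff_C_mul, coeff_sub, e4, e2,
    mul_assoc (C ((n:R)+1)), coeff_C_mul, coeff_C_mul, coeff_add, coeff_sub, e4,
    coeff_ofNat_mul, e2, e3] at h
  linear_combination -h


end TrinAux

section Fld
variable {F : Type*} [Field F]

lemma rec_field {a : F} (ha : a ≠ 0) (b : F) (n : ℕ) :
    ((n:F)+2) * tri a b (n+2) = (2*(n:F)+3) * b * tri a b (n+1)
      - ((n:F)+1) * (b^2-4*a^2) * tri a b n := by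
  have h := rec_mul a b n
  rcases mul_eq_zero.mp h with h' | h'
  · exact absurd h' ha
  · linear_combination h'

lemma tri_a_zero (b : F) (n : ℕ) : tri 0 b n = b^n := by
  have hf : fpoly (0:F) b = C b * X := by rw [fpoly]; simp
  rw [tri, hf, mul_pow, ← C_pow, coeff_C_mul, coeff_X_pow_self, mul_one]

end Fld

section Zdeg
variable {p : ℕ} [Fact p.Prime]

lemma tri_delta_zero (hp2 : 2 < p) {α β : ZMod p}
    (hδ : β^2 - 4*α^2 = 0) (n : ℕ) (hn1 : n < p) (hn2 : p ≤ 2*n) :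
    tri α β n = 0 := by
  have hfac : (β - 2*α) * (β + 2*α) = 0 := by linear_combination hδ
  have hch : (p : ℕ) ∣ (n+n).choose n := Nat.Prime.dvd_choose_add Fact.out hn1 hn1 (by omega)
  have hch0 : (((n+n).choose n : ℕ) : ZMod p) = 0 := by
    rw [ZMod.natCast_eq_zero_iff]; exact hch
  rcases mul_eq_zero.mp hfac with h | h
  · have hβ : β = 2*α := by linear_combination h
    have hf : fpoly α β = C α * (1 + X)^2 := by
      rw [fpoly, hβ]; simp only [map_mul, map_ofNat]; ring
    rw [tri, hf, mul_pow, ← C_pow, ← pow_mul, coeff_C_mul, coeff_one_add_X_pow]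
    rw [show 2*n = n+n by ring, hch0, mul_zero]
  · have hβ : β = -(2*α) := by linear_combination h
    have hf : fpoly α β = C α * (X - 1)^2 := by
      rw [fpoly, hβ]; simp only [map_neg, map_mul, map_ofNat]; ring
    rw [tri, hf, mul_pow, ← C_pow, ← pow_mul, coeff_C_mul]
    have : ((X - 1 : (ZMod p)[X]))^(2*n) = (X + C (-1))^(2*n) := by rw [map_neg, C_1]; ring
    rw [this, coeff_X_add_C_pow]
    rw [show 2*n = n+n by ring, hch0]
    ring
end Zdeg

section Zp
variable {p : ℕ} [Fact p.Prime]

lemma sum_pow_A (hp2 : 2 < p) : ∑ x : ZMod p, x^(p-1) = -1 := by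
  have h1 : ∀ x : ZMod p, x^(p-1) = 1 - (if x = 0 then 1 else 0) := by
    intro x
    split_ifs with h
    · rw [h, zero_pow (by omega)]; ring
    · rw [ZMod.pow_card_sub_one_eq_one h]; ring
  rw [Finset.sum_congr rfl (fun x _ => h1 x), Finset.sum_sub_distrib,
    Finset.sum_ite_eq' univ (0 : ZMod p) (fun _ => 1), Finset.sum_const]
  simp [ZMod.card, CharP.cast_eq_zero]

lemma sum_pow_B (i : ℕ) (hi : 0 < i) :
    ∑ x : ZMod p, x^(p-1+i) = ∑ x : ZMod p, x^i := by
  apply Finset.sum_congr rfl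
  intro x _
  by_cases hx : x = 0
  · subst hx; rw [zero_pow (by omega), zero_pow (by omega)]
  · rw [pow_add, ZMod.pow_card_sub_one_eq_one hx, one_mul]

lemma sum_pow_eq (hp2 : 2 < p) (j : ℕ) (hj : j ≤ 2*(p-1)) :
    ∑ x : ZMod p, x^j = if j = p-1 ∨ j = 2*(p-1) then (-1 : ZMod p) else 0 := by
  have hcard : Fintype.card (ZMod p) = p := ZMod.card p
  rcases lt_trichotomy j (p-1) with h | h | h
  · rw [if_neg (by omega)]
    have := FiniteField.sum_pow_lt_card_sub_one (K := ZMod p) j (by omega)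
    exact this
  · rw [if_pos (Or.inl h)]
    rw [h]; exact sum_pow_A hp2
  · have hj' : j = (p-1) + (j - (p-1)) := by omega
    rw [hj', sum_pow_B _ (by omega)]
    rcases lt_trichotomy (j - (p-1)) (p-1) with h2 | h2 | h2
    · rw [if_neg (by omega)]
      exact FiniteField.sum_pow_lt_card_sub_one (K := ZMod p) _ (by omega)
    · rw [if_pos (by omega), h2]; exact sum_pow_A hp2
    · omega
end Zp

section Zp2
variable {p : ℕ} [Fact p.Prime]

lemma fpoly_quad (α β : ZMod p) : fpoly α β = C α * X^2 + C β * X + C α := by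
  rw [fpoly]; ring

lemma tri_top (hp2 : 2 < p) {α : ZMod p} (hα : α ≠ 0) (β : ZMod p) (m : ℕ) :
    ((fpoly α β)^m).coeff (2*m) = α^m := by
  have hdeg : (fpoly α β).natDegree = 2 := by
    rw [fpoly_quad]; exact natDegree_quadratic hα
  have hlc : (fpoly α β).leadingCoeff = α := by
    rw [leadingCoeff, hdeg, fpoly_quad]
    simp [coeff_add, coeff_C, coeff_C_mul, coeff_X, coeff_X_pow]
  have h1 : ((fpoly α β)^m).natDegree = 2*m := by
    rw [natDegree_pow, hdeg]; ring
  have h2 : ((fpoly α β)^m).leadingCoeff = α^m := by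
    rw [leadingCoeff_pow, hlc]
  rw [← h1, ← leadingCoeff, h2]

lemma sum_eval_pow (hp2 : 2 < p) {α : ZMod p} (hα : α ≠ 0) (β : ZMod p) :
    ∑ x : ZMod p, (eval x (fpoly α β))^(p-1) = - tri α β (p-1) - 1 := by
  set F := (fpoly α β)^(p-1) with hF
  have hdeg : F.natDegree < 2*(p-1)+1 := by
    have h1 : (fpoly α β).natDegree ≤ 2 := by rw [fpoly_quad]; exact natDegree_quadratic_le
    have h2 : F.natDegree ≤ (p-1) * (fpoly α β).natDegree := natDegree_pow_le
    have h3 : (p-1) * (fpoly α β).natDegree ≤ (p-1) * 2 := Nat.mul_le_mul_left _ h1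
    omega
  have e1 : ∑ x : ZMod p, (eval x (fpoly α β))^(p-1) = ∑ x : ZMod p, eval x F := by
    simp [hF, eval_pow]
  rw [e1]
  have e2 : ∀ x : ZMod p, eval x F = ∑ i ∈ range (2*(p-1)+1), F.coeff i * x^i := by
    intro x; exact eval_eq_sum_range' hdeg x
  rw [Finset.sum_congr rfl (fun x _ => e2 x), Finset.sum_comm]
  have e3 : ∀ i ∈ range (2*(p-1)+1), ∑ x : ZMod p, F.coeff i * x^i
      = (if i = p-1 then -F.coeff i else 0) + (if i = 2*(p-1) then -F.coeff i else 0) := by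
    intro i hi
    rw [← Finset.mul_sum, sum_pow_eq hp2 i (by simpa using Nat.lt_succ_iff.mp (mem_range.mp hi))]
    by_cases h1 : i = p-1
    · rw [if_pos (Or.inl h1), if_pos h1, if_neg (by omega)]; ring
    · by_cases h2 : i = 2*(p-1)
      · rw [if_pos (Or.inr h2), if_neg h1, if_pos h2]; ring
      · rw [if_neg (by tauto), if_neg h1, if_neg h2]; ring
  rw [Finset.sum_congr rfl e3, Finset.sum_add_distrib,
    Finset.sum_ite_eq' (range (2*(p-1)+1)) (p-1) (fun i => -F.coeff i),
    Finset.sum_ite_eq' (range (2*(p-1)+1)) (2*(p-1)) (fun i => -F.coeff i),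
    if_pos (by simp only [mem_range]; omega), if_pos (by simp only [mem_range]; omega)]
  have htop : F.coeff (2*(p-1)) = 1 := by
    rw [hF, tri_top hp2 hα, ZMod.pow_card_sub_one_eq_one hα]
  have hmid : F.coeff (p-1) = tri α β (p-1) := rfl
  rw [htop, hmid]; ring

lemma sum_eval_pow_count (hp2 : 2 < p) (α β : ZMod p) :
    ∑ x : ZMod p, (eval x (fpoly α β))^(p-1)
      = - (((univ.filter (fun x : ZMod p => eval x (fpoly α β) = 0)).card : ZMod p)) := by
  have h1 : ∀ x : ZMod p, (eval x (fpoly α β))^(p-1)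
      = 1 - (if eval x (fpoly α β) = 0 then 1 else 0) := by
    intro x
    split_ifs with h
    · rw [h, zero_pow (by omega)]; ring
    · rw [ZMod.pow_card_sub_one_eq_one h]; ring
  rw [Finset.sum_congr rfl (fun x _ => h1 x), Finset.sum_sub_distrib, Finset.sum_const,
    Finset.sum_boole]
  simp [ZMod.card, CharP.cast_eq_zero]

end Zp2

section Zp3
variable {p : ℕ} [Fact p.Prime]

lemma tri_card (hp2 : 2 < p) {α : ZMod p} (hα : α ≠ 0) (β : ZMod p) :
    tri α β (p-1)
      = ((univ.filter (fun x : ZMod p => eval x (fpoly α β) = 0)).card : ZMod p) - 1 := by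
  have h := (sum_eval_pow hp2 hα β).symm.trans (sum_eval_pow_count hp2 α β)
  linear_combination -h

lemma heval (α β : ZMod p) (x : ZMod p) :
    eval x (fpoly α β) = α * (x * x) + β * x + α := by
  simp [fpoly]; ring

lemma ptwo_ne_zero (hp2 : 2 < p) : (2 : ZMod p) ≠ 0 := by
  intro h
  have h2 : ((2:ℕ) : ZMod p) = 0 := by exact_mod_cast h
  rw [ZMod.natCast_eq_zero_iff] at h2
  have := Nat.le_of_dvd (by norm_num) h2
  omega

lemma tri_base (hp2 : 2 < p) {α : ZMod p} (hα : α ≠ 0) (β : ZMod p) :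
    tri α β (p-1) = (β^2 - 4*α^2)^(p/2) := by
  haveI : NeZero (2 : ZMod p) := ⟨ptwo_ne_zero hp2⟩
  set δ := β^2 - 4*α^2 with hδ
  have hdisc : discrim α β α = δ := by rw [discrim, hδ]; ring
  rw [tri_card hp2 hα β]
  by_cases hsq : ∃ s : ZMod p, δ = s * s
  · obtain ⟨s, hs⟩ := hsq
    by_cases hs0 : δ = 0
    · -- one root
      have hfilter : (univ.filter (fun x : ZMod p => eval x (fpoly α β) = 0))
          = {-β / (2*α)} := by
        ext x
        simp only [mem_filter, mem_univ, true_and, mem_singleton, heval α β x]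
        rw [quadratic_eq_zero_iff_of_discrim_eq_zero hα (hdisc.trans hs0) x]
      rw [hfilter, hs0, zero_pow (by omega)]
      simp
    · -- two roots
      have hsne : s ≠ 0 := fun h => hs0 (by rw [hs, h, mul_zero])
      have hfilter : (univ.filter (fun x : ZMod p => eval x (fpoly α β) = 0))
          = {(-β + s) / (2*α), (-β - s) / (2*α)} := by
        ext x
        simp only [mem_filter, mem_univ, true_and, mem_insert, mem_singleton, heval α β x]
        rw [quadratic_eq_zero_iff hα (hdisc.trans hs) x]
      have h2α : (2*α : ZMod p) ≠ 0 := mul_ne_zero (ptwo_ne_zero hp2) hα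
      have hne : (-β + s) / (2*α) ≠ (-β - s) / (2*α) := by
        intro h
        have h' : (-β + s) = (-β - s) := by
          field_simp at h
          exact h
        have hss : (2 : ZMod p) * s = 0 := by linear_combination h'
        rcases mul_eq_zero.mp hss with h'' | h''
        · exact ptwo_ne_zero hp2 h''
        · exact hsne h''
      rw [hfilter, Finset.card_insert_of_notMem (by simpa using hne), Finset.card_singleton]
      have hsq' : IsSquare δ := ⟨s, hs⟩
      rw [(ZMod.euler_criterion p hs0).mp hsq']
      norm_num
  · -- no roots
    have hfilter : (univ.filter (fun x : ZMod p => eval x (fpoly α β) = 0)) = ∅ := by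
      rw [Finset.filter_eq_empty_iff]
      intro x _
      rw [heval α β x]
      exact quadratic_ne_zero_of_discrim_ne_sq
        (fun s h => hsq ⟨s, by rw [← hdisc, h]; ring⟩) x
    have hs0 : δ ≠ 0 := fun h => hsq ⟨0, by rw [h, mul_zero]⟩
    have ht : δ^(p/2) * δ^(p/2) = 1 := by
      rw [← pow_add]
      have : p/2 + p/2 = p - 1 := by
        have := (Fact.out : p.Prime).eq_two_or_odd'
        rcases this with h | h
        · omega
        · obtain ⟨m, hm⟩ := h; omega
      rw [this, ZMod.pow_card_sub_one_eq_one hs0]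
    rcases mul_self_eq_one_iff.mp ht with h1 | h1
    · exfalso
      obtain ⟨s, hs⟩ := (ZMod.euler_criterion p hs0).mpr h1
      exact hsq ⟨s, hs⟩
    · rw [hfilter, h1]; simp
end Zp3


section Main
variable {p : ℕ} [Fact p.Prime]

lemma cast_nat_neg {m c : ℕ} (h : m + c = p) : ((m : ℕ) : ZMod p) = -((c:ℕ) : ZMod p) := by
  have h2 : ((m : ℕ) : ZMod p) + ((c:ℕ) : ZMod p) = ((p:ℕ) : ZMod p) := by
    rw [← Nat.cast_add, h]
  rw [ZMod.natCast_self] at h2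
  linear_combination h2

lemma cast_tri (a b : ℤ) (n : ℕ) :
    ((genTrinomial a b n : ℤ) : ZMod p) = tri (a : ZMod p) (b : ZMod p) n := by
  rw [genTrinomial, tri, fpoly]
  have h := Polynomial.coeff_map (f := Int.castRingHom (ZMod p))
    (p := ((C a + C b * X + C a * X ^ 2 : ℤ[X]) ^ n)) (n := n)
  simp only [Int.coe_castRingHom] at h
  rw [← h]
  congr 1
  simp [Polynomial.map_pow, Polynomial.map_add, Polynomial.map_mul, Polynomial.map_C,
    Polynomial.map_X]

lemma claim (hp2 : 2 < p) {α : ZMod p} (hα : α ≠ 0) (β : ZMod p) {q : ℕ} (hq : p = 2*q+1) :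
    ∀ j, j ≤ q → (β^2-4*α^2)^j * tri α β (2*q - j) = (β^2-4*α^2)^q * tri α β j := by
  set δ := β^2-4*α^2 with hδ
  intro j
  induction j using Nat.strong_induction_on with
  | _ j ih =>
    obtain _ | j := j
    · intro _
      rw [pow_zero, one_mul, Nat.sub_zero, tri_zero, mul_one,
        show 2*q = p-1 by omega, tri_base hp2 hα β, show p/2 = q by omega]
    · obtain _ | j := j
      · intro h1
        rw [pow_one, tri_one]
        have hA := rec_field hα β (p-2)
        rw [show p-2+2 = p from by omega, show p-2+1 = p-1 from by omega,
          cast_nat_neg (show (p-2) + 2 = p by omega)] at hA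
        push_cast at hA
        have hbase := tri_base hp2 hα β
        rw [show p/2 = q from by omega] at hbase
        rw [show 2*q - 1 = p-2 from by omega]
        linear_combination -hA + β * hbase
      · intro hjq
        have hA := rec_field hα β (2*q - j - 2)
        rw [show 2*q - j - 2 + 2 = 2*q - j from by omega,
          show 2*q - j - 2 + 1 = 2*q - j - 1 from by omega,
          cast_nat_neg (show (2*q - j - 2) + (j + 3) = p by omega)] at hA
        push_cast at hA
        have hB := rec_field hα β j
        have hI1 := ih j (by omega) (by omega)
        have hI2 := ih (j+1) (by omega) (by omega)
        rw [show 2*q - (j+1) = 2*q - j - 1 from by omega] at hI2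
        rw [show 2*q - (j+2) = 2*q - j - 2 from by omega]
        have hj2 : ((j:ZMod p)+2) ≠ 0 := by
          have : (((j+2 : ℕ)) : ZMod p) ≠ 0 := by
            rw [Ne, ZMod.natCast_eq_zero_iff]
            intro hdvd
            have := Nat.le_of_dvd (by omega) hdvd
            omega
          push_cast at this
          exact this
        apply mul_left_cancel₀ hj2
        linear_combination (-(δ^(j+1))) * hA + (2*(j:ZMod p)+3) * β * hI2
          - ((j:ZMod p)+1) * δ * hI1 - δ^q * hB
end Main

theorem stmt4 (p : ℕ) (hp : p.Prime) (hp2 : 2 < p) (a b : ℤ) (k : ℕ) (hk : k ≤ (p - 1) / 2) :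
    genTrinomial a b (p - 1 - k) ≡
      (b ^ 2 - 4 * a ^ 2) ^ ((p - 1) / 2 - k) * genTrinomial a b k [ZMOD (p : ℤ)] := by
  haveI : Fact p.Prime := ⟨hp⟩
  have := (ZMod.intCast_eq_intCast_iff (genTrinomial a b (p - 1 - k))
    ((b ^ 2 - 4 * a ^ 2) ^ ((p - 1) / 2 - k) * genTrinomial a b k) p).mp
  apply this
  push_cast
  rw [cast_tri, cast_tri]
  set α := (a : ZMod p) with hαdef
  set β := (b : ZMod p) with hβdef
  obtain ⟨q, hq⟩ := hp.odd_of_ne_two (by omega)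
  have hq1 : 1 ≤ q := by omega
  rw [show (p-1)/2 - k = q - k from by omega, show p - 1 - k = 2*q - k from by omega]
  have hkq : k ≤ q := by omega
  by_cases hα : α = 0
  · rw [hα, tri_a_zero, tri_a_zero,
      show (2*q - k) = 2*(q-k) + k from by omega, pow_add, pow_mul]
    ring
  · by_cases hδ0 : β^2 - 4*α^2 = 0
    · by_cases hkq' : k = q
      · rw [hkq', show 2*q - q = q from by omega, show q - q = 0 from by omega,
          pow_zero, one_mul]
      · rw [tri_delta_zero hp2 hδ0 (2*q - k) (by omega) (by omega),
          hδ0, zero_pow (show q - k ≠ 0 by omega), zero_mul]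
    · have hclaim := claim hp2 hα β hq k hkq
      apply mul_left_cancel₀ (pow_ne_zero k hδ0)
      rw [hclaim, ← mul_assoc, ← pow_add, show k + (q - k) = q from by omega]
end

section
/- Let p > 2 be a prime and a, b integers. Then T^{a,b}_{p−1} ≡ (b² − 4a²)^{(p−1)/2} (mod p); consequently, if p does not divide b² − 4a², then (T^{a,b}_{p−1})² ≡ 1 (mod p). -/
open Polynomial

/-!
Expanding `(a(1 + X²) + bX)^n` gives `T^{a,b}_n = ∑ₘ C(n, 2m) C(2m, m) a^{2m} b^{n-2m}`.
For `n = p - 1 = 2h` we have, modulo `p`, `C(p - 1, 2m) ≡ 1` and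
`C(2m, m) = (-4)^m C(-1/2, m) ≡ (-4)^m C(h, m)`, so the sum collapses to `(b² - 4a²)^h` by the
binomial theorem; Fermat's little theorem then gives the square.
-/

open Finset

theorem Finset.sum_range_succ_eq_sum_range_two_mul {M : Type*} [AddCommMonoid M] (F : ℕ → M)
    (hF : ∀ k, ¬ 2 ∣ k → F k = 0) (n : ℕ) :
    ∑ k ∈ range (n + 1), F k = ∑ m ∈ range (n / 2 + 1), F (2 * m) := by
  rw [← sum_image (g := (2 * ·)) (by simp)]
  refine (sum_subset (fun k hk => ?_) (fun k hk hk' => hF k fun ⟨m, hm⟩ => hk' ?_)).symm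
  · obtain ⟨m, hm, rfl⟩ := mem_image.mp hk
    simp only [mem_range] at hm ⊢
    omega
  · simp only [mem_range] at hk
    exact mem_image.mpr ⟨m, mem_range.mpr (by omega), hm.symm⟩

theorem coeff_one_add_X_sq_pow_self {R : Type*} [CommSemiring R] (k : ℕ) :
    ((1 + X ^ 2 : R[X]) ^ k).coeff k = if 2 ∣ k then (k.choose (k / 2) : R) else 0 := by
  have : (1 + X ^ 2 : R[X]) = expand R 2 (1 + X) := by simp
  rw [this, ← map_pow, coeff_expand two_pos, coeff_one_add_X_pow]

theorem coeff_quadratic_pow_self {R : Type*} [CommSemiring R] (a b : R) (n : ℕ) :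
    ((C a + C b * X + C a * X ^ 2) ^ n).coeff n = ∑ m ∈ range (n / 2 + 1),
      n.choose (2 * m) * Nat.centralBinom m * a ^ (2 * m) * b ^ (n - 2 * m) := by
  have hsplit : (C a + C b * X + C a * X ^ 2 : R[X]) = C a * (1 + X ^ 2) + X * C b := by ring
  have hterm (k : ℕ) (hk : k ≤ n) :
      ((C a * (1 + X ^ 2)) ^ k * (X * C b) ^ (n - k) * (n.choose k : R[X])).coeff n =
        n.choose k * (if 2 ∣ k then (k.choose (k / 2) : R) else 0) * a ^ k * b ^ (n - k) := by
    rw [show (C a * (1 + X ^ 2)) ^ k * (X * C b) ^ (n - k) * (n.choose k : R[X]) =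
        C (n.choose k * a ^ k * b ^ (n - k)) * ((1 + X ^ 2) ^ k * X ^ (n - k)) by
      simp only [← C_eq_natCast, C_mul, C_pow, mul_pow]; ring]
    rw [coeff_C_mul, coeff_mul_X_pow', if_pos (Nat.sub_le n k), Nat.sub_sub_self hk,
      coeff_one_add_X_sq_pow_self]
    ring
  rw [hsplit, add_pow, finsetSum_coeff,
    sum_congr rfl fun k hk => hterm k (Nat.lt_succ_iff.mp (mem_range.mp hk)),
    sum_range_succ_eq_sum_range_two_mul _ (fun k hk => by simp [hk]) n]
  refine sum_congr rfl fun m _ => ?_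
  rw [if_pos (dvd_mul_right 2 m), Nat.mul_div_cancel_left m two_pos,
    Nat.centralBinom_eq_two_mul_choose]

namespace ZMod

variable {p : ℕ} [Fact p.Prime]

theorem natCast_choose_pred_self {k : ℕ} (hk : k < p) :
    ((p - 1).choose k : ZMod p) = (-1) ^ k := by
  induction k with
  | zero => simp
  | succ k ih =>
    have hpascal : p.choose (k + 1) = (p - 1).choose k + (p - 1).choose (k + 1) := by
      rw [← Nat.choose_succ_succ', Nat.sub_one_add_one (Fact.out : p.Prime).ne_zero]
    have hzero : (p.choose (k + 1) : ZMod p) = 0 :=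
      (natCast_eq_zero_iff _ _).mpr ((Fact.out : p.Prime).dvd_choose_self k.succ_ne_zero hk)
    rw [hpascal, Nat.cast_add, ih (by omega)] at hzero
    rw [pow_succ]
    linear_combination hzero

theorem natCast_centralBinom {h m : ℕ} (hp : 2 * h + 1 = p) (hm : m ≤ h) :
    (m.centralBinom : ZMod p) = (-4) ^ m * h.choose m := by
  induction m with
  | zero => simp
  | succ m ih =>
    have hh : ((2 * h + 1 : ℕ) : ZMod p) = 0 := by rw [hp, natCast_self]
    have hrec := congrArg (Nat.cast : ℕ → ZMod p) (Nat.succ_mul_centralBinom_succ m)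
    have hchoose := congrArg (Nat.cast : ℕ → ZMod p) (Nat.choose_succ_right_eq h m)
    push_cast [Nat.cast_sub (by omega : m ≤ h)] at hh hrec hchoose
    have hunit : (m + 1 : ZMod p) ≠ 0 := by
      exact_mod_cast (natCast_eq_zero_iff _ _).not.mpr
        (Nat.not_dvd_of_pos_of_lt m.succ_pos (by omega))
    -- both sides satisfy `(m + 1) xₘ₊₁ = 2 (2m + 1) xₘ`, as `-4 (h - m) = 2 (2m + 1)` when `2h = -1`
    apply mul_left_cancel₀ hunit
    linear_combination hrec + 2 * (2 * m + 1) * ih (by omega) - (-4) ^ (m + 1) * hchoose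
      + 2 * (-4) ^ m * h.choose m * hh

end ZMod

theorem genTrinomial_pred_prime_cast {p : ℕ} [Fact p.Prime] (hp2 : p ≠ 2) (a b : ℤ) :
    (genTrinomial a b (p - 1) : ZMod p) =
      ((b : ZMod p) ^ 2 - 4 * (a : ZMod p) ^ 2) ^ ((p - 1) / 2) := by
  obtain ⟨h, hh⟩ : ∃ h, 2 * h + 1 = p := by
    obtain ⟨h, hh⟩ := (Fact.out : p.Prime).odd_of_ne_two hp2
    exact ⟨h, hh.symm⟩
  have hp1 : p - 1 = 2 * h := by omega
  rw [genTrinomial, coeff_quadratic_pow_self, hp1, Nat.mul_div_cancel_left h two_pos,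
    ← hp1, sub_eq_neg_add, add_pow]
  push_cast
  refine sum_congr rfl fun m hm => ?_
  have hmh : m ≤ h := Nat.lt_succ_iff.mp (mem_range.mp hm)
  rw [ZMod.natCast_choose_pred_self (by omega), ZMod.natCast_centralBinom hh hmh, hp1,
    ← Nat.mul_sub, pow_mul, pow_mul, pow_mul, neg_one_sq, one_pow]
  ring

theorem stmt5 (p : ℕ) (hp : p.Prime) (hp2 : 2 < p) (a b : ℤ) :
    genTrinomial a b (p - 1) ≡ (b ^ 2 - 4 * a ^ 2) ^ ((p - 1) / 2) [ZMOD (p : ℤ)] ∧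
      (¬ (p : ℤ) ∣ (b ^ 2 - 4 * a ^ 2) →
        (genTrinomial a b (p - 1)) ^ 2 ≡ 1 [ZMOD (p : ℤ)]) := by
  have : Fact p.Prime := ⟨hp⟩
  have hcast := genTrinomial_pred_prime_cast hp2.ne' a b
  refine ⟨?_, fun hndvd => ?_⟩
  · rw [← ZMod.intCast_eq_intCast_iff]
    push_cast
    exact hcast
  · have hD : (b : ZMod p) ^ 2 - 4 * (a : ZMod p) ^ 2 ≠ 0 := by
      rw [← (ZMod.intCast_zmod_eq_zero_iff_dvd _ p).not] at hndvd
      push_cast at hndvd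
      exact hndvd
    rw [← ZMod.intCast_eq_intCast_iff]
    push_cast
    rw [hcast, ← pow_mul, Nat.div_mul_cancel (hp.even_sub_one hp2.ne').two_dvd]
    exact ZMod.pow_card_sub_one_eq_one hD
end

section
/- Let p > 3 be a prime and a, b integers. Then for every natural number k with 0 ≤ k ≤ (p−3)/2, one has M^{a,b}_{p−3−k} ≡ (b² − 4a²)^{(p−3)/2 − k} · M^{a,b}_k (mod p). (In particular, for a = b = 1: M_{p−3−k} ≡ (−3)^{(p−3)/2 − k} · M_k (mod p).) -/
open Polynomial

section Aux
open Finset Nat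

lemma catrec (s : ℕ) : (s + 2) * catalan (s + 1) = 2 * (2 * s + 1) * catalan s := by
  have h1 : (s + 1 + 1) * catalan (s + 1) = Nat.centralBinom (s + 1) :=
    succ_mul_catalan_eq_centralBinom (s + 1)
  have h2 : (s + 1) * Nat.centralBinom (s + 1) = 2 * (2 * s + 1) * Nat.centralBinom s :=
    Nat.succ_mul_centralBinom_succ s
  have h3 : (s + 1) * catalan s = Nat.centralBinom s := succ_mul_catalan_eq_centralBinom s
  have key : (s + 1) * ((s + 2) * catalan (s + 1)) = (s + 1) * (2 * (2 * s + 1) * catalan s) := by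
    rw [show s + 1 + 1 = s + 2 from rfl] at h1
    rw [h1, h2, ← h3]; ring
  exact Nat.eq_of_mul_eq_mul_left (by omega) key

lemma catdiff (s : ℕ) : catalan (s + 1) + (2 * s + 2).choose s = (2 * s + 2).choose (s + 1) := by
  have h1 : (s + 1 + 1) * catalan (s + 1) = Nat.centralBinom (s + 1) :=
    succ_mul_catalan_eq_centralBinom (s + 1)
  have hcb : Nat.centralBinom (s + 1) = (2 * s + 2).choose (s + 1) := by
    have h : 2*(s+1) = 2*s+2 := by omega
    rw [Nat.centralBinom, h]
  have h2 : (2 * s + 2).choose (s + 1 + 1) * (s + 1 + 1) = (2 * s + 2).choose (s + 1) * (2 * s + 2 - (s + 1)) :=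
    Nat.choose_succ_right_eq (2 * s + 2) (s + 1)
  have hsymm : (2 * s + 2).choose s = (2 * s + 2).choose (s + 2) := by
    rw [← Nat.choose_symm (show s ≤ 2 * s + 2 by omega)]; congr 1; omega
  have h2' : (2 * s + 2).choose (s + 2) * (s + 2) = (2 * s + 2).choose (s + 1) * (s + 1) := by
    rw [show s + 2 = s + 1 + 1 from rfl, h2]; congr 1; omega
  have key : (s + 2) * (catalan (s + 1) + (2 * s + 2).choose s) = (s + 2) * ((2 * s + 2).choose (s + 1)) := by
    have e1 : (s + 2) * catalan (s + 1) = (2 * s + 2).choose (s + 1) := by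
      rw [show (s:ℕ) + 2 = s + 1 + 1 from rfl, h1, hcb]
    rw [Nat.mul_add, e1, hsymm]
    nlinarith [h2']
  exact Nat.eq_of_mul_eq_mul_left (by omega) key

lemma key2 (n s : ℕ) : (catalan (s+1) : ℤ) * (3 * n.choose (2*s+1) + ((n:ℤ)+4) * n.choose (2*s))
    = 4*((n:ℤ)+1)*(catalan s)*(n.choose (2*s)) := by
  have hc : ((s:ℤ) + 2) * catalan (s + 1) = 2 * (2 * s + 1) * catalan s := by
    exact_mod_cast congrArg (Nat.cast : ℕ → ℤ) (catrec s)
  have hch : (n.choose (2*s+1) : ℤ) * (2*s+1) = n.choose (2*s) * ((n:ℤ) - 2*s) := by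
    rcases le_or_gt (2*s) n with h | h
    · have := Nat.choose_succ_right_eq n (2*s)
      have h2 : ((n.choose (2*s+1) * (2*s+1) : ℕ) : ℤ) = ((n.choose (2*s) * (n - 2*s) : ℕ) : ℤ) := by
        exact_mod_cast congrArg (Nat.cast : ℕ → ℤ) this
      push_cast [Nat.cast_sub h] at h2
      linarith [h2]
    · rw [Nat.choose_eq_zero_of_lt h, Nat.choose_eq_zero_of_lt (by omega)]; simp
  have key : ((s:ℤ)+2) * ((catalan (s+1) : ℤ) * (3 * n.choose (2*s+1) + ((n:ℤ)+4) * n.choose (2*s)))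
      = ((s:ℤ)+2) * (4*((n:ℤ)+1)*(catalan s)*(n.choose (2*s))) := by
    calc ((s:ℤ)+2) * ((catalan (s+1) : ℤ) * (3 * n.choose (2*s+1) + ((n:ℤ)+4) * n.choose (2*s)))
        = (2 * (2 * s + 1) * catalan s) * (3 * n.choose (2*s+1) + ((n:ℤ)+4) * n.choose (2*s)) := by
          rw [← mul_assoc, hc]
      _ = 6 * catalan s * ((n.choose (2*s+1) : ℤ) * (2*s+1)) + 2*((n:ℤ)+4)*(2*s+1)*catalan s * n.choose (2*s) := by ring
      _ = ((s:ℤ)+2) * (4*((n:ℤ)+1)*(catalan s)*(n.choose (2*s))) := by rw [hch]; ring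
  exact mul_left_cancel₀ (by positivity) key

lemma key_s6 (n s : ℕ) :
    ((n:ℤ)+4) * ((n+2).choose (2*s+2)) * catalan (s+1) + ((n:ℤ)+1) * (n.choose (2*s+2)) * catalan (s+1)
    = (2*(n:ℤ)+5) * ((n+1).choose (2*s+2)) * catalan (s+1) + 4*((n:ℤ)+1) * (n.choose (2*s)) * catalan s := by
  have p1 : ((n+2).choose (2*s+2) : ℤ) = n.choose (2*s) + 2 * n.choose (2*s+1) + n.choose (2*s+2) := by
    have : (n+2).choose (2*s+2) = (n.choose (2*s) + n.choose (2*s+1)) + (n.choose (2*s+1) + n.choose (2*s+2)) := by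
      rw [show n+2 = n+1+1 from rfl, Nat.choose_succ_succ (n+1) (2*s+1),
        show 2*s+2 = 2*s+1+1 from rfl, Nat.choose_succ_succ n (2*s), Nat.choose_succ_succ n (2*s+1)]
    push_cast [this]; ring
  have p2 : ((n+1).choose (2*s+2) : ℤ) = n.choose (2*s+1) + n.choose (2*s+2) := by
    exact_mod_cast congrArg (Nat.cast : ℕ → ℤ) (Nat.choose_succ_succ n (2*s+1))
  rw [p1, p2]
  linear_combination key2 n s

lemma coeff_pow_one_add_sq (j r : ℕ) :
    ((1 + X^2 : ℤ[X])^j).coeff r = if 2 ∣ r then (j.choose (r/2) : ℤ) else 0 := by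
  have hexp : ((1 + X^2 : ℤ[X]))^j = ∑ k ∈ range (j+1), C ((j.choose k : ℤ)) * X^(2*k) := by
    rw [show (1 + X^2 : ℤ[X]) = X^2 + 1 by ring, add_pow]
    apply Finset.sum_congr rfl
    intro k hk
    rw [one_pow, mul_one, ← pow_mul, Polynomial.C_eq_natCast]
    push_cast
    ring
  rw [hexp, finset_sum_coeff]
  simp only [coeff_C_mul, coeff_X_pow]
  by_cases h : 2 ∣ r
  · obtain ⟨m, rfl⟩ := h
    have hm : (2*m)/2 = m := by omega
    rw [hm]
    rw [Finset.sum_eq_single m]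
    · simp
    · intro k _ hk
      rw [if_neg (by omega), mul_zero]
    · intro hm'
      rw [Nat.choose_eq_zero_of_lt (by simp [Finset.mem_range] at hm'; omega)]
      simp
  · rw [if_neg h]
    apply Finset.sum_eq_zero
    intro k _
    rw [if_neg (by omega), mul_zero]

lemma cdval (j : ℕ) : (((1 + X^2 : ℤ[X])^j) * (1 - X^2)).coeff j
    = if 2 ∣ j then (catalan (j/2) : ℤ) else 0 := by
  have expand : (((1 + X^2 : ℤ[X])^j) * (1 - X^2)) = (1 + X^2 : ℤ[X])^j - ((1 + X^2 : ℤ[X])^j) * X^2 := by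
    ring
  rw [expand, coeff_sub, coeff_mul_X_pow', coeff_pow_one_add_sq]
  by_cases h : 2 ∣ j
  · obtain ⟨m, rfl⟩ := h
    rw [if_pos ⟨m, rfl⟩]
    rcases Nat.eq_zero_or_pos m with rfl | hm
    · norm_num
    · obtain ⟨s, rfl⟩ := Nat.exists_eq_add_of_le hm
      have h2 : 2 ≤ 2 * (1 + s) := by omega
      rw [if_pos h2, coeff_pow_one_add_sq, if_pos (show 2 ∣ 2*(1+s) - 2 by omega)]
      have e1 : (2*(1+s))/2 = s + 1 := by omega
      have e2 : (2*(1+s) - 2)/2 = s := by omega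
      rw [e1, e2]
      have := catdiff s
      have hc : ((2*s+2).choose (s+1) : ℤ) = (catalan (s+1) : ℤ) + (2*s+2).choose s := by
        exact_mod_cast congrArg (Nat.cast : ℕ → ℤ) this.symm
      have hn : 2*(1+s) = 2*s+2 := by omega
      rw [hn, hc]
      rw [if_pos (show 2 ∣ 2*s + 2 from ⟨s+1, by ring⟩)]
      ring
  · rw [if_neg h, if_neg h]
    rcases le_or_gt 2 j with h2 | h2
    · rw [if_pos h2, coeff_pow_one_add_sq, if_neg (by omega)]
      simp
    · rw [if_neg (by omega)]
      simp

lemma genMotzkin_eq_sum (a b : ℤ) (n : ℕ) :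
    genMotzkin a b n = ∑ m ∈ range (n+1), (n.choose (2*m) : ℤ) * catalan m * a^(2*m) * b^(n - 2*m) := by
  unfold genMotzkin
  have hP : (C a + C b * X + C a * X^2 : ℤ[X]) = C b * X + C a * (1 + X^2) := by ring
  rw [hP, add_pow, Finset.sum_mul, finset_sum_coeff]
  have hterm : ∀ k ∈ range (n+1),
      ((C b * X)^k * (C a * (1 + X^2 : ℤ[X]))^(n-k) * ((n.choose k : ℕ) : ℤ[X]) * (1 - X^2)).coeff n
      = (n.choose k : ℤ) * b^k * a^(n-k) * (if 2 ∣ (n-k) then (catalan ((n-k)/2) : ℤ) else 0) := by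
    intro k hk
    have hkn : k ≤ n := by simp [Finset.mem_range] at hk; omega
    have harr : (C b * X)^k * (C a * (1 + X^2 : ℤ[X]))^(n-k) * ((n.choose k : ℕ) : ℤ[X]) * (1 - X^2)
        = C ((n.choose k : ℤ) * b^k * a^(n-k)) * (((1 + X^2 : ℤ[X])^(n-k) * (1 - X^2)) * X^k) := by
      have hc : ((n.choose k : ℕ) : ℤ[X]) = C ((n.choose k : ℤ)) := by simp
      rw [hc, mul_pow, mul_pow, ← Polynomial.C_pow, ← Polynomial.C_pow]
      simp only [Polynomial.C_mul]
      ring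
    rw [harr, coeff_C_mul, coeff_mul_X_pow', if_pos hkn]
    rw [cdval (n-k)]
  rw [Finset.sum_congr rfl hterm]
  have hrefl : ∑ k ∈ range (n+1), (n.choose k : ℤ) * b^k * a^(n-k) * (if 2 ∣ (n-k) then (catalan ((n-k)/2) : ℤ) else 0)
      = ∑ j ∈ range (n+1), (n.choose j : ℤ) * a^j * b^(n-j) * (if 2 ∣ j then (catalan (j/2) : ℤ) else 0) := by
    rw [← Finset.sum_range_reflect (fun k => (n.choose k : ℤ) * b^k * a^(n-k) * (if 2 ∣ (n-k) then (catalan ((n-k)/2) : ℤ) else 0)) (n+1)]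
    apply Finset.sum_congr rfl
    intro j hj
    have hjn : j ≤ n := by simp [Finset.mem_range] at hj; omega
    have e1 : n + 1 - 1 - j = n - j := by omega
    have e2 : n - (n - j) = j := by omega
    have e3 : n.choose (n - j) = n.choose j := Nat.choose_symm hjn
    rw [e1, e2, e3]
    ring
  rw [hrefl]
  -- now restrict to even j
  have hfilter : ∑ j ∈ range (n+1), (n.choose j : ℤ) * a^j * b^(n-j) * (if 2 ∣ j then (catalan (j/2) : ℤ) else 0)
      = ∑ j ∈ (range (n+1)).filter (fun j => 2 ∣ j), (n.choose j : ℤ) * a^j * b^(n-j) * (catalan (j/2) : ℤ) := by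
    rw [Finset.sum_filter]
    apply Finset.sum_congr rfl
    intro j _
    by_cases h : 2 ∣ j <;> simp [h]
  rw [hfilter]
  have himg : (range (n+1)).filter (fun j => 2 ∣ j) = Finset.image (fun m => 2*m) (range (n/2 + 1)) := by
    ext j
    simp only [Finset.mem_filter, Finset.mem_range, Finset.mem_image]
    constructor
    · rintro ⟨h1, m, rfl⟩
      exact ⟨m, by omega, rfl⟩
    · rintro ⟨m, hm, rfl⟩
      exact ⟨by omega, m, rfl⟩
  rw [himg, Finset.sum_image (by intro x _ y _ h; simp only at h; omega)]
  have hval : ∀ m ∈ range (n/2 + 1),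
      (n.choose (2*m) : ℤ) * a^(2*m) * b^(n-2*m) * (catalan ((2*m)/2) : ℤ)
      = (n.choose (2*m) : ℤ) * catalan m * a^(2*m) * b^(n - 2*m) := by
    intro m _
    have : (2*m)/2 = m := by omega
    rw [this]; ring
  rw [Finset.sum_congr rfl hval]
  apply Finset.sum_subset
  · apply Finset.range_subset_range.2; omega
  · intro m _ hm
    have : n < 2*m := by simp [Finset.mem_range] at hm ⊢; omega
    rw [Nat.choose_eq_zero_of_lt this]
    simp

lemma perterm (a b : ℤ) (n s : ℕ) :
    ((n:ℤ)+4) * ((n+2).choose (2*(s+1)) : ℤ) * catalan (s+1) * a^(2*(s+1)) * b^((n+2) - 2*(s+1))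
    - b*(2*(n:ℤ)+5) * ((n+1).choose (2*(s+1)) : ℤ) * catalan (s+1) * a^(2*(s+1)) * b^((n+1) - 2*(s+1))
    + b^2*((n:ℤ)+1) * ((n).choose (2*(s+1)) : ℤ) * catalan (s+1) * a^(2*(s+1)) * b^(n - 2*(s+1))
    = 4*((n:ℤ)+1) * ((n).choose (2*s) : ℤ) * catalan s * a^(2*s+2) * b^(n - 2*s) := by
  have hkey := key_s6 n s
  rw [show 2*(s+1) = 2*s+2 by omega]
  rcases lt_or_ge n (2*s) with hD | hle
  · rw [show (n+2).choose (2*s+2) = 0 from Nat.choose_eq_zero_of_lt (by omega),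
      show (n+1).choose (2*s+2) = 0 from Nat.choose_eq_zero_of_lt (by omega),
      show n.choose (2*s+2) = 0 from Nat.choose_eq_zero_of_lt (by omega),
      show n.choose (2*s) = 0 from Nat.choose_eq_zero_of_lt (by omega)]
    simp
  · rcases Nat.lt_or_ge n (2*s+1) with hC | hC
    · -- n = 2s
      rw [show (n+1).choose (2*s+2) = 0 from Nat.choose_eq_zero_of_lt (by omega),
        show n.choose (2*s+2) = 0 from Nat.choose_eq_zero_of_lt (by omega)] at hkey ⊢
      rw [show (n+2) - (2*s+2) = 0 by omega, show n - 2*s = 0 by omega]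
      push_cast at hkey
      linear_combination hkey * (a^(2*s+2))
    · rcases Nat.lt_or_ge n (2*s+2) with hB | hA
      · -- n = 2s+1
        rw [show n.choose (2*s+2) = 0 from Nat.choose_eq_zero_of_lt (by omega)] at hkey ⊢
        rw [show (n+2) - (2*s+2) = 1 by omega, show (n+1) - (2*s+2) = 0 by omega,
          show n - 2*s = 1 by omega]
        push_cast at hkey
        linear_combination hkey * (a^(2*s+2) * b)
      · -- 2s+2 ≤ n
        obtain ⟨t, ht⟩ := Nat.exists_eq_add_of_le hA
        rw [show (n+2) - (2*s+2) = t+2 by omega, show (n+1) - (2*s+2) = t+1 by omega,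
          show n - (2*s+2) = t by omega, show n - 2*s = t+2 by omega]
        linear_combination hkey * (a^(2*s+2) * b^(t+2))

lemma recurrence (a b : ℤ) (n : ℕ) :
    ((n:ℤ)+4) * genMotzkin a b (n+2)
      = b*(2*(n:ℤ)+5) * genMotzkin a b (n+1) - (b^2-4*a^2)*((n:ℤ)+1) * genMotzkin a b n := by
  rw [genMotzkin_eq_sum, genMotzkin_eq_sum, genMotzkin_eq_sum]
  have ext1 : ∑ m ∈ range (n+2), ((n+1).choose (2*m) : ℤ) * catalan m * a^(2*m) * b^((n+1) - 2*m)
      = ∑ m ∈ range (n+3), ((n+1).choose (2*m) : ℤ) * catalan m * a^(2*m) * b^((n+1) - 2*m) := by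
    apply Finset.sum_subset (Finset.range_subset_range.2 (by omega))
    intro m hm hm'
    rw [Nat.choose_eq_zero_of_lt (by simp [Finset.mem_range] at hm'; omega)]
    simp
  have ext0 : ∑ m ∈ range (n+1), ((n).choose (2*m) : ℤ) * catalan m * a^(2*m) * b^(n - 2*m)
      = ∑ m ∈ range (n+3), ((n).choose (2*m) : ℤ) * catalan m * a^(2*m) * b^(n - 2*m) := by
    apply Finset.sum_subset (Finset.range_subset_range.2 (by omega))
    intro m hm hm'
    rw [Nat.choose_eq_zero_of_lt (by simp [Finset.mem_range] at hm'; omega)]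
    simp
  rw [ext1, ext0]
  have claim1 : ∑ m ∈ range (n+3),
      (((n:ℤ)+4) * ((n+2).choose (2*m) : ℤ) * catalan m * a^(2*m) * b^((n+2) - 2*m)
       - b*(2*(n:ℤ)+5) * ((n+1).choose (2*m) : ℤ) * catalan m * a^(2*m) * b^((n+1) - 2*m)
       + b^2*((n:ℤ)+1) * ((n).choose (2*m) : ℤ) * catalan m * a^(2*m) * b^(n - 2*m))
      = ∑ m ∈ range (n+3),
        4*((n:ℤ)+1) * ((n).choose (2*m) : ℤ) * catalan m * a^(2*m+2) * b^(n - 2*m) := by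
    rw [Finset.sum_range_succ' _ (n+2)]
    have h0 : (((n:ℤ)+4) * ((n+2).choose (2*0) : ℤ) * catalan 0 * a^(2*0) * b^((n+2) - 2*0)
       - b*(2*(n:ℤ)+5) * ((n+1).choose (2*0) : ℤ) * catalan 0 * a^(2*0) * b^((n+1) - 2*0)
       + b^2*((n:ℤ)+1) * ((n).choose (2*0) : ℤ) * catalan 0 * a^(2*0) * b^(n - 2*0)) = 0 := by
      simp [catalan_zero]
      ring
    rw [h0, add_zero]
    have hterm : ∀ s ∈ range (n+2),
        (((n:ℤ)+4) * ((n+2).choose (2*(s+1)) : ℤ) * catalan (s+1) * a^(2*(s+1)) * b^((n+2) - 2*(s+1))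
       - b*(2*(n:ℤ)+5) * ((n+1).choose (2*(s+1)) : ℤ) * catalan (s+1) * a^(2*(s+1)) * b^((n+1) - 2*(s+1))
       + b^2*((n:ℤ)+1) * ((n).choose (2*(s+1)) : ℤ) * catalan (s+1) * a^(2*(s+1)) * b^(n - 2*(s+1)))
        = 4*((n:ℤ)+1) * ((n).choose (2*s) : ℤ) * catalan s * a^(2*s+2) * b^(n - 2*s) :=
      fun s _ => perterm a b n s
    rw [Finset.sum_congr rfl hterm]
    rw [Finset.sum_range_succ (fun m => 4*((n:ℤ)+1) * ((n).choose (2*m) : ℤ) * catalan m * a^(2*m+2) * b^(n - 2*m)) (n+2)]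
    rw [show (n).choose (2*(n+2)) = 0 from Nat.choose_eq_zero_of_lt (by omega)]
    push_cast
    ring
  have lin : ∑ m ∈ range (n+3),
      (((n:ℤ)+4) * ((n+2).choose (2*m) : ℤ) * catalan m * a^(2*m) * b^((n+2) - 2*m)
       - b*(2*(n:ℤ)+5) * ((n+1).choose (2*m) : ℤ) * catalan m * a^(2*m) * b^((n+1) - 2*m)
       + b^2*((n:ℤ)+1) * ((n).choose (2*m) : ℤ) * catalan m * a^(2*m) * b^(n - 2*m))
      = ((n:ℤ)+4) * (∑ m ∈ range (n+3), ((n+2).choose (2*m) : ℤ) * catalan m * a^(2*m) * b^((n+2) - 2*m))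
        - b*(2*(n:ℤ)+5) * (∑ m ∈ range (n+3), ((n+1).choose (2*m) : ℤ) * catalan m * a^(2*m) * b^((n+1) - 2*m))
        + b^2*((n:ℤ)+1) * (∑ m ∈ range (n+3), ((n).choose (2*m) : ℤ) * catalan m * a^(2*m) * b^(n - 2*m)) := by
    rw [Finset.mul_sum, Finset.mul_sum, Finset.mul_sum, ← Finset.sum_sub_distrib, ← Finset.sum_add_distrib]
    apply Finset.sum_congr rfl
    intro m _
    ring
  have linh : ∑ m ∈ range (n+3),
      4*((n:ℤ)+1) * ((n).choose (2*m) : ℤ) * catalan m * a^(2*m+2) * b^(n - 2*m)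
      = 4*a^2*((n:ℤ)+1) * (∑ m ∈ range (n+3), ((n).choose (2*m) : ℤ) * catalan m * a^(2*m) * b^(n - 2*m)) := by
    rw [Finset.mul_sum]
    apply Finset.sum_congr rfl
    intro m _
    ring
  rw [lin, linh] at claim1
  linarith [claim1]

end Aux

open Finset Nat in
theorem stmt6 (p : ℕ) (hp : p.Prime) (hp3 : 3 < p) (a b : ℤ) (k : ℕ) (hk : k ≤ (p - 3) / 2) :
    genMotzkin a b (p - 3 - k) ≡
      (b ^ 2 - 4 * a ^ 2) ^ ((p - 3) / 2 - k) * genMotzkin a b k [ZMOD (p : ℤ)] := by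
  have hp5 : 5 ≤ p := by
    have h4 : p ≠ 4 := by rintro rfl; norm_num at hp
    omega
  have hodd : p % 2 = 1 := by
    rcases hp.eq_two_or_odd with h | h
    · omega
    · exact h
  set q := (p - 3) / 2 with hqdef
  have hq : p = 2*q + 3 := by omega
  haveI : NeZero p := ⟨by omega⟩
  haveI : Fact p.Prime := ⟨hp⟩
  -- basic facts in ZMod p
  have hpz : (2 * (q : ZMod p) + 3) = 0 := by
    have h : ((2*q+3 : ℕ) : ZMod p) = 0 := by rw [← hq]; exact ZMod.natCast_self p
    push_cast at h
    linear_combination h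
  have hne : ∀ t : ℕ, 0 < t → t < p → ((t : ℕ) : ZMod p) ≠ 0 := by
    intro t h1 h2 h
    rw [ZMod.natCast_eq_zero_iff] at h
    exact absurd (Nat.le_of_dvd h1 h) (by omega)
  -- casted recurrence
  have hrec : ∀ n : ℕ, ((n : ZMod p) + 4) * ((genMotzkin a b (n+2) : ℤ) : ZMod p)
      = ((b : ℤ) : ZMod p) * (2*(n : ZMod p)+5) * ((genMotzkin a b (n+1) : ℤ) : ZMod p)
        - (((b : ℤ) : ZMod p)^2 - 4*((a : ℤ) : ZMod p)^2) * ((n : ZMod p)+1) * ((genMotzkin a b n : ℤ) : ZMod p) := by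
    intro n
    have := congrArg (fun z : ℤ => ((z : ZMod p))) (recurrence a b n)
    push_cast at this
    push_cast
    linear_combination this
  -- main induction
  have main : ∀ j : ℕ, ∀ k : ℕ, k + j = q →
      ((genMotzkin a b (q + j) : ℤ) : ZMod p)
        = (((b : ℤ) : ZMod p)^2 - 4*((a : ℤ) : ZMod p)^2)^j * ((genMotzkin a b k : ℤ) : ZMod p) := by
    intro j
    induction j using Nat.strong_induction_on with
    | _ j ih =>
      match j with
      | 0 => intro k hk0; have : k = q := by omega
             subst this; simp
      | 1 =>
        intro k hk1
        have hkq : k + 1 = q := hk1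
        have E := hrec k
        have c2 : 2*(k : ZMod p)+5 = 0 := by
          have hc : ((k:ZMod p) + 1) = (q : ZMod p) := by exact_mod_cast congrArg (Nat.cast : ℕ → ZMod p) hkq
          linear_combination hpz + 2 * hc
        have c1 : ((k : ZMod p) + 4) = -((k : ZMod p) + 1) := by linear_combination c2
        rw [c1, c2] at E
        have hfin : ((k+1 : ℕ) : ZMod p) * ((genMotzkin a b (k+2) : ℤ) : ZMod p)
            = ((k+1 : ℕ) : ZMod p) * ((((b : ℤ) : ZMod p)^2 - 4*((a : ℤ) : ZMod p)^2)^1 * ((genMotzkin a b k : ℤ) : ZMod p)) := by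
          push_cast
          linear_combination -E
        have hcan := hne (k+1) (by omega) (by omega)
        have := mul_left_cancel₀ hcan hfin
        rw [show q + 1 = k + 2 by omega]
        exact this
      | (i+2) =>
        intro k hk2
        have IH1 := ih (i+1) (by omega) (k+1) (by omega)
        have IH0 := ih i (by omega) (k+2) (by omega)
        have E1 := hrec (q + i)
        have E2 := hrec k
        have hcast : ((k : ZMod p) + i + 2) = (q : ZMod p) := by
          exact_mod_cast congrArg (Nat.cast : ℕ → ZMod p) hk2
        have c1 : ((q + i : ℕ) : ZMod p) + 4 = -((k : ZMod p) + 1) := by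
          push_cast
          linear_combination hpz + hcast
        have c2 : 2*((q + i : ℕ) : ZMod p) + 5 = -(2*(k : ZMod p) + 5) := by
          push_cast
          linear_combination 2*hpz + 2*hcast
        have c3 : ((q + i : ℕ) : ZMod p) + 1 = -((k : ZMod p) + 4) := by
          push_cast
          linear_combination hpz + hcast
        rw [c1, c2, c3] at E1
        rw [show q + i + 2 = q + (i+2) by omega, show q + i + 1 = q + (i+1) by omega] at E1
        rw [IH1] at E1
        rw [show q + i = q + i by rfl] at E1
        have E1' := E1
        rw [IH0] at E1'
        have hfin : ((k+1 : ℕ) : ZMod p) * ((genMotzkin a b (q + (i+2)) : ℤ) : ZMod p)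
            = ((k+1 : ℕ) : ZMod p) * ((((b : ℤ) : ZMod p)^2 - 4*((a : ℤ) : ZMod p)^2)^(i+2) * ((genMotzkin a b k : ℤ) : ZMod p)) := by
          push_cast
          linear_combination -E1' - (((b : ℤ) : ZMod p)^2 - 4*((a : ℤ) : ZMod p)^2)^(i+1) * E2
        have hcan := hne (k+1) (by omega) (by omega)
        exact mul_left_cancel₀ hcan hfin
  -- conclude
  have hfin := main (q - k) k (by omega)
  rw [show q + (q - k) = p - 3 - k by omega] at hfin
  rw [← ZMod.intCast_eq_intCast_iff]
  push_cast
  rw [hfin]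
end

section
/- For every prime p, p divides the Motzkin number M_{p−2} if and only if p ≡ 1 (mod 3). -/
open Polynomial

/-- The Motzkin number `M_n`: the coefficient of `X^n` in `(1 + X + X^2)^n * (1 - X^2)`. -/
noncomputable def motzkin (n : ℕ) : ℤ :=
  (((1 + X + X ^ 2 : Polynomial ℤ) ^ n) * (1 - X ^ 2)).coeff n

lemma coeffA {R : Type*} [CommRing R] (n m : ℕ) :
    ((1 - X ^ 3 : R[X]) ^ n).coeff m
      = if 3 ∣ m then ((-1) ^ (m / 3) * (n.choose (m / 3) : R)) else 0 := by
  have h1 : (1 - X ^ 3 : R[X]) ^ n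
      = ∑ k ∈ Finset.range (n + 1), C ((-1) ^ k * (n.choose k : R)) * X ^ (3 * k) := by
    rw [sub_eq_add_neg, add_comm, add_pow]
    refine Finset.sum_congr rfl fun k _ => ?_
    rw [one_pow, mul_one, neg_pow, ← pow_mul]
    simp [C_mul, C_pow, mul_comm, mul_assoc, mul_left_comm]
  rw [h1, finset_sum_coeff]
  simp only [coeff_C_mul, coeff_X_pow]
  by_cases h3 : 3 ∣ m
  · obtain ⟨j, rfl⟩ := h3
    have : ∀ k ∈ Finset.range (n+1), (((-1:R)^k * (n.choose k:R)) * if 3*j = 3*k then 1 else 0)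
        = if k = j then ((-1:R)^k * (n.choose k:R)) else 0 := by
      intro k _
      by_cases h : k = j
      · simp [h]
      · have h' : ¬ (3*j = 3*k) := by omega
        simp [h, h']
    rw [Finset.sum_congr rfl this, Finset.sum_ite_eq']
    have hj : (3*j)/3 = j := by omega
    by_cases hjn : j ∈ Finset.range (n+1)
    · simp [hjn, hj]
    · have : n.choose j = 0 := Nat.choose_eq_zero_of_lt (by simpa using hjn)
      simp [hjn, hj, this]
  · simp only [if_neg h3]
    refine Finset.sum_eq_zero fun k _ => ?_
    have : ¬ (m = 3*k) := fun h => h3 ⟨k, h⟩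
    simp [this]

lemma keyNonzero (p : ℕ) (hp : p.Prime) (k : ℕ) (h : 3*(k+1) = p - 2) (hp5 : 5 ≤ p) :
    ((-1)^(k+1) * ((p-2).choose (k+1) : ZMod p) + 2 * ((-1)^k * ((p-2).choose k : ZMod p))) ≠ 0 := by
  set n := p - 2 with hn
  have hkn : k + 1 ≤ n := by omega
  have h1 : n.choose (k+1) * (k+1).factorial * (n-(k+1)).factorial = n.factorial := Nat.choose_mul_factorial_mul_factorial hkn
  have h2 : n.choose k * k.factorial * (n-k).factorial = n.factorial := Nat.choose_mul_factorial_mul_factorial (by omega)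
  have hfk : (n-k).factorial = (2*k+3) * (n-(k+1)).factorial := by
    rw [show n-k = (n-(k+1)) + 1 by omega, Nat.factorial_succ]
    congr 1
    omega
  have eq1 : n.choose (k+1) * ((k+1).factorial * (n-k).factorial) = n.factorial * (2*k+3) := by
    rw [hfk, ← h1]; ring
  have eq2 : n.choose k * ((k+1).factorial * (n-k).factorial) = n.factorial * (k+1) := by
    rw [Nat.factorial_succ, ← h2]; ring
  have ceq1 : ((n.choose (k+1) : ZMod p)) * ((((k+1).factorial : ℕ) : ZMod p) * (((n-k).factorial : ℕ) : ZMod p))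
      = ((n.factorial : ℕ) : ZMod p) * (2*(k:ZMod p)+3) := by
    exact_mod_cast congrArg (Nat.cast : ℕ → ZMod p) eq1
  have ceq2 : ((n.choose k : ZMod p)) * ((((k+1).factorial : ℕ) : ZMod p) * (((n-k).factorial : ℕ) : ZMod p))
      = ((n.factorial : ℕ) : ZMod p) * ((k:ZMod p)+1) := by
    exact_mod_cast congrArg (Nat.cast : ℕ → ZMod p) eq2
  intro hcontra
  have hfac : (2 * ((n.choose k : ZMod p)) - (n.choose (k+1) : ZMod p)) = 0 := by
    have hunit : IsUnit ((-1 : ZMod p)^k) := (IsUnit.neg isUnit_one).pow k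
    have : ((-1 : ZMod p)^k) * (2 * ((n.choose k : ZMod p)) - (n.choose (k+1) : ZMod p)) = 0 := by
      rw [← hcontra]; ring
    exact (hunit.mul_right_eq_zero).mp this
  have hzero : ((n.factorial : ℕ) : ZMod p) = 0 := by
    have : -((n.factorial : ℕ) : ZMod p) = 0 := by
      calc -((n.factorial : ℕ) : ZMod p)
          = (2 * ((n.choose k : ZMod p)) - (n.choose (k+1) : ZMod p))
            * ((((k+1).factorial : ℕ) : ZMod p) * (((n-k).factorial : ℕ) : ZMod p)) := by
            linear_combination ceq1 - (2:ZMod p) * ceq2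
        _ = 0 := by rw [hfac, zero_mul]
    exact neg_eq_zero.mp this
  have : p ∣ n.factorial := (ZMod.natCast_eq_zero_iff _ _).mp hzero
  have := (Nat.Prime.dvd_factorial hp).mp this
  omega

theorem stmt7 (p : ℕ) (hp : p.Prime) :
    (p : ℤ) ∣ motzkin (p - 2) ↔ p % 3 = 1 := by
  by_cases hp2 : p = 2
  · subst hp2
    have hm : motzkin 0 = 1 := by simp [motzkin]
    simp [hm]
  by_cases hp3 : p = 3
  · subst hp3
    have hm : motzkin 1 = 1 := by
      have : ((1 + X + X ^ 2 : Polynomial ℤ) ^ 1) * (1 - X ^ 2) = 1 + X - X^3 - X^4 := by ring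
      rw [motzkin, this]
      simp [coeff_one, coeff_X]
    simp [hm]
  have hp5 : 5 ≤ p := by
    have h2 := hp.two_le
    have h4 : p ≠ 4 := by rintro rfl; norm_num at hp
    omega
  haveI : Fact p.Prime := ⟨hp⟩
  set n := p - 2 with hn
  rw [← ZMod.intCast_zmod_eq_zero_iff_dvd]
  -- push to ZMod p polynomials
  set g : (ZMod p)[X] := (1 + X + X^2)^n * (1 - X^2) with hg
  have hcast : ((motzkin n : ℤ) : ZMod p) = g.coeff n := by
    have hmap : g = ((1 + X + X ^ 2 : Polynomial ℤ) ^ n * (1 - X ^ 2)).map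
        (Int.castRingHom (ZMod p)) := by
      simp [hg, Polynomial.map_mul, Polynomial.map_pow, Polynomial.map_add,
        Polynomial.map_sub, Polynomial.map_one]
    rw [motzkin, hmap, coeff_map]
    rfl
  -- key identity
  have hx : (1 - X : (ZMod p)[X])^p = 1 - X^p := by
    rw [sub_pow_char]; simp
  have key : g * (1 - X^p) = (1 - X^3)^n * (1 - 2*X + 2*X^3 - X^4) := by
    rw [← hx]
    have hpn : (1 - X : (ZMod p)[X])^p = (1-X)^n * (1-X)^2 := by
      rw [← pow_add]; congr 1; omega
    rw [hpn, hg]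
    have e1 : ((1:(ZMod p)[X]) + X + X^2) * (1 - X) = 1 - X^3 := by ring
    calc (1 + X + X^2)^n * (1 - X^2) * ((1-X)^n * (1-X)^2)
        = (((1:(ZMod p)[X]) + X + X^2) * (1 - X))^n * ((1-X^2)*(1-X)^2) := by
          rw [mul_pow]; ring
      _ = (1 - X^3)^n * (1 - 2*X + 2*X^3 - X^4) := by rw [e1]; ring
  -- coefficient extraction
  have lhs : (g * (1 - X^p)).coeff n = g.coeff n := by
    rw [mul_sub, mul_one, coeff_sub, coeff_mul_X_pow']
    have : ¬ p ≤ n := by omega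
    simp [this]
  set A : (ZMod p)[X] := (1 - X^3)^n with hA
  have expand : A * (1 - 2*X + 2*X^3 - X^4)
      = A * X^0 - C 2 * (A * X^1) + C 2 * (A * X^3) - A * X^4 := by
    rw [map_ofNat C 2]; ring
  have rhs : (A * (1 - 2*X + 2*X^3 - X^4)).coeff n
      = (if 0 ≤ n then A.coeff (n-0) else 0) - 2 * (if 1 ≤ n then A.coeff (n-1) else 0)
        + 2 * (if 3 ≤ n then A.coeff (n-3) else 0) - (if 4 ≤ n then A.coeff (n-4) else 0) := by
    rw [expand, coeff_sub, coeff_add, coeff_sub, coeff_C_mul, coeff_C_mul,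
      coeff_mul_X_pow', coeff_mul_X_pow', coeff_mul_X_pow', coeff_mul_X_pow']
  have hval : ((motzkin n : ℤ) : ZMod p)
      = (if 0 ≤ n then A.coeff (n-0) else 0) - 2 * (if 1 ≤ n then A.coeff (n-1) else 0)
        + 2 * (if 3 ≤ n then A.coeff (n-3) else 0) - (if 4 ≤ n then A.coeff (n-4) else 0) := by
    rw [hcast, ← lhs, key, rhs]
  have hn3 : 3 ≤ n := by omega
  have hmod : p % 3 = 1 ∨ p % 3 = 2 := by
    have : ¬ (3 ∣ p) := fun hdvd => by
      rcases (Nat.Prime.eq_one_or_self_of_dvd hp 3 hdvd) with h | h <;> omega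
    omega
  rcases hmod with h1 | h2
  · -- p ≡ 1 mod 3: all coefficients vanish
    simp only [if_pos (by omega : (0:ℕ) ≤ n), if_pos (by omega : 1 ≤ n),
      if_pos hn3] at hval
    have hp7 : 7 ≤ p := by
      have : p ≠ 5 := by rintro rfl; omega
      have : p ≠ 6 := by rintro rfl; norm_num at hp
      omega
    rw [if_pos (by omega : 4 ≤ n)] at hval
    have d0 : ¬ 3 ∣ (n - 0) := by omega
    have d1 : ¬ 3 ∣ (n - 1) := by omega
    have d3 : ¬ 3 ∣ (n - 3) := by omega
    have d4 : ¬ 3 ∣ (n - 4) := by omega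
    rw [coeffA, coeffA, coeffA, coeffA, if_neg d0, if_neg d1, if_neg d3, if_neg d4] at hval
    simp only [hval]
    norm_num [h1]
  · -- p ≡ 2 mod 3: value is nonzero
    obtain ⟨k, hk⟩ : ∃ k, n = 3 * (k+1) := ⟨n/3 - 1, by omega⟩
    simp only [if_pos (by omega : (0:ℕ) ≤ n), if_pos (by omega : 1 ≤ n),
      if_pos hn3] at hval
    have d1 : ¬ 3 ∣ (n - 1) := by omega
    have d0 : 3 ∣ (n - 0) := by omega
    have d3 : 3 ∣ (n - 3) := by omega
    have hq0 : (n - 0) / 3 = k + 1 := by omega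
    have hq3 : (n - 3) / 3 = k := by omega
    have h4term : (if 4 ≤ n then A.coeff (n-4) else 0) = 0 := by
      by_cases h4 : 4 ≤ n
      · have d4 : ¬ 3 ∣ (n - 4) := by omega
        rw [if_pos h4, coeffA, if_neg d4]
      · rw [if_neg h4]
    rw [h4term, coeffA, coeffA, coeffA, if_pos d0, if_neg d1, if_pos d3, hq0, hq3] at hval
    have hne := keyNonzero p hp k (by omega) hp5
    simp only [← hn] at hne
    constructor
    · intro h0
      exfalso
      apply hne
      have heq : ((-1:ZMod p))^(k+1) * ((n.choose (k+1) : ZMod p))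
          + 2 * ((-1)^k * ((n.choose k : ZMod p))) = ((motzkin n : ℤ) : ZMod p) := by
        rw [hval]; ring
      exact heq.trans h0
    · intro hcon; omega
end

section
/- Let Q be a polynomial over ℤ of degree at most 2, define a_n to be the coefficient of X^n in Q^n, and let p be a prime. Then for every natural number n, a_n is congruent modulo p to the product of a_d over the base-p digits d of n, i.e. a_n ≡ ∏_{i} a_{(n)_p[i]} (mod p), where (n)_p[i] denotes the i-th digit of n in base p. (In particular, T^{a,b}_n ≡ ∏_i T^{a,b}_{(n)_p[i]} (mod p).) -/
open Polynomial

lemma pow_eq_expand {p : ℕ} [Fact p.Prime] (g : (ZMod p)[X]) :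
    g ^ p = expand (ZMod p) p g := by
  have h := Polynomial.map_frobenius_expand (p := p) (f := g)
  rw [ZMod.frobenius_zmod, Polynomial.map_id] at h
  exact h.symm

lemma key_s8 {p : ℕ} [hp : Fact p.Prime] (f : (ZMod p)[X]) (hf : f.natDegree ≤ 2) (n : ℕ) :
    (f ^ n).coeff n = (f ^ (n % p)).coeff (n % p) * (f ^ (n / p)).coeff (n / p) := by
  have hp0 : 0 < p := hp.out.pos
  set d := n % p with hd
  set m := n / p with hm
  clear_value d m
  have hdp : d < p := hd ▸ Nat.mod_lt _ hp0
  have hn : n = d + p * m := by rw [hd, hm]; exact (Nat.mod_add_div n p).symm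
  have hdeg : (f ^ d).natDegree ≤ 2 * d := by
    calc (f ^ d).natDegree ≤ d * f.natDegree := natDegree_pow_le
    _ ≤ d * 2 := Nat.mul_le_mul_left d hf
    _ = 2 * d := by ring
  have decomp : f ^ n = f ^ d * expand (ZMod p) p (f ^ m) := by
    rw [← pow_eq_expand, ← pow_mul', ← pow_add, ← hn]
  rw [decomp, coeff_mul]
  rw [Finset.sum_eq_single (d, p * m)]
  · rw [coeff_expand_mul' hp0]
  · rintro ⟨i, j⟩ hij hne
    simp only [Finset.HasAntidiagonal.mem_antidiagonal] at hij
    by_cases hdj : p ∣ j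
    · obtain ⟨k, rfl⟩ := hdj
      rw [coeff_expand_mul' hp0]
      rcases Nat.lt_or_ge m k with hk | hk
      · exfalso
        have h2 : p * (m + 1) ≤ p * k := Nat.mul_le_mul_left p hk
        have h3 : p * (m + 1) = p * m + p := by ring
        omega
      · have h1 : p * k + p * (m - k) = p * m := by
          rw [← Nat.mul_add]; congr 1; omega
        by_cases hk2 : k = m
        · exfalso; apply hne; subst hk2; exact Prod.ext (by omega) rfl
        · have h2 : p ≤ p * (m - k) := Nat.le_mul_of_pos_right p (by omega)
          have : (f ^ d).coeff i = 0 :=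
            coeff_eq_zero_of_natDegree_lt (by omega)
          rw [this, zero_mul]
    · rw [coeff_expand hp0, if_neg hdj, mul_zero]
  · intro h
    exact absurd (Finset.HasAntidiagonal.mem_antidiagonal.mpr (by omega)) h

lemma key2_s8 {p : ℕ} [hp : Fact p.Prime] (f : (ZMod p)[X]) (hf : f.natDegree ≤ 2) (n : ℕ) :
    (f ^ n).coeff n = ((Nat.digits p n).map (fun d => (f ^ d).coeff d)).prod := by
  induction n using Nat.strong_induction_on with
  | _ n ih =>
    rcases Nat.eq_zero_or_pos n with rfl | hn
    · simp
    · rw [Nat.digits_def' hp.out.one_lt hn, List.map_cons, List.prod_cons,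
        key_s8 f hf n, ih (n / p) (Nat.div_lt_self hn hp.out.one_lt)]

theorem stmt8 (Q : Polynomial ℤ) (hQ : Q.natDegree ≤ 2) (p : ℕ) (hp : p.Prime) (n : ℕ) :
    (Q ^ n).coeff n ≡
      ((Nat.digits p n).map (fun d => (Q ^ d).coeff d)).prod [ZMOD (p : ℤ)] := by
  haveI : Fact p.Prime := ⟨hp⟩
  rw [← ZMod.intCast_eq_intCast_iff]
  set f : (ZMod p)[X] := Q.map (Int.castRingHom (ZMod p)) with hf
  have hfd : f.natDegree ≤ 2 := le_trans natDegree_map_le hQ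
  have hcast : ∀ k : ℕ, (((Q ^ k).coeff k : ℤ) : ZMod p) = (f ^ k).coeff k := by
    intro k
    rw [hf, ← Polynomial.map_pow, coeff_map]
    simp
  rw [hcast, key2_s8 f hfd n]
  push_cast
  rw [List.map_map]
  congr 1
  ext d
  simp [hcast]
end

section
/- Let Q be a polynomial over ℤ of degree at most 2, let a_n be the coefficient of X^n in Q^n, let p be a prime, let h be a natural number with h < p, let α_0, …, α_h be integers, and set b_n := Σ_{i=0}^h α_i·a_{n+i}. Then: (1) for all natural numbers N and n₀ with n₀ < p − h, one has b_{N·p + n₀} ≡ a_N · b_{n₀} (mod p); and (2) for all natural numbers N, k, m, n₀ with m ≤ p−2 and n₀ ≤ p−1, setting n = N·p^{k+2} + m·p^{k+1} + p^{k+1} − p + n₀ (whose base-p expansion is the digits of N, then the digit m, then k digits equal to p−1, then the digit n₀) and C = min(h, p−1−n₀), one has b_n ≡ a_N · ( a_m · (a_{p−1})^k · Σ_{i=0}^{C} α_i·a_{n₀+i} + a_{m+1} · Σ_{i=p−n₀}^{h} α_i·a_{i−(p−n₀)} ) (mod p), where the second sum is empty (equal to 0) when p − n₀ > h. -/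
open Polynomial

theorem keyA (p : ℕ) (hp : p.Prime) (f : Polynomial (ZMod p)) (hf : f.natDegree ≤ 2)
    (N n : ℕ) (hn : n < p) :
    (f ^ (N * p + n)).coeff (N * p + n) = (f ^ N).coeff N * (f ^ n).coeff n := by
  haveI := Fact.mk hp
  have hfp : f ^ p = expand (ZMod p) p f := by
    rw [← Polynomial.map_frobenius_expand (p := p) f, ZMod.frobenius_zmod, Polynomial.map_id]
  have hexp : f ^ (N * p + n) = expand (ZMod p) p (f ^ N) * f ^ n := by
    rw [pow_add, pow_mul', hfp, ← map_pow]
  rw [hexp, coeff_mul]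
  rw [Finset.sum_eq_single_of_mem (⟨N * p, n⟩ : ℕ × ℕ)]
  · rw [coeff_expand hp.pos]
    simp [Nat.mul_div_cancel _ hp.pos]
  · simp [Finset.mem_antidiagonal]
  · rintro ⟨x, y⟩ hmem hne
    simp only [Finset.HasAntidiagonal.mem_antidiagonal] at hmem
    rw [coeff_expand hp.pos]
    by_cases hd : p ∣ x
    · obtain ⟨j, rfl⟩ := hd
      by_cases hy : 2 * n < y
      · have : (f ^ n).coeff y = 0 := by
          apply coeff_eq_zero_of_natDegree_lt
          calc (f ^ n).natDegree ≤ n * f.natDegree := natDegree_pow_le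
            _ ≤ n * 2 := Nat.mul_le_mul_left n hf
            _ < y := by omega
        simp [this]
      · exfalso
        push_neg at hy
        have e1 : p * (N + 1) = N * p + p := by ring
        have e2 : p * (j + 1) = p * j + p := by ring
        have e3 : p * N = N * p := Nat.mul_comm _ _
        have hjN : j = N := by
          have h1 : p * j < p * (N + 1) := by omega
          have hj1 : j < N + 1 := lt_of_mul_lt_mul_left h1 (Nat.zero_le p)
          have hj2 : N ≤ j := by
            by_contra hc
            push_neg at hc
            have h2 : p * (j + 1) ≤ p * N := Nat.mul_le_mul_left p hc
            omega
          omega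
        subst hjN
        apply hne
        simp only [Prod.mk.injEq]
        omega
    · simp [hd]

theorem keyPow(p : ℕ) (hp : p.Prime) (f : Polynomial (ZMod p)) (hf : f.natDegree ≤ 2)
    (c k : ℕ) : (f ^ (c * p ^ k)).coeff (c * p ^ k) = (f ^ c).coeff c := by
  induction k with
  | zero => simp
  | succ k ih =>
    have he : c * p ^ (k + 1) = (c * p ^ k) * p + 0 := by ring
    rw [he, keyA p hp f hf _ 0 hp.pos, ih]
    simp

theorem keyTail (p : ℕ) (hp : p.Prime) (f : Polynomial (ZMod p)) (hf : f.natDegree ≤ 2)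
    (c k : ℕ) :
    (f ^ (c * p ^ k + (p ^ k - 1))).coeff (c * p ^ k + (p ^ k - 1)) =
      (f ^ c).coeff c * ((f ^ (p - 1)).coeff (p - 1)) ^ k := by
  induction k with
  | zero => simp
  | succ k ih =>
    have h1 : 1 ≤ p ^ k := Nat.one_le_pow _ _ hp.pos
    have h2 : 1 ≤ p ^ (k + 1) := Nat.one_le_pow _ _ hp.pos
    have h3 : 1 ≤ p := hp.pos
    have he : c * p ^ (k + 1) + (p ^ (k + 1) - 1) =
        (c * p ^ k + (p ^ k - 1)) * p + (p - 1) := by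
      zify [h1, h2, h3]
      push_cast [pow_succ]
      ring
    rw [he, keyA p hp f hf _ (p - 1) (by omega), ih]
    ring

theorem stmt9 (Q : Polynomial ℤ) (hQ : Q.natDegree ≤ 2) (p : ℕ) (hp : p.Prime)
    (h : ℕ) (hh : h < p) (α : ℕ → ℤ) :
    letI a : ℕ → ℤ := fun n => (Q ^ n).coeff n
    letI bseq : ℕ → ℤ := fun n => ∑ i ∈ Finset.range (h + 1), α i * a (n + i)
    -- (1)
    (∀ N n₀ : ℕ, n₀ < p - h →
      bseq (N * p + n₀) ≡ a N * bseq n₀ [ZMOD (p : ℤ)]) ∧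
    -- (2)
    (∀ N k m n₀ : ℕ, m ≤ p - 2 → n₀ ≤ p - 1 →
      bseq (N * p ^ (k + 2) + m * p ^ (k + 1) + (p ^ (k + 1) - p) + n₀) ≡
        a N * (a m * (a (p - 1)) ^ k *
            (∑ i ∈ Finset.range (min h (p - 1 - n₀) + 1), α i * a (n₀ + i)) +
          a (m + 1) * ∑ i ∈ Finset.Icc (p - n₀) h, α i * a (i - (p - n₀)))
        [ZMOD (p : ℤ)]) := by
  beta_reduce
  set f : Polynomial (ZMod p) := Q.map (Int.castRingHom (ZMod p)) with hfdef
  have hf : f.natDegree ≤ 2 := natDegree_map_le.trans hQ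
  set B : ℕ → ZMod p := fun n => (f ^ n).coeff n with hBdef
  have hcast : ∀ n : ℕ, (((Q ^ n).coeff n : ℤ) : ZMod p) = B n := by
    intro n
    simp only [B, hfdef, ← Polynomial.map_pow, coeff_map]
    rfl
  have hp2 : 2 ≤ p := hp.two_le
  have hB2 : ∀ X y : ℕ, y < p → B (X * p + y) = B X * B y :=
    fun X y hy => keyA p hp f hf X y hy
  constructor
  · intro N n₀ hn₀
    rw [← ZMod.intCast_eq_intCast_iff]
    push_cast
    simp only [hcast]
    rw [Finset.mul_sum]
    apply Finset.sum_congr rfl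
    intro i hi
    simp only [Finset.mem_range] at hi
    have harith : N * p + n₀ + i = N * p + (n₀ + i) := by omega
    rw [harith, hB2 N (n₀ + i) (by omega)]
    ring
  · intro N k m n₀ hm hn₀
    have hm' : m < p := by omega
    have h1 : 1 ≤ p ^ k := Nat.one_le_pow _ _ hp.pos
    have h2 : p ≤ p ^ (k + 1) := by
      calc p = p ^ 1 := (pow_one p).symm
        _ ≤ p ^ (k + 1) := Nat.pow_le_pow_right hp.pos (by omega)
    set M : ℕ := (N * p + m) * p ^ k + (p ^ k - 1) with hMdef
    set n : ℕ := N * p ^ (k + 2) + m * p ^ (k + 1) + (p ^ (k + 1) - p) + n₀ with hndef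
    have hBM : B M = B N * B m * (B (p - 1)) ^ k := by
      simp only [B, hMdef]
      rw [keyTail p hp f hf _ k, keyA p hp f hf N m hm']
    have hM1 : M + 1 = (N * p + (m + 1)) * p ^ k := by
      simp only [hMdef]
      zify [h1]
      ring
    have hBM1 : B (M + 1) = B N * B (m + 1) := by
      simp only [B, hM1]
      rw [keyPow p hp f hf _ k, keyA p hp f hf N (m + 1) (by omega)]
    have harith1 : ∀ i : ℕ, n₀ + i < p → n + i = M * p + (n₀ + i) := by
      intro i hi
      simp only [hndef, hMdef]
      zify [h1, h2]
      push_cast [pow_succ]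
      ring
    have harith2 : ∀ i : ℕ, p ≤ n₀ + i → n + i = (M + 1) * p + (i - (p - n₀)) := by
      intro i hi
      simp only [hndef, hMdef]
      have hn0p : n₀ < p := by omega
      zify [h1, h2, hn0p.le, (by omega : p - n₀ ≤ i)]
      push_cast [pow_succ]
      ring
    rw [← ZMod.intCast_eq_intCast_iff]
    push_cast
    simp only [hcast]
    by_cases hcase : n₀ + h < p
    · have hmin : min h (p - 1 - n₀) = h := by omega
      have hIcc : Finset.Icc (p - n₀) h = ∅ := by
        apply Finset.Icc_eq_empty
        omega
      rw [hmin, hIcc]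
      simp only [Finset.sum_empty, mul_zero, add_zero]
      have hsum : ∑ i ∈ Finset.range (h + 1), (α i : ZMod p) * B (n + i) =
          B M * ∑ i ∈ Finset.range (h + 1), (α i : ZMod p) * B (n₀ + i) := by
        rw [Finset.mul_sum]
        apply Finset.sum_congr rfl
        intro i hi
        simp only [Finset.mem_range] at hi
        rw [harith1 i (by omega), hB2 M (n₀ + i) (by omega)]
        ring
      rw [hsum, hBM]
      ring
    · have hmin : min h (p - 1 - n₀) = p - 1 - n₀ := by omega
      rw [Finset.range_eq_Ico, ← Finset.sum_Ico_consecutive _ (Nat.zero_le (p - n₀))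
        (by omega : p - n₀ ≤ h + 1)]
      have hIcc : Finset.Icc (p - n₀) h = Finset.Ico (p - n₀) (h + 1) := by
        rw [Finset.Ico_add_one_right_eq_Icc]
      have hfst : ∑ i ∈ Finset.Ico 0 (p - n₀), α i * B (n + i) =
          B M * ∑ i ∈ Finset.range (min h (p - 1 - n₀) + 1), α i * B (n₀ + i) := by
        rw [hmin, Finset.mul_sum, show p - 1 - n₀ + 1 = p - n₀ by omega, Finset.range_eq_Ico]
        apply Finset.sum_congr rfl
        intro i hi
        simp only [Finset.mem_Ico] at hi
        rw [harith1 i (by omega), hB2 M (n₀ + i) (by omega)]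
        ring
      have hsnd : ∑ i ∈ Finset.Ico (p - n₀) (h + 1), α i * B (n + i) =
          B (M + 1) * ∑ i ∈ Finset.Icc (p - n₀) h, α i * B (i - (p - n₀)) := by
        rw [hIcc, Finset.mul_sum]
        apply Finset.sum_congr rfl
        intro i hi
        simp only [Finset.mem_Ico] at hi
        rw [harith2 i (by omega), hB2 (M + 1) (i - (p - n₀)) (by omega)]
        ring
      rw [hfst, hsnd, hBM, hBM1, Finset.range_eq_Ico]
      ring
end

section
/- Let p > 2 be a prime and a, b integers with p ∤ a, p ∤ b² − 4a², and such that p does not divide T^{a,b}_n for any n < p. Then: (i) for all natural numbers N, n₀ with n₀ < p − 2, p ∣ M^{a,b}_{N·p + n₀} if and only if p ∣ M^{a,b}_{n₀}; (ii) for all natural numbers N, k and m ≤ p−2, with n = N·p^{k+2} + m·p^{k+1} + p^{k+1} − 2, p ∣ M^{a,b}_n if and only if b·T^{a,b}_m ≡ (T^{a,b}_{p−1})^{k+1}·T^{a,b}_{m+1} (mod p); (iii) for all natural numbers N, k and m ≤ p−2, with n = N·p^{k+2} + m·p^{k+1} + p^{k+1} − 1 and ℓ = p−2−m, p ∣ M^{a,b}_n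 if and only if b·T^{a,b}_ℓ ≡ (T^{a,b}_{p−1})^{k+1}·T^{a,b}_{ℓ+1} (mod p). -/
open Polynomial

namespace Stmt11Aux

section Collapse
variable {R : Type*} [CommRing R]

lemma collapseA (P : ℕ) (hP : 0 < P) (g h : R[X]) (q s : ℕ) (hs : s < P)
    (hh : h.natDegree < P + s) :
    ((expand R P g) * h).coeff (q * P + s) = g.coeff q * h.coeff s := by
  rw [coeff_mul]
  refine Finset.sum_eq_single_of_mem (q * P, s) (by rw [Finset.HasAntidiagonal.mem_antidiagonal]) ?_ |>.trans ?_
  · rintro ⟨i, e⟩ hmem hne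
    rw [Finset.HasAntidiagonal.mem_antidiagonal] at hmem
    simp only at hmem ⊢
    rw [coeff_expand hP]
    by_cases hdvd : P ∣ i
    · obtain ⟨j, rfl⟩ := hdvd
      rw [if_pos (Dvd.intro j rfl), Nat.mul_div_cancel_left _ hP]
      have hj : j ≤ q := by
        by_contra hc
        push_neg at hc
        have : (q + 1) * P ≤ j * P := Nat.mul_le_mul_right P hc
        have h2 : P * j = j * P := Nat.mul_comm _ _
        have h3 : q * P + P = (q+1) * P := by ring
        linarith [hmem]
      rcases eq_or_lt_of_le hj with rfl | hjq
      · exfalso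
        apply hne
        have h2 : P * j = j * P := Nat.mul_comm _ _
        have : e = s := by omega
        simp [this, Nat.mul_comm]
      · have h1 : (j + 1) * P ≤ q * P := Nat.mul_le_mul_right P hjq
        have h2 : P * j = j * P := Nat.mul_comm _ _
        have h3 : j * P + P = (j+1) * P := by ring
        have he : P + s ≤ e := by linarith [hmem]
        rw [coeff_eq_zero_of_natDegree_lt (lt_of_lt_of_le hh he), mul_zero]
    · rw [if_neg hdvd, zero_mul]
  · rw [coeff_expand hP]
    simp only
    rw [if_pos (dvd_mul_left P q), Nat.mul_div_cancel _ hP]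

lemma collapseB (g h : R[X]) (P q s : ℕ) (hP : 0 < P) (hs : s < P)
    (hh : h.natDegree < 2 * P + s) :
    ((expand R P g) * h).coeff ((q + 1) * P + s) =
      g.coeff (q + 1) * h.coeff s + g.coeff q * h.coeff (s + P) := by
  rw [coeff_mul]
  have hmem1 : ((q+1) * P, s) ∈ Finset.HasAntidiagonal.antidiagonal ((q+1) * P + s) := by
    rw [Finset.HasAntidiagonal.mem_antidiagonal]
  have hmem2 : (q * P, s + P) ∈ Finset.HasAntidiagonal.antidiagonal ((q+1) * P + s) := by
    rw [Finset.HasAntidiagonal.mem_antidiagonal]; ring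
  have hne : ((q+1) * P, s) ≠ (q * P, s + P) := by
    intro hc
    rw [Prod.mk.injEq] at hc
    omega
  have hsub : ({((q+1) * P, s), (q * P, s + P)} : Finset (ℕ × ℕ)) ⊆
      Finset.HasAntidiagonal.antidiagonal ((q+1) * P + s) := by
    intro x hx
    rcases Finset.mem_insert.mp hx with rfl | hx
    · exact hmem1
    · rw [Finset.mem_singleton] at hx; subst hx; exact hmem2
  rw [← Finset.sum_subset hsub ?_, Finset.sum_pair hne]
  · rw [coeff_expand hP, coeff_expand hP]
    simp only
    rw [if_pos (dvd_mul_left P (q+1)), if_pos (dvd_mul_left P q),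
      Nat.mul_div_cancel _ hP, Nat.mul_div_cancel _ hP]
  · rintro ⟨i, e⟩ hmem hnotin
    rw [Finset.HasAntidiagonal.mem_antidiagonal] at hmem
    simp only at hmem ⊢
    rw [coeff_expand hP]
    by_cases hdvd : P ∣ i
    · obtain ⟨j, rfl⟩ := hdvd
      rw [if_pos (Dvd.intro j rfl), Nat.mul_div_cancel_left _ hP]
      have h2 : P * j = j * P := Nat.mul_comm _ _
      have hj : j ≤ q + 1 := by
        by_contra hc
        push_neg at hc
        have : (q + 2) * P ≤ j * P := Nat.mul_le_mul_right P hc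
        have h3 : (q+1) * P + P = (q+2) * P := by ring
        linarith [hmem]
      have hj2 : j ≠ q + 1 := by
        intro hc
        apply hnotin
        have h5 : j * P = (q+1) * P := by rw [hc]
        have h4 : e = s := by omega
        refine Finset.mem_insert.mpr (Or.inl ?_)
        rw [Prod.mk.injEq, h4]
        exact ⟨by rw [h2, hc], rfl⟩
      have hj3 : j ≠ q := by
        intro hc
        apply hnotin
        have h5 : j * P = q * P := by rw [hc]
        have h6 : (q+1) * P = q * P + P := by ring
        have h4 : e = s + P := by omega
        refine Finset.mem_insert.mpr (Or.inr (Finset.mem_singleton.mpr ?_))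
        rw [Prod.mk.injEq, h4]
        exact ⟨by rw [h2, hc], rfl⟩
      have hjq : j + 1 ≤ q := by omega
      have h1 : (j + 2) * P ≤ (q + 1) * P := Nat.mul_le_mul_right P (by omega)
      have h3 : j * P + 2 * P = (j+2) * P := by ring
      have he : 2 * P + s ≤ e := by linarith [hmem]
      rw [coeff_eq_zero_of_natDegree_lt (lt_of_lt_of_le hh he), mul_zero]
    · rw [if_neg hdvd, zero_mul]

end Collapse

section Fp
variable {p : ℕ} [Fact p.Prime] (α β : ZMod p)

noncomputable def fp : (ZMod p)[X] := C α + C β * X + C α * X ^ 2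

lemma fp_eq : fp α β = C α * X ^ 0 + C β * X ^ 1 + C α * X ^ 2 := by
  simp [fp]

lemma natDegree_fp_le : (fp α β).natDegree ≤ 2 := by
  rw [fp_eq]
  refine (natDegree_add_le _ _).trans (max_le ((natDegree_add_le _ _).trans (max_le ?_ ?_)) ?_) <;>
    refine (natDegree_C_mul_le _ _).trans ?_ <;> simp

lemma natDegree_fp_pow_le (n : ℕ) : ((fp α β) ^ n).natDegree ≤ 2 * n := by
  refine natDegree_pow_le.trans ?_
  have := natDegree_fp_le α β
  nlinarith

lemma reflect_fp : reflect 2 (fp α β) = fp α β := by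
  rw [fp_eq, reflect_add, reflect_add, reflect_C_mul_X_pow, reflect_C_mul_X_pow,
    reflect_C_mul_X_pow]
  norm_num
  ring

lemma reflect_fp_pow (n : ℕ) : reflect (2 * n) ((fp α β) ^ n) = (fp α β) ^ n := by
  induction n with
  | zero => simp
  | succ k ih =>
    have h : (2 : ℕ) * (k + 1) = 2 + 2 * k := by ring
    rw [h, pow_succ, mul_comm ((fp α β) ^ k) (fp α β),
      reflect_mul (fp α β) _ (natDegree_fp_le α β) (natDegree_fp_pow_le α β k),
      reflect_fp, ih, mul_comm]

lemma pal {n i j : ℕ} (h : i + j = 2 * n) :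
    ((fp α β) ^ n).coeff i = ((fp α β) ^ n).coeff j := by
  conv_lhs => rw [← reflect_fp_pow α β n]
  rw [coeff_reflect, revAt_le (by omega)]
  congr 1
  omega



lemma fp_mul_coeff (g : (ZMod p)[X]) (j : ℕ) :
    ((fp α β) * g).coeff (j + 2) =
      α * g.coeff j + β * g.coeff (j + 1) + α * g.coeff (j + 2) := by
  have h : (fp α β) * g = C α * g + C β * (X * g) + C α * (X ^ 2 * g) := by
    rw [fp]; ring
  rw [h, coeff_add, coeff_add, coeff_C_mul, coeff_C_mul, coeff_C_mul]
  rw [show j + 2 = (j + 1) + 1 from rfl, coeff_X_mul, coeff_X_pow_mul]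
  ring

lemma fp_mul_coeff_one (g : (ZMod p)[X]) :
    ((fp α β) * g).coeff 1 = α * g.coeff 1 + β * g.coeff 0 := by
  have h : (fp α β) * g = C α * g + C β * (X * g) + C α * (X ^ 2 * g) := by
    rw [fp]; ring
  rw [h, coeff_add, coeff_add, coeff_C_mul, coeff_C_mul, coeff_C_mul]
  rw [show (1:ℕ) = 0 + 1 from rfl, coeff_X_mul]
  have : (X ^ 2 * g).coeff (0+1) = 0 := by
    rw [coeff_X_pow_mul']
    simp
  rw [this]
  ring

lemma coeff_fp_zero : (fp α β).coeff 0 = α := by simp [fp]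
lemma coeff_fp_one : (fp α β).coeff 1 = β := by simp [fp, coeff_one]
lemma coeff_fp_pow_zero (n : ℕ) : ((fp α β) ^ n).coeff 0 = α ^ n := by
  rw [coeff_zero_eq_eval_zero, eval_pow, ← coeff_zero_eq_eval_zero, coeff_fp_zero]

lemma derivative_fp : derivative (fp α β) = C β + C (2 * α) * X := by
  rw [fp]
  simp only [derivative_add, derivative_C, derivative_C_mul, derivative_X, derivative_X_pow]
  simp
  ring

lemma lp_mul_coeff (g : (ZMod p)[X]) (j : ℕ) :
    ((C β + C (2 * α) * X) * g).coeff (j + 1) =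
      β * g.coeff (j + 1) + 2 * α * g.coeff j := by
  rw [add_mul, coeff_add, coeff_C_mul, mul_assoc, coeff_C_mul, coeff_X_mul]

lemma poly_pow_card (g : (ZMod p)[X]) : g ^ p = expand (ZMod p) p g := by
  have h : map (frobenius (ZMod p) p) (expand (ZMod p) p g) = g ^ p := map_frobenius_expand p g
  rw [ZMod.frobenius_zmod] at h
  rw [← h, Polynomial.map_id]

lemma poly_pow_card_pow (g : (ZMod p)[X]) (k : ℕ) :
    g ^ (p ^ k) = expand (ZMod p) (p ^ k) g := by
  induction k with
  | zero => simp
  | succ j ih =>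
    rw [pow_succ, pow_mul, ih, ← map_pow, poly_pow_card, expand_expand]

lemma fp_pow_split (k N r : ℕ) :
    (fp α β) ^ (N * p ^ k + r) =
      expand (ZMod p) (p ^ k) ((fp α β) ^ N) * (fp α β) ^ r := by
  rw [pow_add, pow_mul, poly_pow_card_pow]



noncomputable def Tb (n : ℕ) : ZMod p := ((fp α β) ^ n).coeff n
noncomputable def Ub (n : ℕ) : ZMod p := ((fp α β) ^ n).coeff (n + 1)

lemma G1 (n : ℕ) : Tb α β (n + 1) = β * Tb α β n + 2 * α * Ub α β n := by
  cases n with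
  | zero =>
    simp [Tb, Ub, coeff_fp_one, coeff_one]
  | succ n' =>
    have h : (fp α β) ^ (n' + 1 + 1) = fp α β * (fp α β) ^ (n' + 1) := by
      rw [← pow_succ']
    rw [Tb, h, fp_mul_coeff]
    have hpal : ((fp α β) ^ (n' + 1)).coeff n' = ((fp α β) ^ (n' + 1)).coeff (n' + 2) :=
      pal α β (by ring)
    rw [hpal]
    show α * Ub α β (n' + 1) + β * Tb α β (n' + 1) + α * Ub α β (n' + 1) = _
    ring

lemma G2 (n : ℕ) :
    ((n + 2 : ℕ) : ZMod p) * Ub α β (n + 1) =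
      ((n + 1 : ℕ) : ZMod p) * (β * Ub α β n + 2 * α * Tb α β n) := by
  have hD := derivative_pow (fp α β) (n + 1)
  have hL := coeff_derivative ((fp α β) ^ (n + 1)) (n + 1)
  rw [hD, derivative_fp] at hL
  have hR : (C ((n + 1 : ℕ) : ZMod p) * (fp α β) ^ (n + 1 - 1) *
      (C β + C (2 * α) * X)).coeff (n + 1) =
      ((n + 1 : ℕ) : ZMod p) * (β * Ub α β n + 2 * α * Tb α β n) := by
    rw [Nat.add_sub_cancel, mul_assoc, coeff_C_mul, mul_comm ((fp α β) ^ n), lp_mul_coeff]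
    rfl
  rw [hR] at hL
  calc ((n + 2 : ℕ) : ZMod p) * Ub α β (n + 1)
      = (fp α β ^ (n + 1)).coeff (n + 1 + 1) * (((n + 1 : ℕ) : ZMod p) + 1) := by
        show ((n + 2 : ℕ) : ZMod p) * (fp α β ^ (n + 1)).coeff (n + 1 + 1) = _
        push_cast
        ring
    _ = _ := hL.symm

lemma G3 (n : ℕ) :
    ((n + 2 : ℕ) : ZMod p) * Tb α β (n + 2) =
      ((2 * n + 3 : ℕ) : ZMod p) * β * Tb α β (n + 1) -
        ((n + 1 : ℕ) : ZMod p) * (β ^ 2 - 4 * α ^ 2) * Tb α β n := by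
  have hA := G1 α β (n + 1)
  have hB := G2 α β n
  have hC := G1 α β n
  push_cast at hB ⊢
  linear_combination ((n : ZMod p) + 2) * hA + 2 * α * hB - ((n : ZMod p) + 1) * β * hC

lemma Tmul (q d : ℕ) (hd : d < p) :
    Tb α β (q * p + d) = Tb α β q * Tb α β d := by
  have hsplit := fp_pow_split α β 1 q d
  rw [pow_one] at hsplit
  rw [Tb, hsplit, collapseA p (Fact.out : p.Prime).pos _ _ q d hd
    (lt_of_le_of_lt (natDegree_fp_pow_le α β d) (by omega))]
  rfl

end Fp

section Cseries
variable {p : ℕ} [Fact p.Prime] (α β : ZMod p) (e : ℕ)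

lemma hfe (hpe : p = e + 5) : fp α β * (fp α β) ^ (e + 4) = expand (ZMod p) p (fp α β) := by
  subst hpe
  rw [← poly_pow_card]
  exact (pow_succ' _ _).symm

lemma expand_coeff_mid (j : ℕ) (hj : 0 < j) (hj2 : j < p) :
    (expand (ZMod p) p (fp α β)).coeff j = 0 := by
  rw [coeff_expand (Fact.out : p.Prime).pos, if_neg]
  intro hdvd
  exact absurd (Nat.le_of_dvd hj hdvd) (by omega)

lemma expand_coeff_p : (expand (ZMod p) p (fp α β)).coeff p = β := by
  rw [coeff_expand (Fact.out : p.Prime).pos, if_pos (dvd_refl p), Nat.div_self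
    (Fact.out : p.Prime).pos, coeff_fp_one]

lemma crec (hpe : p = e + 5) (j : ℕ) (hj : j + 2 ≤ e + 4) :
    α * ((fp α β) ^ (e + 4)).coeff j + β * ((fp α β) ^ (e + 4)).coeff (j + 1) +
      α * ((fp α β) ^ (e + 4)).coeff (j + 2) = 0 := by
  rw [← fp_mul_coeff]
  rw [hfe α β e hpe]
  exact expand_coeff_mid α β j.succ.succ (by omega) (by omega)

lemma cedge (hpe : p = e + 5) : α * ((fp α β) ^ (e + 4)).coeff 1 + β * ((fp α β) ^ (e + 4)).coeff 0 = 0 := by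
  rw [← fp_mul_coeff_one, hfe α β e hpe]
  exact expand_coeff_mid α β 1 (by omega) (by omega)

lemma czero (hpe : p = e + 5) (hα : α ≠ 0) : ((fp α β) ^ (e + 4)).coeff 0 = 1 := by
  subst hpe
  rw [coeff_fp_pow_zero]
  have := ZMod.pow_card_sub_one_eq_one hα
  simpa using this

lemma ctop (hpe : p = e + 5) :
    α * ((fp α β) ^ (e + 4)).coeff (e + 5) + β * ((fp α β) ^ (e + 4)).coeff (e + 4) +
      α * ((fp α β) ^ (e + 4)).coeff (e + 3) = β := by
  have h := fp_mul_coeff α β ((fp α β) ^ (e + 4)) (e + 3)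
  rw [hfe α β e hpe] at h
  have h2 : (expand (ZMod p) p (fp α β)).coeff (e + 3 + 2) = β := by
    rw [show e + 3 + 2 = p from by omega]
    exact expand_coeff_p α β
  rw [h2] at h
  show α * ((fp α β) ^ (e + 4)).coeff (e + 3 + 2) +
      β * ((fp α β) ^ (e + 4)).coeff (e + 3 + 1) +
      α * ((fp α β) ^ (e + 4)).coeff (e + 3) = β
  linear_combination -h

lemma c3val (hpe : p = e + 5) (hα : α ≠ 0) :
    2 * α * ((fp α β) ^ (e + 4)).coeff (e + 3) =
      β * (1 - ((fp α β) ^ (e + 4)).coeff (e + 4)) := by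
  have h := ctop α β e hpe
  have hpal : ((fp α β) ^ (e + 4)).coeff (e + 5) = ((fp α β) ^ (e + 4)).coeff (e + 3) :=
    pal α β (by ring)
  rw [hpal] at h
  linear_combination h

lemma casoratian (hpe : p = e + 5) (hα : α ≠ 0) (j : ℕ) (hj : j + 2 ≤ e + 4) :
    ((fp α β) ^ (e + 4)).coeff (j + 1) ^ 2 -
      ((fp α β) ^ (e + 4)).coeff (j + 2) * ((fp α β) ^ (e + 4)).coeff j = 1 := by
  induction j with
  | zero =>
    have h0 := czero α β e hpe hα
    have h1 := cedge α β e hpe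
    have h2 : α * ((fp α β) ^ (e + 4)).coeff 0 + β * ((fp α β) ^ (e + 4)).coeff 1 +
        α * ((fp α β) ^ (e + 4)).coeff 2 = 0 := crec α β e hpe 0 (by omega)
    show ((fp α β) ^ (e + 4)).coeff 1 ^ 2 -
      ((fp α β) ^ (e + 4)).coeff 2 * ((fp α β) ^ (e + 4)).coeff 0 = 1
    apply mul_left_cancel₀ (pow_ne_zero 2 hα)
    linear_combination (α * ((fp α β) ^ (e + 4)).coeff 1) * h1 -
      (α * ((fp α β) ^ (e + 4)).coeff 0) * h2 +
      (α ^ 2 * (((fp α β) ^ (e + 4)).coeff 0 + 1)) * h0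
  | succ i ih =>
    have hih := ih (by omega)
    have hr := crec α β e hpe i (by omega)
    have hr2 : α * ((fp α β) ^ (e + 4)).coeff (i + 1) + β * ((fp α β) ^ (e + 4)).coeff (i + 2) +
        α * ((fp α β) ^ (e + 4)).coeff (i + 3) = 0 := crec α β e hpe (i + 1) (by omega)
    show ((fp α β) ^ (e + 4)).coeff (i + 2) ^ 2 -
      ((fp α β) ^ (e + 4)).coeff (i + 3) * ((fp α β) ^ (e + 4)).coeff (i + 1) = 1
    apply mul_left_cancel₀ hα
    linear_combination ((fp α β) ^ (e + 4)).coeff (i + 2) * hr -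
      ((fp α β) ^ (e + 4)).coeff (i + 1) * hr2 + α * hih

lemma tsq (hpe : p = e + 5) (hα : α ≠ 0) (hΔ : β ^ 2 - 4 * α ^ 2 ≠ 0) :
    ((fp α β) ^ (e + 4)).coeff (e + 4) ^ 2 = 1 := by
  have hC : ((fp α β) ^ (e + 4)).coeff (e + 3) ^ 2 -
      ((fp α β) ^ (e + 4)).coeff (e + 4) * ((fp α β) ^ (e + 4)).coeff (e + 2) = 1 :=
    casoratian α β e hpe hα (e + 2) (by omega)
  have hR : α * ((fp α β) ^ (e + 4)).coeff (e + 2) + β * ((fp α β) ^ (e + 4)).coeff (e + 3) +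
      α * ((fp α β) ^ (e + 4)).coeff (e + 4) = 0 :=
    crec α β e hpe (e + 2) (by omega)
  have h3 := c3val α β e hpe hα
  have key : (β ^ 2 - 4 * α ^ 2) * (1 - ((fp α β) ^ (e + 4)).coeff (e + 4) ^ 2) = 0 := by
    linear_combination (4 * α ^ 2) * hC -
      (2 * α * ((fp α β) ^ (e+4)).coeff (e+3) + β * (1 - ((fp α β) ^ (e+4)).coeff (e+4)) +
        2 * β * ((fp α β) ^ (e+4)).coeff (e+4)) * h3 +
      (4 * α * ((fp α β) ^ (e+4)).coeff (e+4)) * hR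
  rcases mul_eq_zero.mp key with h | h
  · exact absurd h hΔ
  · linear_combination -h

end Cseries

section Dseries
variable {p : ℕ} [Fact p.Prime] (α β : ZMod p) (e : ℕ)

lemma ecast (hpe : p = e + 5) : ((e : ℕ) : ZMod p) = -5 := by
  have h : ((e + 5 : ℕ) : ZMod p) = 0 := by
    rw [← hpe]
    exact ZMod.natCast_self p
  push_cast at h
  linear_combination h

lemma dE2 :
    α * ((fp α β) ^ (e + 3)).coeff (e + 1) + β * ((fp α β) ^ (e + 3)).coeff (e + 2) +
      α * ((fp α β) ^ (e + 3)).coeff (e + 3) = ((fp α β) ^ (e + 4)).coeff (e + 3) := by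
  have h := fp_mul_coeff α β ((fp α β) ^ (e + 3)) (e + 1)
  rw [← pow_succ'] at h
  have h' : ((fp α β) ^ (e + 4)).coeff (e + 3) =
      α * ((fp α β) ^ (e + 3)).coeff (e + 1) + β * ((fp α β) ^ (e + 3)).coeff (e + 2) +
        α * ((fp α β) ^ (e + 3)).coeff (e + 3) := h
  linear_combination -h'

lemma dDeriv (j : ℕ) :
    ((fp α β) ^ (e + 4)).coeff (j + 2) * ((j : ZMod p) + 2) =
      ((e : ZMod p) + 4) *
        (β * ((fp α β) ^ (e + 3)).coeff (j + 1) + 2 * α * ((fp α β) ^ (e + 3)).coeff j) := by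
  have hD := derivative_pow (fp α β) (e + 4)
  rw [derivative_fp] at hD
  have hL := coeff_derivative ((fp α β) ^ (e + 4)) (j + 1)
  rw [hD, show e + 4 - 1 = e + 3 from rfl, mul_assoc, coeff_C_mul,
    mul_comm ((fp α β) ^ (e + 3)), lp_mul_coeff] at hL
  push_cast at hL
  have hL2 : ((e : ZMod p) + 4) *
      (β * ((fp α β) ^ (e + 3)).coeff (j + 1) + 2 * α * ((fp α β) ^ (e + 3)).coeff j) =
      ((fp α β) ^ (e + 4)).coeff (j + 2) * ((j : ZMod p) + 1 + 1) := hL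
  linear_combination -hL2

lemma dE1 (hpe : p = e + 5) :
    β * ((fp α β) ^ (e + 3)).coeff (e + 3) + 2 * α * ((fp α β) ^ (e + 3)).coeff (e + 2) =
      ((fp α β) ^ (e + 4)).coeff (e + 4) := by
  have h : ((fp α β) ^ (e + 4)).coeff (e + 4) * (((e + 2 : ℕ) : ZMod p) + 2) =
      ((e : ZMod p) + 4) * (β * ((fp α β) ^ (e + 3)).coeff (e + 3) +
        2 * α * ((fp α β) ^ (e + 3)).coeff (e + 2)) := dDeriv α β e (e + 2)
  have hc : ((e : ℕ) : ZMod p) = -5 := ecast e hpe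
  push_cast [hc] at h
  linear_combination h

lemma dE3 (hpe : p = e + 5) :
    β * ((fp α β) ^ (e + 3)).coeff (e + 2) + 2 * α * ((fp α β) ^ (e + 3)).coeff (e + 1) =
      2 * ((fp α β) ^ (e + 4)).coeff (e + 3) := by
  have h : ((fp α β) ^ (e + 4)).coeff (e + 3) * (((e + 1 : ℕ) : ZMod p) + 2) =
      ((e : ZMod p) + 4) * (β * ((fp α β) ^ (e + 3)).coeff (e + 2) +
        2 * α * ((fp α β) ^ (e + 3)).coeff (e + 1)) := dDeriv α β e (e + 1)
  have hc : ((e : ℕ) : ZMod p) = -5 := ecast e hpe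
  push_cast [hc] at h
  linear_combination h

lemma Tp2val (hpe : p = e + 5) :
    (β ^ 2 - 4 * α ^ 2) * ((fp α β) ^ (e + 3)).coeff (e + 3) =
      ((fp α β) ^ (e + 4)).coeff (e + 4) * β := by
  have e1 := dE1 α β e hpe
  have e2 := dE2 α β e
  have e3 := dE3 α β e hpe
  linear_combination β * e1 - 4 * α * e2 + 2 * α * e3

lemma Dvalue (hpe : p = e + 5) (hα : α ≠ 0) :
    2 * α ^ 2 * (((fp α β) ^ (e + 3)).coeff (e + 3) - ((fp α β) ^ (e + 3)).coeff (e + 1)) =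
      β * (((fp α β) ^ (e + 4)).coeff (e + 4) - 1) := by
  have e2 := dE2 α β e
  have e3 := dE3 α β e hpe
  have e4 := c3val α β e hpe hα
  linear_combination 2 * α * e2 - 2 * α * e3 - e4

end Dseries

section SFrame
variable {p : ℕ} [Fact p.Prime] (α β : ZMod p) (e : ℕ)

def Sd (p m : ℕ) : ℕ → ℕ
  | 0 => m
  | (k+1) => Sd p m k * p + (p - 1)

lemma Sd_add_one (m k : ℕ) (hp : 1 ≤ p) : Sd p m k + 1 = (m + 1) * p ^ k := by
  induction k with
  | zero => simp [Sd]
  | succ j ih =>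
    show Sd p m j * p + (p - 1) + 1 = (m + 1) * p ^ (j + 1)
    have h : Sd p m j * p + (p - 1) + 1 = (Sd p m j + 1) * p := by
      cases p with
      | zero => omega
      | succ q => ring_nf; omega
    rw [h, ih, pow_succ]
    ring

lemma split1 (N r : ℕ) :
    (fp α β) ^ (N * p + r) = expand (ZMod p) p ((fp α β) ^ N) * (fp α β) ^ r := by
  have h := fp_pow_split α β 1 N r
  rw [pow_one] at h
  exact h

lemma Tb_one : Tb α β 1 = β := by
  rw [Tb, pow_one, coeff_fp_one]

lemma Tb_zero : Tb α β 0 = 1 := by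
  simp [Tb]

lemma Ub_zero : Ub α β 0 = 0 := by
  simp [Ub, coeff_one]

lemma Ub_eq_low (q : ℕ) : Ub α β (q + 1) = ((fp α β) ^ (q + 1)).coeff q :=
  pal α β (by ring)

lemma glead (hpe : p = e + 5) (hα : α ≠ 0) (n : ℕ) (hn : n ≤ e + 4) (hn2 : 2 * n = n + n) :
    ((fp α β) ^ n).coeff (2 * n) = α ^ n := by
  have h : ((fp α β) ^ n).coeff (2 * n) = ((fp α β) ^ n).coeff 0 := pal α β (by ring)
  rw [h, coeff_fp_pow_zero]

lemma Tb_ne (hTd : ∀ n, n < p → Tb α β n ≠ 0) : ∀ n, Tb α β n ≠ 0 := by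
  intro n
  induction n using Nat.strong_induction_on with
  | _ n ih =>
    by_cases hn : n < p
    · exact hTd n hn
    · push_neg at hn
      have hp1 : 1 < p := (Fact.out : p.Prime).one_lt
      have hmod := Nat.div_add_mod n p
      have hT := Tmul α β (n / p) (n % p) (Nat.mod_lt _ (by omega))
      have hn' : n = n / p * p + n % p := (Nat.div_add_mod' n p).symm
      rw [← hn'] at hT
      rw [hT]
      exact mul_ne_zero (ih (n / p) (Nat.div_lt_self (by omega) hp1))
        (hTd (n % p) (Nat.mod_lt _ (by omega)))

lemma Sd_split (hpe : p = e + 5) (m k : ℕ) :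
    Sd p m (k + 1) = Sd p m k * p + (e + 4) := by
  show Sd p m k * p + (p - 1) = _
  omega

lemma RA (hpe : p = e + 5) (m k : ℕ) :
    Tb α β (Sd p m (k + 1)) = Tb α β (Sd p m k) * Tb α β (e + 4) := by
  rw [Sd_split e hpe m k]
  exact Tmul α β _ _ (by omega)

lemma RB (hpe : p = e + 5) (hα : α ≠ 0) (m k : ℕ) :
    Ub α β (Sd p m (k + 1)) =
      ((fp α β) ^ (e + 4)).coeff (e + 3) * Tb α β (Sd p m k) + Ub α β (Sd p m k) := by
  have hS := Sd_split e hpe m k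
  set q := Sd p m k with hq
  have hpal : Ub α β (Sd p m (k + 1)) =
      ((fp α β) ^ (Sd p m (k + 1))).coeff (q * p + (e + 3)) := by
    rw [Ub, hS]
    exact pal α β (by ring)
  rw [hpal, hS, split1]
  cases q with
  | zero =>
    rw [pow_zero]
    have hexp : expand (ZMod p) p (1 : (ZMod p)[X]) = 1 := by simp
    rw [hexp, one_mul, Tb_zero, Ub_zero]
    show ((fp α β) ^ (e + 4)).coeff (0 * p + (e + 3)) = _
    rw [zero_mul, zero_add]
    ring
  | succ q' =>
    rw [collapseB _ _ p q' (e + 3) (Fact.out : p.Prime).pos (by omega)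
      (lt_of_le_of_lt (natDegree_fp_pow_le α β (e + 4)) (by omega))]
    have hlead : ((fp α β) ^ (e + 4)).coeff (e + 3 + p) = α ^ (e + 4) := by
      rw [show e + 3 + p = 2 * (e + 4) from by omega]
      exact glead α β e hpe hα (e + 4) (by omega) (by omega)
    have hone : α ^ (e + 4) = 1 := by
      have h := ZMod.pow_card_sub_one_eq_one hα
      rw [show p - 1 = e + 4 from by omega] at h
      exact h
    rw [hlead, hone, ← Ub_eq_low α β q']
    show Tb α β (q' + 1) * _ + Ub α β (q' + 1) * 1 = _
    ring

lemma RC (hpe : p = e + 5) (hα : α ≠ 0) (m k : ℕ) :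
    ((fp α β) ^ (Sd p m (k + 1))).coeff (Sd p m k * p + (e + 2)) =
      ((fp α β) ^ (e + 4)).coeff (e + 2) * Tb α β (Sd p m k) +
        ((fp α β) ^ (e + 4)).coeff 1 * Ub α β (Sd p m k) := by
  have hS := Sd_split e hpe m k
  set q := Sd p m k with hq
  rw [hS, split1]
  cases q with
  | zero =>
    rw [pow_zero]
    have hexp : expand (ZMod p) p (1 : (ZMod p)[X]) = 1 := by simp
    rw [hexp, one_mul, Tb_zero, Ub_zero]
    show ((fp α β) ^ (e + 4)).coeff (0 * p + (e + 2)) = _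
    rw [zero_mul, zero_add]
    ring
  | succ q' =>
    rw [collapseB _ _ p q' (e + 2) (Fact.out : p.Prime).pos (by omega)
      (lt_of_le_of_lt (natDegree_fp_pow_le α β (e + 4)) (by omega))]
    have hsec : ((fp α β) ^ (e + 4)).coeff (e + 2 + p) = ((fp α β) ^ (e + 4)).coeff 1 := by
      apply pal
      omega
    rw [hsec, ← Ub_eq_low α β q']
    show Tb α β (q' + 1) * ((fp α β) ^ (e + 4)).coeff (e + 2) +
      Ub α β (q' + 1) * ((fp α β) ^ (e + 4)).coeff 1 = _
    ring
end SFrame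

section MVal
variable {p : ℕ} [Fact p.Prime] (α β : ZMod p) (e : ℕ)

noncomputable def Mb (n : ℕ) : ZMod p := (((fp α β) ^ n) * (1 - X ^ 2)).coeff n

lemma Mb_eq (j : ℕ) :
    Mb α β (j + 2) = Tb α β (j + 2) - ((fp α β) ^ (j + 2)).coeff j := by
  rw [Mb, Tb]
  have h : ((fp α β) ^ (j + 2)) * (1 - X ^ 2) =
      (fp α β) ^ (j + 2) - X ^ 2 * (fp α β) ^ (j + 2) := by ring
  rw [h, coeff_sub, coeff_X_pow_mul]

lemma CFA (hpe : p = e + 5) (m k : ℕ) :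
    Tb α β (Sd p m k) = (Tb α β (e + 4)) ^ k * Tb α β m := by
  induction k with
  | zero => simp [Sd]
  | succ j ih =>
    rw [RA α β e hpe m j, ih]
    ring

lemma CFB (hpe : p = e + 5) (hα : α ≠ 0) (m k : ℕ) :
    2 * α * Ub α β (Sd p m k) =
      Tb α β (m + 1) - β * (Tb α β (e + 4)) ^ k * Tb α β m := by
  induction k with
  | zero =>
    show 2 * α * Ub α β m = _
    have h := G1 α β m
    rw [pow_zero]
    linear_combination -h
  | succ j ih =>
    rw [RB α β e hpe hα m j, CFA α β e hpe m j]
    have h4 := c3val α β e hpe hα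
    have ht : Tb α β (e + 4) = ((fp α β) ^ (e + 4)).coeff (e + 4) := rfl
    rw [pow_succ (Tb α β (e + 4)) j]
    linear_combination ih + ((Tb α β (e + 4)) ^ j * Tb α β m) * h4 +
      (β * (Tb α β (e + 4)) ^ j * Tb α β m) * ht

lemma MIIval (hpe : p = e + 5) (hα : α ≠ 0) (m k : ℕ) :
    2 * α ^ 2 * Mb α β (Sd p m k * p + (e + 3)) =
      β * (Tb α β (e + 4)) ^ (k + 1) * Tb α β m - Tb α β (m + 1) := by
  set q := Sd p m k with hq
  have hMb : Mb α β (q * p + (e + 3)) =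
      Tb α β (q * p + (e + 3)) - ((fp α β) ^ (q * p + (e + 3))).coeff (q * p + (e + 1)) :=
    Mb_eq α β (q * p + (e + 1))
  have hu : Tb α β (q * p + (e + 3)) = Tb α β q * ((fp α β) ^ (e + 3)).coeff (e + 3) := by
    have h := Tmul α β q (e + 3) (by omega)
    rw [h]
    rfl
  have hv : ((fp α β) ^ (q * p + (e + 3))).coeff (q * p + (e + 1)) =
      Tb α β q * ((fp α β) ^ (e + 3)).coeff (e + 1) + Ub α β q * α ^ (e + 3) := by
    rw [split1]
    cases hq2 : q with
    | zero =>
      rw [pow_zero]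
      have hexp : expand (ZMod p) p (1 : (ZMod p)[X]) = 1 := by simp
      rw [hexp, one_mul, Tb_zero, Ub_zero]
      show ((fp α β) ^ (e + 3)).coeff (0 * p + (e + 1)) = _
      rw [zero_mul, zero_add]
      ring
    | succ q' =>
      rw [collapseB _ _ p q' (e + 1) (Fact.out : p.Prime).pos (by omega)
        (lt_of_le_of_lt (natDegree_fp_pow_le α β (e + 3)) (by omega))]
      have hlead : ((fp α β) ^ (e + 3)).coeff (e + 1 + p) = α ^ (e + 3) := by
        rw [show e + 1 + p = 2 * (e + 3) from by omega]
        exact glead α β e hpe hα (e + 3) (by omega) (by omega)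
      rw [hlead, ← Ub_eq_low α β q']
      show Tb α β (q' + 1) * ((fp α β) ^ (e + 3)).coeff (e + 1) +
        Ub α β (q' + 1) * α ^ (e + 3) = _
      ring
  have hA := CFA α β e hpe m k
  have hB := CFB α β e hpe hα m k
  have hD := Dvalue α β e hpe hα
  have hone : α * α ^ (e + 3) = 1 := by
    have h := ZMod.pow_card_sub_one_eq_one hα
    rw [show p - 1 = e + 4 from by omega] at h
    rw [← h]
    ring
  have ht : ((fp α β) ^ (e + 4)).coeff (e + 4) = Tb α β (e + 4) := rfl
  rw [hMb, hu, hv, hA, pow_succ (Tb α β (e + 4)) k]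
  rw [ht] at hD
  linear_combination ((Tb α β (e + 4)) ^ k * Tb α β m) * hD -
    (α * α ^ (e + 3)) * hB - (Tb α β (m + 1) - β * (Tb α β (e + 4)) ^ k * Tb α β m) * hone

end MVal

section MIII
variable {p : ℕ} [Fact p.Prime] (α β : ZMod p) (e : ℕ)

lemma natCast_ne_zero_of_lt (j : ℕ) (hj0 : 0 < j) (hjp : j < p) : ((j : ℕ) : ZMod p) ≠ 0 := by
  rw [Ne, ZMod.natCast_eq_zero_iff]
  intro hdvd
  exact absurd (Nat.le_of_dvd hj0 hdvd) (by omega)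

lemma MIIIval (hpe : p = e + 5) (hα : α ≠ 0) (m k : ℕ) :
    2 * α ^ 2 * Mb α β (Sd p m (k + 1)) =
      β * Tb α β (m + 1) -
        (β ^ 2 - 4 * α ^ 2) * (Tb α β (e + 4)) ^ (k + 1) * Tb α β m := by
  have hS := Sd_split e hpe m k
  set q := Sd p m k with hq
  have hMb : Mb α β (Sd p m (k + 1)) = Tb α β (Sd p m (k + 1)) -
      ((fp α β) ^ (Sd p m (k + 1))).coeff (q * p + (e + 2)) := by
    rw [hS]
    exact Mb_eq α β (q * p + (e + 2))
  have hC := RC α β e hpe hα m k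
  have hA' := CFA α β e hpe m (k + 1)
  have hA := CFA α β e hpe m k
  have hB := CFB α β e hpe hα m k
  have hc1 : α * ((fp α β) ^ (e + 4)).coeff 1 = -β := by
    have h1 := cedge α β e hpe
    have h0 := czero α β e hpe hα
    linear_combination h1 - β * h0
  have hrec := crec α β e hpe (e + 2) (by omega)
  have h4 := c3val α β e hpe hα
  have ht : ((fp α β) ^ (e + 4)).coeff (e + 4) = Tb α β (e + 4) := rfl
  rw [ht] at hrec h4
  rw [hMb, hC, hA', hA, pow_succ (Tb α β (e + 4)) k]
  linear_combination (-2 * α * (Tb α β (e + 4)) ^ k * Tb α β m) * hrec +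
    (β * (Tb α β (e + 4)) ^ k * Tb α β m) * h4 +
    (-2 * α * Ub α β q) * hc1 + β * hB

lemma DUAL (hpe : p = e + 5) (hα : α ≠ 0) : ∀ m, ∀ w, m + w = e + 4 →
    (β ^ 2 - 4 * α ^ 2) ^ m * Tb α β w = Tb α β (e + 4) * Tb α β m := by
  intro m
  induction m using Nat.strong_induction_on with
  | _ m ih =>
    intro w hmw
    rcases m with _ | _ | m'
    · obtain rfl : w = e + 4 := by omega
      rw [pow_zero, Tb_zero]
      ring
    · obtain rfl : w = e + 3 := by omega
      have h : (β ^ 2 - 4 * α ^ 2) * Tb α β (e + 3) = Tb α β (e + 4) * β :=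
        Tp2val α β e hpe
      rw [pow_one, Tb_one]
      exact h
    · have h1 := ih (m' + 1) (by omega) (w + 1) (by omega)
      have h0 := ih m' (by omega) (w + 2) (by omega)
      have hG3w := G3 α β w
      have hG3m := G3 α β m'
      push_cast at hG3w hG3m
      have hcast := congrArg (Nat.cast : ℕ → ZMod p) hmw
      have hec := ecast (p := p) e hpe
      push_cast at hcast
      have hw : ((w : ℕ) : ZMod p) = -3 - ((m' : ℕ) : ZMod p) := by
        linear_combination hcast + hec
      rw [hw] at hG3w
      have hne : ((m' : ZMod p) + 2) ≠ 0 := by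
        have h := natCast_ne_zero_of_lt (p := p) (m' + 2) (by omega) (by omega)
        push_cast at h
        exact h
      apply mul_left_cancel₀ hne
      linear_combination (-(β ^ 2 - 4 * α ^ 2) ^ (m' + 1)) * hG3w - Tb α β (e + 4) * hG3m +
        ((2 * (m' : ZMod p) + 3) * β) * h1 +
        (-((m' : ZMod p) + 1) * (β ^ 2 - 4 * α ^ 2)) * h0

end MIII

section Top
variable {p : ℕ} [Fact p.Prime] (α β : ZMod p)

lemma MTOP (K N r : ℕ) (hr : r + 2 < p ^ K) :
    Mb α β (N * p ^ K + r) = Tb α β N * Mb α β r := by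
  have hPpos : 0 < p ^ K := pow_pos (Fact.out : p.Prime).pos _
  have hbound : (((fp α β) ^ r) * (1 - X ^ 2)).natDegree < p ^ K + r := by
    refine lt_of_le_of_lt (natDegree_mul_le.trans ?_) (show 2 * r + 2 < p ^ K + r by omega)
    have h1 : (1 - X ^ 2 : (ZMod p)[X]).natDegree ≤ 2 := by
      refine (natDegree_sub_le _ _).trans ?_
      simp
    have h2 := natDegree_fp_pow_le α β r
    omega
  rw [Mb, fp_pow_split α β K N r, mul_assoc,
    collapseA (p ^ K) hPpos _ _ N r (by omega) hbound]
  rfl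

end Top

lemma zmod3aux (x y : ZMod 3) (hx : x ≠ 0) (hy : y ≠ 0) : y ^ 2 - 4 * x ^ 2 = 0 := by
  revert hx hy
  revert x y
  decide

end Stmt11Aux


open Stmt11Aux in
theorem stmt11 (p : ℕ) (hp : p.Prime) (hp2 : 2 < p) (a b : ℤ)
    (ha : ¬ (p : ℤ) ∣ a) (hd : ¬ (p : ℤ) ∣ (b ^ 2 - 4 * a ^ 2))
    (hT : ∀ n < p, ¬ (p : ℤ) ∣ genTrinomial a b n) :
    -- (i)
    (∀ N n₀ : ℕ, n₀ < p - 2 →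
      ((p : ℤ) ∣ genMotzkin a b (N * p + n₀) ↔ (p : ℤ) ∣ genMotzkin a b n₀)) ∧
    -- (ii)
    (∀ N k m : ℕ, m ≤ p - 2 →
      ((p : ℤ) ∣ genMotzkin a b (N * p ^ (k + 2) + m * p ^ (k + 1) + (p ^ (k + 1) - 2)) ↔
        b * genTrinomial a b m ≡
          (genTrinomial a b (p - 1)) ^ (k + 1) * genTrinomial a b (m + 1) [ZMOD (p : ℤ)])) ∧
    -- (iii)
    (∀ N k m : ℕ, m ≤ p - 2 →
      ((p : ℤ) ∣ genMotzkin a b (N * p ^ (k + 2) + m * p ^ (k + 1) + (p ^ (k + 1) - 1)) ↔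
        b * genTrinomial a b (p - 2 - m) ≡
          (genTrinomial a b (p - 1)) ^ (k + 1) * genTrinomial a b (p - 2 - m + 1)
          [ZMOD (p : ℤ)])) := by
  haveI hFact : Fact p.Prime := ⟨hp⟩
  set α : ZMod p := ((a : ℤ) : ZMod p) with hαdef
  set β : ZMod p := ((b : ℤ) : ZMod p) with hβdef
  have hmap : (C a + C b * X + C a * X ^ 2 : ℤ[X]).map (Int.castRingHom (ZMod p)) = fp α β := by
    rw [Polynomial.map_add, Polynomial.map_add, Polynomial.map_mul, Polynomial.map_mul,
      Polynomial.map_pow, Polynomial.map_C, Polynomial.map_C, Polynomial.map_X]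
    rfl
  have hTcast : ∀ n, ((genTrinomial a b n : ℤ) : ZMod p) = Tb α β n := by
    intro n
    rw [genTrinomial, Tb, ← hmap, ← Polynomial.map_pow, Polynomial.coeff_map]
    rfl
  have hMcast : ∀ n, ((genMotzkin a b n : ℤ) : ZMod p) = Mb α β n := by
    intro n
    have h : (((C a + C b * X + C a * X ^ 2) ^ n) * (1 - X ^ 2) : ℤ[X]).map
        (Int.castRingHom (ZMod p)) = (fp α β) ^ n * (1 - X ^ 2) := by
      rw [Polynomial.map_mul, Polynomial.map_pow, hmap]
      simp
    rw [genMotzkin, Mb, ← h, Polynomial.coeff_map]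
    rfl
  have hdvdM : ∀ n, ((p : ℤ) ∣ genMotzkin a b n ↔ Mb α β n = 0) := fun n => by
    rw [← ZMod.intCast_zmod_eq_zero_iff_dvd, hMcast]
  have hα : α ≠ 0 := by
    rw [hαdef, Ne, ZMod.intCast_zmod_eq_zero_iff_dvd]
    exact ha
  have hTd : ∀ n, n < p → Tb α β n ≠ 0 := by
    intro n hn
    have h := hT n hn
    rw [← ZMod.intCast_zmod_eq_zero_iff_dvd, hTcast] at h
    exact h
  have hβ : β ≠ 0 := by
    have h := hTd 1 (by omega)
    rwa [Tb_one] at h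
  have hΔ : β ^ 2 - 4 * α ^ 2 ≠ 0 := by
    intro hc
    apply hd
    rw [← ZMod.intCast_zmod_eq_zero_iff_dvd]
    push_cast
    exact hc
  have hp3 : p ≠ 3 := by
    intro h3
    apply hΔ
    subst h3
    exact zmod3aux α β hα hβ
  have hp5 : 5 ≤ p := by
    have hp4 : p ≠ 4 := by
      intro h4
      rw [h4] at hp
      exact absurd hp (by decide)
    omega
  obtain ⟨e, hpe⟩ : ∃ e, p = e + 5 := ⟨p - 5, by omega⟩
  set t : ZMod p := Tb α β (e + 4) with htdef
  have htsq : t ^ 2 = 1 := tsq α β e hpe hα hΔ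
  have hTball := Tb_ne α β hTd
  have h2α : (2 * α ^ 2 : ZMod p) ≠ 0 := by
    have h2 : ((2 : ℕ) : ZMod p) ≠ 0 := natCast_ne_zero_of_lt 2 (by omega) (by omega)
    have h2' : (2 : ZMod p) ≠ 0 := by exact_mod_cast h2
    exact mul_ne_zero h2' (pow_ne_zero 2 hα)
  have hTp1 : ((genTrinomial a b (p - 1) : ℤ) : ZMod p) = t := by
    rw [show p - 1 = e + 4 from by omega]
    exact hTcast (e + 4)
  have htt : ∀ k : ℕ, t ^ (k + 1) * t ^ (k + 1) = 1 := by
    intro k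
    have h : t ^ (k + 1) * t ^ (k + 1) = (t ^ 2) ^ (k + 1) := by ring
    rw [h, htsq, one_pow]
  refine ⟨?_, ?_, ?_⟩
  · -- part (i)
    intro N n₀ hn₀
    have hsplit : Mb α β (N * p + n₀) = Tb α β N * Mb α β n₀ := by
      have h := MTOP α β 1 N n₀ (by rw [pow_one]; omega)
      rwa [pow_one] at h
    rw [hdvdM, hdvdM, hsplit]
    constructor
    · intro h
      rcases mul_eq_zero.mp h with h | h
      · exact absurd h (hTball N)
      · exact h
    · intro h
      rw [h, mul_zero]
  · -- part (ii)
    intro N k m hm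
    have hppos : 1 ≤ p := by omega
    have key : Sd p m k * p + p = m * p ^ (k + 1) + p ^ (k + 1) := by
      have h1 := Sd_add_one (p := p) m k hppos
      calc Sd p m k * p + p = (Sd p m k + 1) * p := by ring
        _ = (m + 1) * p ^ k * p := by rw [h1]
        _ = m * p ^ (k + 1) + p ^ (k + 1) := by rw [pow_succ]; ring
    have hP2 : 2 ≤ p ^ (k + 1) := by
      have := Nat.one_lt_pow (show k + 1 ≠ 0 from by omega) (show 1 < p from by omega)
      omega
    have hidx : N * p ^ (k + 2) + m * p ^ (k + 1) + (p ^ (k + 1) - 2) =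
        N * p ^ (k + 2) + (Sd p m k * p + (e + 3)) := by omega
    have hrb : (Sd p m k * p + (e + 3)) + 2 < p ^ (k + 2) := by
      have hplt : (m + 1) * p ^ (k + 1) < p * p ^ (k + 1) :=
        mul_lt_mul_of_pos_right (by omega) (by positivity)
      have h2 : p * p ^ (k + 1) = p ^ (k + 2) := by rw [pow_succ]; ring
      have h3 : m * p ^ (k + 1) + p ^ (k + 1) = (m + 1) * p ^ (k + 1) := by ring
      omega
    rw [hidx, hdvdM, MTOP α β (k + 2) N _ hrb]
    have hMII := MIIval α β e hpe hα m k
    have hiff1 : Tb α β N * Mb α β (Sd p m k * p + (e + 3)) = 0 ↔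
        Mb α β (Sd p m k * p + (e + 3)) = 0 :=
      ⟨fun h => (mul_eq_zero.mp h).resolve_left (hTball N), fun h => by rw [h, mul_zero]⟩
    rw [hiff1]
    have hiff2 : Mb α β (Sd p m k * p + (e + 3)) = 0 ↔
        β * t ^ (k + 1) * Tb α β m - Tb α β (m + 1) = 0 := by
      constructor
      · intro h
        rw [← hMII, h, mul_zero]
      · intro h
        rw [← hMII] at h
        exact (mul_eq_zero.mp h).resolve_left h2α
    rw [hiff2]
    have htarget : (b * genTrinomial a b m ≡
        (genTrinomial a b (p - 1)) ^ (k + 1) * genTrinomial a b (m + 1) [ZMOD (p : ℤ)]) ↔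
        β * Tb α β m = t ^ (k + 1) * Tb α β (m + 1) := by
      rw [← ZMod.intCast_eq_intCast_iff]
      push_cast
      rw [hTp1, hTcast, hTcast, ← hβdef]
    rw [htarget]
    constructor
    · intro h
      have h' : β * t ^ (k + 1) * Tb α β m = Tb α β (m + 1) := by linear_combination h
      linear_combination t ^ (k + 1) * h' - β * Tb α β m * htt k
    · intro h
      linear_combination t ^ (k + 1) * h + Tb α β (m + 1) * htt k
  · -- part (iii)
    intro N k m hm
    have hppos : 1 ≤ p := by omega
    have h1 := Sd_add_one (p := p) m (k + 1) hppos
    have hP2 : 2 ≤ p ^ (k + 1) := by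
      have := Nat.one_lt_pow (show k + 1 ≠ 0 from by omega) (show 1 < p from by omega)
      omega
    have h3 : m * p ^ (k + 1) + p ^ (k + 1) = (m + 1) * p ^ (k + 1) := by ring
    have hidx : N * p ^ (k + 2) + m * p ^ (k + 1) + (p ^ (k + 1) - 1) =
        N * p ^ (k + 2) + Sd p m (k + 1) := by omega
    have hrb : Sd p m (k + 1) + 2 < p ^ (k + 2) := by
      have hA : (m + 1) * p ^ (k + 1) ≤ (e + 4) * p ^ (k + 1) :=
        Nat.mul_le_mul_right _ (by omega)
      have hB : (e + 5) * p ^ (k + 1) = p * p ^ (k + 1) := by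
        exact (congrArg (· * p ^ (k + 1)) hpe).symm
      have hC : p * p ^ (k + 1) = p ^ (k + 2) := by rw [pow_succ]; ring
      have hE : (e + 4) * p ^ (k + 1) + p ^ (k + 1) = (e + 5) * p ^ (k + 1) := by ring
      omega
    rw [hidx, hdvdM, MTOP α β (k + 2) N _ hrb]
    have hMIII := MIIIval α β e hpe hα m k
    have hiff1 : Tb α β N * Mb α β (Sd p m (k + 1)) = 0 ↔ Mb α β (Sd p m (k + 1)) = 0 :=
      ⟨fun h => (mul_eq_zero.mp h).resolve_left (hTball N), fun h => by rw [h, mul_zero]⟩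
    rw [hiff1]
    have hiff2 : Mb α β (Sd p m (k + 1)) = 0 ↔
        β * Tb α β (m + 1) - (β ^ 2 - 4 * α ^ 2) * t ^ (k + 1) * Tb α β m = 0 := by
      constructor
      · intro h
        rw [← hMIII, h, mul_zero]
      · intro h
        rw [← hMIII] at h
        exact (mul_eq_zero.mp h).resolve_left h2α
    rw [hiff2]
    have htarget : (b * genTrinomial a b (p - 2 - m) ≡
        (genTrinomial a b (p - 1)) ^ (k + 1) * genTrinomial a b (p - 2 - m + 1)
          [ZMOD (p : ℤ)]) ↔
        β * Tb α β (p - 2 - m) = t ^ (k + 1) * Tb α β (p - 2 - m + 1) := by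
      rw [← ZMod.intCast_eq_intCast_iff]
      push_cast
      rw [hTp1, hTcast, hTcast, ← hβdef]
    rw [htarget]
    have hd1 : (β ^ 2 - 4 * α ^ 2) ^ (m + 1) * Tb α β (p - 2 - m) = t * Tb α β (m + 1) :=
      DUAL α β e hpe hα (m + 1) (p - 2 - m) (by omega)
    have hd0 : (β ^ 2 - 4 * α ^ 2) ^ m * Tb α β (p - 2 - m + 1) = t * Tb α β m :=
      DUAL α β e hpe hα m (p - 2 - m + 1) (by omega)
    have hkey : (t * (β ^ 2 - 4 * α ^ 2) ^ (m + 1)) *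
        (β * Tb α β (p - 2 - m) - t ^ (k + 1) * Tb α β (p - 2 - m + 1)) =
        β * Tb α β (m + 1) - (β ^ 2 - 4 * α ^ 2) * t ^ (k + 1) * Tb α β m := by
      linear_combination (β * t) * hd1 - t ^ (k + 2) * (β ^ 2 - 4 * α ^ 2) * hd0 +
        (β * Tb α β (m + 1) - (β ^ 2 - 4 * α ^ 2) * t ^ (k + 1) * Tb α β m) * htsq
    have hne' : t * (β ^ 2 - 4 * α ^ 2) ^ (m + 1) ≠ 0 := by
      have htne : t ≠ 0 := by
        intro h
        rw [h] at htsq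
        simp at htsq
      exact mul_ne_zero htne (pow_ne_zero _ hΔ)
    constructor
    · intro h
      have h0 : (t * (β ^ 2 - 4 * α ^ 2) ^ (m + 1)) *
          (β * Tb α β (p - 2 - m) - t ^ (k + 1) * Tb α β (p - 2 - m + 1)) = 0 := by
        rw [hkey]
        exact h
      have := (mul_eq_zero.mp h0).resolve_left hne'
      linear_combination this
    · intro h
      have hdiff : β * Tb α β (p - 2 - m) - t ^ (k + 1) * Tb α β (p - 2 - m + 1) = 0 := by
        linear_combination h
      linear_combination -hkey + (t * (β ^ 2 - 4 * α ^ 2) ^ (m + 1)) * hdiff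
end

section
/- Define the Riordan numbers R_n as the coefficient of X^n in the polynomial ((1 + X + X^2)^n · (1 − X) : ℤ[X]) (sequence A005043, the constant term of (X^{-1} + 1 + X)^n (1 − X)), so that 2R_n = 3T_n − T_{n+1} for all n. Let p > 2 be a prime such that p does not divide the central trinomial coefficient T_n for any n < p. Then the natural density of {n ∈ ℕ : p ∣ R_n} exists and equals ( |{m < p−1 : 3T_m ≡ T_{p−1}·T_{m+1} (mod p)}| + p·|{m < p−1 : 3T_m ≡ T_{m+1} (mod p)}| ) / ((p−1)(p+1)); moreover this density is at least 1/(p−1). -/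
open Polynomial Filter

/-- The central trinomial coefficient `T_n`:
the coefficient of `X^n` in `(1 + X + X^2)^n`. -/
noncomputable def centralTrinomial (n : ℕ) : ℤ :=
  ((1 + X + X ^ 2 : Polynomial ℤ) ^ n).coeff n

/-- The Riordan numbers (A005043): the coefficient of X^n in (1+X+X^2)^n · (1-X)
(the constant term of (X⁻¹+1+X)^n (1-X)). -/
noncomputable def riordan (n : ℕ) : ℤ :=
  (((1 + X + X ^ 2 : Polynomial ℤ) ^ n) * (1 - X)).coeff n

section Palin
variable {R : Type*} [CommRing R]

lemma coeff_mul_q (f : R[X]) (k : ℕ) :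
    (f * (1 + X + X ^ 2)).coeff (k + 2) = f.coeff (k + 2) + f.coeff (k + 1) + f.coeff k := by
  rw [mul_add, mul_add, mul_one, coeff_add, coeff_add, sq, ← mul_assoc]
  rw [show k + 2 = (k + 1) + 1 from rfl, coeff_mul_X, coeff_mul_X, coeff_mul_X]

lemma coeff_mul_q_zero (f : R[X]) : (f * (1 + X + X ^ 2)).coeff 0 = f.coeff 0 := by
  rw [mul_add, mul_add, mul_one, coeff_add, coeff_add, sq, ← mul_assoc]
  simp [coeff_mul_X_zero]

lemma coeff_mul_q_one (f : R[X]) : (f * (1 + X + X ^ 2)).coeff 1 = f.coeff 1 + f.coeff 0 := by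
  rw [mul_add, mul_add, mul_one, coeff_add, coeff_add, sq, ← mul_assoc]
  rw [show (1:ℕ) = 0 + 1 from rfl, coeff_mul_X]
  simp [coeff_mul_X_zero]

lemma natDegree_q : (1 + X + X ^ 2 : R[X]).natDegree ≤ 2 := by
  compute_degree

lemma natDegree_q_pow (n : ℕ) : ((1 + X + X ^ 2 : R[X]) ^ n).natDegree ≤ 2 * n := by
  refine natDegree_pow_le.trans ?_
  rw [mul_comm]
  exact Nat.mul_le_mul_right n natDegree_q

lemma reflect_q : reflect 2 (1 + X + X ^ 2 : R[X]) = 1 + X + X ^ 2 := by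
  have h0 : (1 : R[X]) = C 1 := by simp
  have : reflect 2 (1 + X + X ^ 2 : R[X])
      = reflect 2 (C 1 : R[X]) + reflect 2 (X ^ 1 : R[X]) + reflect 2 (X ^ 2 : R[X]) := by
    rw [← reflect_add, ← reflect_add, pow_one, ← h0]
  rw [this, reflect_C, reflect_monomial, reflect_monomial]
  have h1 : revAt 2 1 = 1 := by decide
  have h2 : revAt 2 2 = 0 := by decide
  rw [h1, h2, C_1]
  ring

lemma reflect_q_pow (n : ℕ) :
    reflect (2 * n) ((1 + X + X ^ 2 : R[X]) ^ n) = (1 + X + X ^ 2) ^ n := by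
  induction n with
  | zero => simpa using reflect_C (1 : R) 0
  | succ n ih =>
      have : (1 + X + X ^ 2 : R[X]) ^ (n + 1) = (1 + X + X ^ 2) ^ n * (1 + X + X ^ 2) := pow_succ _ _
      rw [this, show 2 * (n + 1) = 2 * n + 2 by ring,
        reflect_mul _ _ (natDegree_q_pow n) natDegree_q, ih, reflect_q]

lemma palin (n k : ℕ) (hk : k ≤ 2 * n) :
    ((1 + X + X ^ 2 : R[X]) ^ n).coeff k = ((1 + X + X ^ 2 : R[X]) ^ n).coeff (2 * n - k) := by
  conv_lhs => rw [← reflect_q_pow n, coeff_reflect, revAt_le hk]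

end Palin

lemma two_riordan (n : ℕ) : 2 * riordan n = 3 * centralTrinomial n - centralTrinomial (n + 1) := by
  rcases n with _ | m
  · simp [riordan, centralTrinomial]
    norm_num [coeff_one, coeff_X]
  · set P : Polynomial ℤ := (1 + X + X ^ 2) ^ (m + 1) with hP
    have hco : centralTrinomial (m + 1 + 1) = P.coeff (m + 2) + P.coeff (m + 1) + P.coeff m := by
      rw [centralTrinomial, pow_succ, show m + 1 + 1 = m + 2 from rfl, coeff_mul_q]
    have hpal : P.coeff (m + 2) = P.coeff m := by
      have := palin (R := ℤ) (m + 1) (m + 2) (by omega)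
      rw [show 2 * (m + 1) - (m + 2) = m by omega] at this
      simpa [hP] using this
    have hr : riordan (m + 1) = P.coeff (m + 1) - P.coeff m := by
      rw [riordan, mul_sub, mul_one, coeff_sub, coeff_mul_X, hP]
    rw [centralTrinomial, ← hP, hco, hr, hpal]
    ring

noncomputable def tz (p : ℕ) (n : ℕ) : ZMod p := ((1 + X + X ^ 2 : (ZMod p)[X]) ^ n).coeff n

section P
variable {p : ℕ} [hp : Fact p.Prime]

lemma q_pow_p : (1 + X + X ^ 2 : (ZMod p)[X]) ^ p = expand (ZMod p) p (1 + X + X ^ 2) := by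
  have := Polynomial.map_frobenius_expand p (1 + X + X ^ 2 : (ZMod p)[X])
  rw [ZMod.frobenius_zmod, Polynomial.map_id] at this
  exact this.symm

lemma q_pow_mul_p (a : ℕ) :
    (1 + X + X ^ 2 : (ZMod p)[X]) ^ (a * p) = expand (ZMod p) p ((1 + X + X ^ 2) ^ a) := by
  rw [mul_comm, pow_mul, q_pow_p, ← map_pow]

lemma tz_lucas {a b : ℕ} (hb : b < p) : tz p (a * p + b) = tz p a * tz p b := by
  have hp0 : 0 < p := hp.out.pos
  unfold tz
  rw [pow_add, q_pow_mul_p, coeff_mul]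
  rw [Finset.sum_eq_single (a * p, b)]
  · rw [coeff_expand hp0]
    simp [Nat.mul_div_cancel _ hp0]
  · rintro ⟨i, j⟩ hmem hne
    rw [Finset.HasAntidiagonal.mem_antidiagonal] at hmem
    rw [coeff_expand hp0]
    by_cases hdvd : p ∣ i
    · obtain ⟨c, rfl⟩ := hdvd
      rw [if_pos (dvd_mul_right p c)]
      have hmc : p * c + j = a * p + b := hmem
      have hac : a * p = p * a := mul_comm a p
      have hca : c ≤ a := by nlinarith
      rcases Nat.lt_or_ge c a with hlt | hge
      · have hj : 2 * b < j := by nlinarith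
        rw [Polynomial.coeff_eq_zero_of_natDegree_lt (lt_of_le_of_lt (natDegree_q_pow b) hj)]
        ring
      · have hce : c = a := le_antisymm hca hge
        subst hce
        exfalso; apply hne
        have hjb : j = b := by omega
        rw [hjb, mul_comm]
    · simp [hdvd]
  · intro h
    exfalso; exact h (Finset.HasAntidiagonal.mem_antidiagonal.2 rfl)

end P

section P2
variable {p : ℕ} [hp : Fact p.Prime]

lemma q_pow_p_explicit : (1 + X + X ^ 2 : (ZMod p)[X]) ^ p = 1 + X ^ p + (X ^ p) ^ 2 := by
  rw [q_pow_p]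
  simp [map_add, map_one, map_pow]

lemma coeff_q_pow_p_eq_zero {k : ℕ} (h1 : 1 ≤ k) (h2 : k ≤ p - 1) :
    ((1 + X + X ^ 2 : (ZMod p)[X]) ^ p).coeff k = 0 := by
  have hp2 : 2 ≤ p := hp.out.two_le
  rw [q_pow_p_explicit, ← pow_mul]
  rw [coeff_add, coeff_add, coeff_one, coeff_X_pow, coeff_X_pow]
  have : k ≠ 0 := by omega
  have : k ≠ p := by omega
  have : k ≠ p * 2 := by omega
  simp_all

/-- pattern for coefficients of (1+X+X^2)^(p-1) -/
noncomputable def pat1 (p k : ℕ) : ZMod p :=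
  if k % 3 = 0 then 1 else if k % 3 = 1 then -1 else 0

lemma coeff_F (hp2 : 2 < p) : ∀ k, k ≤ p - 1 →
    ((1 + X + X ^ 2 : (ZMod p)[X]) ^ (p - 1)).coeff k = pat1 p k := by
  have hps : p - 1 + 1 = p := Nat.succ_pred_eq_of_pos hp.out.pos
  set F : (ZMod p)[X] := (1 + X + X ^ 2) ^ (p - 1) with hF
  have hFq : F * (1 + X + X ^ 2) = (1 + X + X ^ 2) ^ p := by
    rw [hF, ← pow_succ, hps]
  intro k
  induction k using Nat.strong_induction_on with
  | _ k ih =>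
    match k with
    | 0 =>
      intro _
      have h0 : (F * (1 + X + X ^ 2)).coeff 0 = F.coeff 0 := coeff_mul_q_zero F
      rw [hFq] at h0
      have : ((1 + X + X ^ 2 : (ZMod p)[X]) ^ p).coeff 0 = 1 := by
        rw [q_pow_p_explicit, ← pow_mul]
        rw [coeff_add, coeff_add, coeff_one, coeff_X_pow, coeff_X_pow]
        have h1 : p ≠ 0 := hp.out.ne_zero
        have h2 : p * 2 ≠ 0 := by positivity
        simp_all [Ne.symm h1]
      rw [this] at h0
      rw [← h0]
      simp [pat1]
    | 1 =>
      intro hk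
      have h0 : F.coeff 0 = pat1 p 0 := ih 0 (by omega) (by omega)
      have h1 : (F * (1 + X + X ^ 2)).coeff 1 = F.coeff 1 + F.coeff 0 := coeff_mul_q_one F
      rw [hFq, coeff_q_pow_p_eq_zero le_rfl hk] at h1
      have : F.coeff 1 = - F.coeff 0 := by linear_combination -h1
      rw [this, h0]
      simp [pat1]
    | (j+2) =>
      intro hk
      have hj1 : F.coeff (j+1) = pat1 p (j+1) := ih (j+1) (by omega) (by omega)
      have hj0 : F.coeff j = pat1 p j := ih j (by omega) (by omega)
      have h1 : (F * (1 + X + X ^ 2)).coeff (j+2) = F.coeff (j+2) + F.coeff (j+1) + F.coeff j :=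
        coeff_mul_q F j
      rw [hFq, coeff_q_pow_p_eq_zero (by omega) hk] at h1
      have he : F.coeff (j+2) = -(pat1 p (j+1) + pat1 p j) := by
        rw [← hj1, ← hj0]; linear_combination -h1
      rw [he]
      have h3 := Nat.mod_lt j (show 0 < 3 by norm_num)
      unfold pat1
      have e1 : (j+1) % 3 = (j % 3 + 1) % 3 := by omega
      have e2 : (j+2) % 3 = (j % 3 + 2) % 3 := by omega
      interval_cases h : j % 3 <;> simp [e1, e2, h] <;> ring
end P2

section P3
variable {p : ℕ} [hp : Fact p.Prime]

/-- pattern for coefficients of (1+X+X^2)^(p-2) -/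
noncomputable def pat2 (p k : ℕ) : ZMod p :=
  ((k / 3 + 1 : ℕ) : ZMod p) * (if k % 3 = 1 then -2 else 1)

lemma coeff_G (hp2 : 2 < p) : ∀ k, k ≤ p - 1 →
    ((1 + X + X ^ 2 : (ZMod p)[X]) ^ (p - 2)).coeff k = pat2 p k := by
  set F : (ZMod p)[X] := (1 + X + X ^ 2) ^ (p - 1) with hF
  set G : (ZMod p)[X] := (1 + X + X ^ 2) ^ (p - 2) with hG
  have hGq : G * (1 + X + X ^ 2) = F := by
    rw [hG, hF, ← pow_succ, show p - 2 + 1 = p - 1 by omega]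
  intro k
  induction k using Nat.strong_induction_on with
  | _ k ih =>
    match k with
    | 0 =>
      intro hk
      have h0 : (G * (1 + X + X ^ 2)).coeff 0 = G.coeff 0 := coeff_mul_q_zero G
      rw [hGq, coeff_F hp2 0 (by omega)] at h0
      rw [← h0]
      simp [pat1, pat2]
    | 1 =>
      intro hk
      have h0 : G.coeff 0 = pat2 p 0 := ih 0 (by omega) (by omega)
      have h1 : (G * (1 + X + X ^ 2)).coeff 1 = G.coeff 1 + G.coeff 0 := coeff_mul_q_one G
      rw [hGq, coeff_F hp2 1 hk] at h1
      have : G.coeff 1 = pat1 p 1 - G.coeff 0 := by linear_combination -h1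
      rw [this, h0]
      simp [pat1, pat2]
      ring
    | (j+2) =>
      intro hk
      have hj1 : G.coeff (j+1) = pat2 p (j+1) := ih (j+1) (by omega) (by omega)
      have hj0 : G.coeff j = pat2 p j := ih j (by omega) (by omega)
      have h1 : (G * (1 + X + X ^ 2)).coeff (j+2) = G.coeff (j+2) + G.coeff (j+1) + G.coeff j :=
        coeff_mul_q G j
      rw [hGq, coeff_F hp2 (j+2) hk] at h1
      have he : G.coeff (j+2) = pat1 p (j+2) - (pat2 p (j+1) + pat2 p j) := by
        rw [← hj1, ← hj0]; linear_combination -h1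
      rw [he]
      have h3 := Nat.mod_lt j (show 0 < 3 by norm_num)
      unfold pat1 pat2
      have e1 : (j+1) % 3 = (j % 3 + 1) % 3 := by omega
      have e2 : (j+2) % 3 = (j % 3 + 2) % 3 := by omega
      interval_cases h : j % 3
      · have d1 : (j+1)/3 = j/3 := by omega
        have d2 : (j+2)/3 = j/3 := by omega
        simp only [e1, e2, h, d1, d2]
        norm_num
        push_cast
        ring
      · have d1 : (j+1)/3 = j/3 := by omega
        have d2 : (j+2)/3 = j/3 + 1 := by omega
        simp only [e1, e2, h, d1, d2]
        norm_num
        push_cast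
        ring
      · have d1 : (j+1)/3 = j/3 + 1 := by omega
        have d2 : (j+2)/3 = j/3 + 1 := by omega
        simp only [e1, e2, h, d1, d2]
        norm_num
        push_cast
        ring
end P3

section P4
variable {p : ℕ} [hp : Fact p.Prime]

lemma tz_cast (n : ℕ) : ((centralTrinomial n : ℤ) : ZMod p) = tz p n := by
  unfold centralTrinomial tz
  have h := Polynomial.coeff_map (p := ((1 + X + X ^ 2 : Polynomial ℤ) ^ n))
    (Int.castRingHom (ZMod p)) n
  simp only [Polynomial.map_pow, Polynomial.map_add, Polynomial.map_one, Polynomial.map_pow,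
    Polynomial.map_X, eq_intCast, Int.coe_castRingHom] at h
  exact h.symm

variable (hT : ∀ n < p, ¬ (p : ℤ) ∣ centralTrinomial n)
include hT

lemma tz_ne_zero_of_lt {n : ℕ} (hn : n < p) : tz p n ≠ 0 := by
  rw [← tz_cast]
  simpa [ZMod.intCast_zmod_eq_zero_iff_dvd] using hT n hn

lemma tz_ne_zero (n : ℕ) : tz p n ≠ 0 := by
  induction n using Nat.strong_induction_on with
  | _ n ih =>
    rcases Nat.lt_or_ge n p with h | h
    · exact tz_ne_zero_of_lt hT h
    · have hp1 : 1 < p := hp.out.one_lt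
      have hd : n / p * p + n % p = n := Nat.div_add_mod' n p
      have h1 := tz_lucas (p := p) (a := n / p) (b := n % p) (Nat.mod_lt n hp.out.pos)
      rw [hd] at h1
      rw [h1]
      exact mul_ne_zero
        (ih (n / p) (Nat.div_lt_self (by omega) hp1))
        (ih (n % p) (lt_of_lt_of_le (Nat.mod_lt n (by omega)) h))

omit hT in
lemma tz_pm1 (hp2 : 2 < p) : tz p (p - 1) = pat1 p (p - 1) := by
  unfold tz
  exact coeff_F hp2 (p - 1) le_rfl

lemma p_mod_three (hp2 : 2 < p) : (p - 1) % 3 ≠ 2 := by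
  intro h
  apply tz_ne_zero hT (p - 1)
  rw [tz_pm1 hp2]
  simp [pat1, h]

lemma tz_pm1_sq (hp2 : 2 < p) : tz p (p - 1) ^ 2 = 1 := by
  rw [tz_pm1 hp2]
  have := p_mod_three hT hp2
  unfold pat1
  have h3 := Nat.mod_lt (p-1) (show 0 < 3 by norm_num)
  interval_cases h : (p-1) % 3 <;> simp_all <;> ring

lemma tz_pm1_cases (hp2 : 2 < p) : tz p (p - 1) = 1 ∨ tz p (p - 1) = -1 := by
  rw [tz_pm1 hp2]
  have := p_mod_three hT hp2
  unfold pat1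
  have h3 := Nat.mod_lt (p-1) (show 0 < 3 by norm_num)
  interval_cases h : (p-1) % 3 <;> simp_all

lemma tz_pm2 (hp2 : 2 < p) (hmod : tz p (p - 1) = -1) : 3 * tz p (p - 2) = 1 := by
  -- in this case (p-1) % 3 = 1, so (p-2) % 3 = 0
  have hne := p_mod_three hT hp2
  have h1 : (p - 1) % 3 = 1 := by
    have h3 := Nat.mod_lt (p-1) (show 0 < 3 by norm_num)
    by_contra hne1
    have h : (p - 1) % 3 = 0 := by omega
    rw [tz_pm1 hp2] at hmod
    unfold pat1 at hmod
    rw [h] at hmod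
    norm_num at hmod
    have h2 : ((2 : ℕ) : ZMod p) = 0 := by
      push_cast
      linear_combination hmod
    rw [ZMod.natCast_eq_zero_iff] at h2
    have := Nat.le_of_dvd (by norm_num) h2
    omega
  have h0 : (p - 2) % 3 = 0 := by omega
  have hG : tz p (p - 2) = pat2 p (p - 2) := coeff_G hp2 (p - 2) (by omega)
  rw [hG]
  unfold pat2
  rw [h0, if_neg (by norm_num : ¬(0 = 1)), mul_one]
  have h33 : 3 * ((p - 2) / 3 + 1) = p + 1 := by omega
  calc (3 : ZMod p) * (((p - 2) / 3 + 1 : ℕ) : ZMod p)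
      = ((3 * ((p - 2) / 3 + 1) : ℕ) : ZMod p) := by push_cast; ring
    _ = ((p + 1 : ℕ) : ZMod p) := by rw [h33]
    _ = 1 := by push_cast; simp [ZMod.natCast_self]

end P4

-- standalone nat lemmas
lemma mod_mul_high {a b n : ℕ} (ha : 0 < a) (hb : 0 < b) :
    n % (a * b) = a * b - 1 ↔ (n % a = a - 1 ∧ (n / a) % b = b - 1) := by
  have hid := Nat.mod_mul (x := n) (a := a) (b := b)
  have hs : n % a < a := Nat.mod_lt _ ha
  have hx : (n / a) % b < b := Nat.mod_lt _ hb
  obtain ⟨y, hy⟩ : ∃ y, b = y + 1 := ⟨b - 1, by omega⟩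
  have hmul : a * b = a * y + a := by rw [hy]; ring
  constructor
  · intro h
    have hxy : (n / a) % b ≤ y := by omega
    have humul : a * ((n / a) % b) ≤ a * y := Nat.mul_le_mul_left a hxy
    have hsa : n % a = a - 1 := by omega
    have hu : a * ((n / a) % b) = a * y := by omega
    have := Nat.eq_of_mul_eq_mul_left ha hu
    exact ⟨hsa, by omega⟩
  · rintro ⟨h1, h2⟩
    have : a * ((n / a) % b) = a * y := by rw [h2]; congr 1; omega
    omega

lemma count_residue_class (M r : ℕ) (hr : r < M) (N : ℕ) :
    ((Finset.range N).filter (fun n => n % M = r)).card = (N + (M - 1 - r)) / M := by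
  have hM : 0 < M := by omega
  induction N with
  | zero => simp [Nat.div_eq_of_lt (show M - 1 - r < M by omega)]
  | succ N ih =>
    rw [Finset.range_add_one, Finset.filter_insert]
    have hsd := Nat.succ_div (a := N + (M - 1 - r)) (b := M)
    have hNd : M * (N / M) + N % M = N := Nat.div_add_mod N M
    have hsN : N % M < M := Nat.mod_lt _ hM
    have harg : N + 1 + (M - 1 - r) = N + (M - 1 - r) + 1 := by omega
    rw [harg]
    by_cases h : N % M = r
    · have hx : M * (N / M + 1) = M * (N / M) + M := by ring
      have hdvd : M ∣ N + (M - 1 - r) + 1 := ⟨N / M + 1, by omega⟩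
      rw [if_pos hdvd] at hsd
      rw [if_pos h, Finset.card_insert_of_notMem (by simp), ih, hsd]
    · have hndvd : ¬ M ∣ N + (M - 1 - r) + 1 := by
        rintro ⟨c, hc⟩
        have h4 : M * c = M * (N / M) + (N % M + M - r) := by omega
        have hlow : M * (N / M) < M * c := by omega
        have hhigh : M * c < M * (N / M + 2) := by
          have : M * (N / M + 2) = M * (N / M) + M + M := by ring
          omega
        have h5 : N / M < c := lt_of_mul_lt_mul_left hlow (Nat.zero_le M)
        have h6 : c < N / M + 2 := lt_of_mul_lt_mul_left hhigh (Nat.zero_le M)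
        have hce : c = N / M + 1 := by omega
        subst hce
        have : M * (N / M + 1) = M * (N / M) + M := by ring
        omega
      rw [if_neg hndvd] at hsd
      rw [if_neg h, ih]
      omega

lemma count_residue_class_bound (M r : ℕ) (hr : r < M) (N : ℕ) :
    |(((Finset.range N).filter (fun n => n % M = r)).card : ℝ) - (N : ℝ) / (M : ℝ)| ≤ 1 := by
  have hM : 0 < M := by omega
  rw [count_residue_class M r hr N]
  set q := (N + (M - 1 - r)) / M with hq
  have hdm : M * q + (N + (M - 1 - r)) % M = N + (M - 1 - r) := Nat.div_add_mod _ M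
  have hrem : (N + (M - 1 - r)) % M < M := Nat.mod_lt _ hM
  have hq1 : M * q ≤ N + M := by omega
  have hq2 : N ≤ M * q + M := by omega
  have hMR : (0 : ℝ) < (M : ℝ) := by exact_mod_cast hM
  rw [abs_le]
  constructor
  · have h2 : (N : ℝ) ≤ M * q + M := by exact_mod_cast hq2
    rw [neg_le, neg_sub, sub_le_iff_le_add, div_le_iff₀ hMR]
    nlinarith
  · have h1 : (M : ℝ) * q ≤ N + M := by exact_mod_cast hq1
    rw [sub_le_iff_le_add, ← sub_le_iff_le_add', le_div_iff₀ hMR]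
    nlinarith

section P5
variable {p : ℕ} [hp : Fact p.Prime]

/-- the congruence `3 T_n ≡ T_{p-1}^k T_{n+1}` mod `p` -/
def condK (p k n : ℕ) : Prop :=
  3 * tz p n = tz p (p - 1) ^ k * tz p (n + 1)

lemma tz_zero_eq_one : tz p 0 = 1 := by unfold tz; simp

variable (hT : ∀ n < p, ¬ (p : ℤ) ∣ centralTrinomial n) (hp2 : 2 < p)
include hT

lemma condK_mod {k n : ℕ} (h : n % p < p - 1) : condK p k n ↔ condK p k (n % p) := by
  have hp0 := hp.out.pos
  have hd : n / p * p + n % p = n := Nat.div_add_mod' n p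
  have h1 := tz_lucas (p := p) (a := n / p) (b := n % p) (Nat.mod_lt n hp0)
  rw [hd] at h1
  have h2 := tz_lucas (p := p) (a := n / p) (b := n % p + 1) (by omega)
  have hd2 : n / p * p + (n % p + 1) = n + 1 := by omega
  rw [hd2] at h2
  unfold condK
  rw [h1, h2]
  have hq := tz_ne_zero hT (n / p)
  constructor
  · intro h3
    apply mul_left_cancel₀ hq
    linear_combination h3
  · intro h3
    linear_combination tz p (n / p) * h3

include hp2 in
lemma condK_step {k n : ℕ} (h : n % p = p - 1) : condK p k n ↔ condK p (k + 1) (n / p) := by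
  have hp0 := hp.out.pos
  have hd : n / p * p + n % p = n := Nat.div_add_mod' n p
  have h1 := tz_lucas (p := p) (a := n / p) (b := p - 1) (by omega)
  rw [show n / p * p + (p - 1) = n by omega] at h1
  have h2 := tz_lucas (p := p) (a := n / p + 1) (b := 0) hp0
  have hd2 : (n / p + 1) * p + 0 = n + 1 := by
    have hx : (n / p + 1) * p = n / p * p + p := by ring
    omega
  rw [hd2, tz_zero_eq_one, mul_one] at h2
  unfold condK
  rw [h1, h2]
  have hc2 : tz p (p - 1) ^ 2 = 1 := tz_pm1_sq hT hp2
  constructor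
  · intro h3
    linear_combination tz p (p - 1) * h3 - 3 * tz p (n / p) * hc2
  · intro h3
    linear_combination tz p (p - 1) * h3 + tz p (p - 1) ^ k * tz p (n / p + 1) * hc2

include hp2 in
lemma condK_parity {k n : ℕ} : condK p k n ↔ condK p (k % 2) n := by
  have hpow : tz p (p - 1) ^ k = tz p (p - 1) ^ (k % 2) := by
    conv_lhs => rw [show k = 2 * (k / 2) + k % 2 by omega]
    rw [pow_add, pow_mul, tz_pm1_sq hT hp2, one_pow, one_mul]
  unfold condK
  rw [hpow]

include hp2 in
lemma condK_master : ∀ n k, condK p k n ↔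
    ∃ j, n % p ^ j = p ^ j - 1 ∧ (n / p ^ j) % p < p - 1 ∧
      condK p (k + j) ((n / p ^ j) % p) := by
  intro n
  induction n using Nat.strong_induction_on with
  | _ n ih =>
    intro k
    have hp0 := hp.out.pos
    have hp1 := hp.out.one_lt
    have hm := Nat.mod_lt n hp0
    rcases Nat.lt_or_ge (n % p) (p - 1) with h | h
    · rw [condK_mod hT h]
      constructor
      · intro h3
        refine ⟨0, by simp [Nat.mod_one], ?_, ?_⟩
        · simpa using h
        · simpa using h3
      · rintro ⟨j, hj1, hj2, hj3⟩
        have hj0 : j = 0 := by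
          by_contra hne
          obtain ⟨j', rfl⟩ : ∃ j', j = j' + 1 := ⟨j - 1, by omega⟩
          have hsplit := mod_mul_high (a := p) (b := p ^ j') (n := n) hp0
            (Nat.pow_pos (n := j') hp0)
          rw [← pow_succ'] at hsplit
          have := (hsplit.1 hj1).1
          omega
        subst hj0
        simpa using hj3
    · have he : n % p = p - 1 := by omega
      rw [condK_step hT hp2 he]
      have hle := Nat.mod_le n p
      have hnpos : 0 < n := by omega
      have hnp : n / p < n := Nat.div_lt_self hnpos hp1
      rw [ih (n / p) hnp (k + 1)]
      have hps : ∀ j : ℕ, p ^ (j + 1) = p * p ^ j := fun j => pow_succ' p j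
      have hdd : ∀ j : ℕ, n / p ^ (j + 1) = n / p / p ^ j := by
        intro j
        rw [hps j, ← Nat.div_div_eq_div_mul]
      constructor
      · rintro ⟨j, h1, h2, h3⟩
        refine ⟨j + 1, ?_, ?_, ?_⟩
        · rw [hps j]
          exact (mod_mul_high hp0 (Nat.pow_pos (n := j) hp0)).2 ⟨he, h1⟩
        · rw [hdd j]; exact h2
        · rw [hdd j, show k + (j + 1) = k + 1 + j by omega]; exact h3
      · rintro ⟨j, h1, h2, h3⟩
        have hj0 : j ≠ 0 := by
          rintro rfl
          simp only [pow_zero, Nat.div_one] at h2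
          omega
        obtain ⟨j', rfl⟩ : ∃ j', j = j' + 1 := ⟨j - 1, by omega⟩
        refine ⟨j', ?_, ?_, ?_⟩
        · rw [hps j'] at h1
          exact ((mod_mul_high hp0 (Nat.pow_pos (n := j') hp0)).1 h1).2
        · rw [← hdd j']; exact h2
        · rw [← hdd j', show k + 1 + j' = k + (j' + 1) by omega]; exact h3

end P5

open scoped Classical

section P6
variable {p : ℕ} [hp : Fact p.Prime]

/-- trailing-digit structure predicate -/
def InS (p j n : ℕ) : Prop :=
  n % p ^ j = p ^ j - 1 ∧ (n / p ^ j) % p < p - 1 ∧ condK p j ((n / p ^ j) % p)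

variable (hT : ∀ n < p, ¬ (p : ℤ) ∣ centralTrinomial n) (hp2 : 2 < p)
include hT hp2

lemma cond_iff_exists (n : ℕ) : condK p 0 n ↔ ∃ j, InS p j n := by
  rw [condK_master hT hp2 n 0]
  unfold InS
  simp only [Nat.zero_add]

omit hT hp2 in
lemma inS_unique {j j' n : ℕ} (h : InS p j n) (h' : InS p j' n) : j = j' := by
  have hp0 := hp.out.pos
  have key : ∀ {i i' : ℕ}, InS p i n → InS p i' n → i < i' → False := by
    intro i i' hi hi' hlt
    have hpi : 0 < p ^ (i + 1) := Nat.pow_pos hp0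
    have h1 : n % p ^ (i + 1) = p ^ (i + 1) - 1 := by
      have hdvd : p ^ (i + 1) ∣ p ^ i' := pow_dvd_pow p (by omega)
      have hmm := Nat.mod_mod_of_dvd n hdvd
      rw [hi'.1] at hmm
      obtain ⟨t, ht⟩ := hdvd
      have htpos : 0 < t := by
        rcases Nat.eq_zero_or_pos t with rfl | h
        · exfalso
          have := Nat.pow_pos (n := i') hp0
          omega
        · exact h
      have hsplit : p ^ (i + 1) * t - 1 = p ^ (i + 1) * (t - 1) + (p ^ (i + 1) - 1) := by
        have hx : p ^ (i + 1) * (t - 1) + p ^ (i + 1) = p ^ (i + 1) * t := by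
          rw [Nat.mul_sub_one]
          have := Nat.le_mul_of_pos_right (p ^ (i+1)) htpos
          omega
        omega
      rw [← hmm, ht, hsplit, Nat.mul_add_mod, Nat.mod_eq_of_lt (by omega)]
    have h2 := (mod_mul_high (a := p ^ i) (b := p) (n := n)
      (Nat.pow_pos hp0) hp0).1 (by rw [← pow_succ]; exact h1)
    have := hi.2.1
    omega
  rcases lt_trichotomy j j' with h1 | h1 | h1
  · exact absurd (key h h' h1) not_false
  · exact h1
  · exact absurd (key h' h h1) not_false

omit hT hp2 in
lemma inS_mod_iff {j n : ℕ} : InS p j n ↔ InS p j (n % p ^ (j + 1)) := by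
  have hp0 := hp.out.pos
  have e1 : n % p ^ (j + 1) % p ^ j = n % p ^ j :=
    Nat.mod_mod_of_dvd n (pow_dvd_pow p (by omega))
  have e2 : n % p ^ (j + 1) / p ^ j = n / p ^ j % p := by
    rw [pow_succ]
    exact Nat.mod_mul_right_div_self n (p ^ j) p
  have e3 : n / p ^ j % p % p = n / p ^ j % p := Nat.mod_mod_of_dvd _ dvd_rfl
  unfold InS
  rw [e1, e2, e3]

omit hT hp2 in
lemma card_Rj (j : ℕ) :
    ((Finset.range (p ^ (j + 1))).filter (fun r => InS p j r)).card
      = ((Finset.range (p - 1)).filter (fun d => condK p j d)).card := by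
  have hp0 := hp.out.pos
  have hpj : 0 < p ^ j := Nat.pow_pos hp0
  have hpj1 : p ^ (j + 1) = p ^ j * p := pow_succ p j
  apply Finset.card_bij' (i := fun r _ => r / p ^ j % p)
    (j := fun d _ => p ^ j * d + (p ^ j - 1))
  · intro r hr
    rw [Finset.mem_filter, Finset.mem_range] at hr
    rw [Finset.mem_filter, Finset.mem_range]
    exact ⟨hr.2.2.1, hr.2.2.2⟩
  · intro d hd
    rw [Finset.mem_filter, Finset.mem_range] at hd
    have hdp : d < p - 1 := hd.1
    have hdiv : (p ^ j * d + (p ^ j - 1)) / p ^ j % p = d := by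
      rw [Nat.mul_add_div hpj, Nat.div_eq_of_lt (by omega), Nat.add_zero,
        Nat.mod_eq_of_lt (by omega)]
    rw [Finset.mem_filter, Finset.mem_range]
    refine ⟨?_, ?_, ?_, ?_⟩
    · have hmul : p ^ j * (d + 1) ≤ p ^ j * p := Nat.mul_le_mul_left _ (by omega)
      have hx : p ^ j * (d + 1) = p ^ j * d + p ^ j := by ring
      omega
    · rw [Nat.mul_add_mod, Nat.mod_eq_of_lt (by omega)]
    · rw [hdiv]; exact hdp
    · rw [hdiv]; exact hd.2
  · intro r hr
    rw [Finset.mem_filter, Finset.mem_range] at hr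
    have hrd : r / p ^ j < p := by
      rw [Nat.div_lt_iff_lt_mul hpj]
      rw [hpj1] at hr
      have hcomm : p * p ^ j = p ^ j * p := Nat.mul_comm _ _
      omega
    rw [Nat.mod_eq_of_lt hrd]
    have := Nat.div_add_mod r (p ^ j)
    rw [hr.2.1] at this
    omega
  · intro d hd
    rw [Finset.mem_filter, Finset.mem_range] at hd
    rw [Nat.mul_add_div hpj, Nat.div_eq_of_lt (by omega), Nat.add_zero,
      Nat.mod_eq_of_lt (by omega)]

lemma count_decomp (N : ℕ) :
    ((Finset.range N).filter (fun n => condK p 0 n)).card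
      = ∑ j ∈ Finset.range (2 * (Nat.log p N + 1)),
          ((Finset.range N).filter (fun n => InS p j n)).card := by
  have hp0 := hp.out.pos
  set K := 2 * (Nat.log p N + 1) with hK
  have hNK : N < p ^ K := by
    calc N < p ^ (Nat.log p N + 1) := Nat.lt_pow_succ_log_self hp.out.one_lt N
      _ ≤ p ^ K := Nat.pow_le_pow_right hp0 (by omega)
  have hset : (Finset.range N).filter (fun n => condK p 0 n)
      = (Finset.range K).biUnion (fun j => (Finset.range N).filter (fun n => InS p j n)) := by
    ext n
    simp only [Finset.mem_biUnion, Finset.mem_filter, Finset.mem_range]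
    constructor
    · rintro ⟨hn, hcond⟩
      obtain ⟨j, hj⟩ := (cond_iff_exists hT hp2 n).1 hcond
      refine ⟨j, ?_, hn, hj⟩
      by_contra hjK
      have hjK' : K ≤ j := by omega
      have hle : p ^ K ≤ p ^ j := Nat.pow_le_pow_right hp0 hjK'
      have hn' : n % p ^ j ≤ n := Nat.mod_le n _
      have h1 := hj.1
      have hpj : 0 < p ^ j := Nat.pow_pos hp0
      omega
    · rintro ⟨j, hjK, hn, hj⟩
      exact ⟨hn, (cond_iff_exists hT hp2 n).2 ⟨j, hj⟩⟩
  rw [hset, Finset.card_biUnion]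
  intro x hx y hy hxy
  rw [Function.onFun, Finset.disjoint_left]
  intro n hnx hny
  rw [Finset.mem_filter] at hnx hny
  exact hxy (inS_unique hnx.2 hny.2)

end P6

section P7
variable {p : ℕ} [hp : Fact p.Prime]

lemma count_mod_group (M : ℕ) (S : Finset ℕ) (N : ℕ)
    (P : ℕ → Prop) [DecidablePred P] (hP : ∀ n, P n ↔ n % M ∈ S) :
    ((Finset.range N).filter P).card
      = ∑ r ∈ S, ((Finset.range N).filter (fun n => n % M = r)).card := by
  rw [← Finset.card_biUnion]
  · congr 1
    ext n
    simp only [Finset.mem_biUnion, Finset.mem_filter, Finset.mem_range]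
    constructor
    · rintro ⟨hn, hPn⟩
      exact ⟨n % M, (hP n).1 hPn, hn, rfl⟩
    · rintro ⟨r, hr, hn, rfl⟩
      exact ⟨hn, (hP n).2 hr⟩
  · intro x hx y hy hxy
    rw [Function.onFun, Finset.disjoint_left]
    intro n hnx hny
    rw [Finset.mem_filter] at hnx hny
    exact hxy (hnx.2 ▸ hny.2 ▸ rfl)

variable (hT : ∀ n < p, ¬ (p : ℤ) ∣ centralTrinomial n) (hp2 : 2 < p)
include hT hp2

lemma count_InS_bound (j N : ℕ) :
    |((((Finset.range N).filter (fun n => InS p j n)).card : ℝ))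
        - (N : ℝ) * (((Finset.range (p - 1)).filter (fun d => condK p j d)).card : ℝ)
            / ((p : ℝ) ^ (j + 1))|
      ≤ (((Finset.range (p - 1)).filter (fun d => condK p j d)).card : ℝ) := by
  have hp0 := hp.out.pos
  set M := p ^ (j + 1) with hM
  have hMpos : 0 < M := Nat.pow_pos hp0
  set S := (Finset.range M).filter (fun r => InS p j r) with hS
  have hSlt : ∀ r ∈ S, r < M := by
    intro r hr
    rw [hS, Finset.mem_filter, Finset.mem_range] at hr
    exact hr.1
  have hP : ∀ n, InS p j n ↔ n % M ∈ S := by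
    intro n
    rw [hS, Finset.mem_filter, Finset.mem_range]
    constructor
    · intro h
      exact ⟨Nat.mod_lt _ hMpos, (inS_mod_iff (p := p)).1 h⟩
    · rintro ⟨_, h⟩
      exact (inS_mod_iff (p := p)).2 h
  have hcount := count_mod_group M S N _ hP
  have hcard : S.card = ((Finset.range (p - 1)).filter (fun d => condK p j d)).card := card_Rj j
  have hMR : ((M : ℕ) : ℝ) = (p : ℝ) ^ (j + 1) := by rw [hM]; exact Nat.cast_pow p (j + 1)
  have hEq : ((((Finset.range N).filter (fun n => InS p j n)).card : ℝ))
      - (N : ℝ) * (((Finset.range (p - 1)).filter (fun d => condK p j d)).card : ℝ)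
          / ((p : ℝ) ^ (j + 1))
      = ∑ r ∈ S, ((((Finset.range N).filter (fun n => n % M = r)).card : ℝ) - (N : ℝ) / (M : ℝ)) := by
    rw [Finset.sum_sub_distrib, Finset.sum_const, nsmul_eq_mul, hcard, ← hMR]
    have : ((((Finset.range N).filter (fun n => InS p j n)).card : ℝ))
        = (∑ r ∈ S, (((Finset.range N).filter (fun n => n % M = r)).card : ℝ)) := by
      exact_mod_cast hcount
    rw [this]
    ring
  rw [hEq]
  calc |∑ r ∈ S, ((((Finset.range N).filter (fun n => n % M = r)).card : ℝ) - (N : ℝ) / (M : ℝ))|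
      ≤ ∑ r ∈ S, |(((Finset.range N).filter (fun n => n % M = r)).card : ℝ) - (N : ℝ) / (M : ℝ)| :=
        Finset.abs_sum_le_sum_abs _ _
    _ ≤ ∑ _r ∈ S, 1 := by
        apply Finset.sum_le_sum
        intro r hr
        exact count_residue_class_bound M r (hSlt r hr) N
    _ = S.card := by simp
    _ = _ := by rw [hcard]

lemma cnt_parity (j : ℕ) :
    ((Finset.range (p - 1)).filter (fun d => condK p j d)).card
      = if Even j then ((Finset.range (p - 1)).filter (fun d => condK p 0 d)).card
        else ((Finset.range (p - 1)).filter (fun d => condK p 1 d)).card := by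
  have hcongr : (Finset.range (p - 1)).filter (fun d => condK p j d)
      = (Finset.range (p - 1)).filter (fun d => condK p (j % 2) d) := by
    apply Finset.filter_congr
    intro d _
    constructor
    · intro h; exact (condK_parity hT hp2).1 h
    · intro h; exact (condK_parity hT hp2).2 h
  rw [hcongr]
  rcases Nat.even_or_odd j with he | ho
  · rw [if_pos he, Nat.even_iff.1 he]
  · rw [if_neg (Nat.not_even_iff_odd.2 ho), Nat.odd_iff.1 ho]

end P7

lemma head_sum_eq (P : ℝ) (hP : 1 < P) (a b : ℝ) (m : ℕ) :
    ∑ j ∈ Finset.range (2 * m), (if Even j then a else b) / P ^ (j + 1)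
      = ((P * a + b) / (P ^ 2 - 1)) * (1 - ((P ^ 2)⁻¹) ^ m) := by
  have h0 : P ≠ 0 := by positivity
  have h1 : (0 : ℝ) < P ^ 2 - 1 := by nlinarith
  induction m with
  | zero => simp
  | succ m ih =>
    rw [show 2 * (m + 1) = 2 * m + 1 + 1 by ring, Finset.sum_range_succ, Finset.sum_range_succ, ih]
    have he : Even (2 * m) := even_two_mul m
    have ho : ¬ Even (2 * m + 1) := by
      simp [Nat.even_add_one, he]
    rw [if_pos he, if_neg ho]
    have h2 : P ^ 2 - 1 ≠ 0 := ne_of_gt h1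
    rw [inv_pow, inv_pow]
    field_simp
    ring

section P8
variable {p : ℕ} [hp : Fact p.Prime]

lemma tz_one_eq : tz p 1 = 1 := by
  unfold tz
  rw [pow_one]
  simp [coeff_one, coeff_X]

lemma tz_two_eq : tz p 2 = 3 := by
  unfold tz
  rw [sq, show ((1 + X + X ^ 2) * (1 + X + X ^ 2) : (ZMod p)[X]).coeff 2 = _ from coeff_mul_q _ 0]
  simp [coeff_one, coeff_X]
  norm_num

variable (hT : ∀ n < p, ¬ (p : ℤ) ∣ centralTrinomial n) (hp2 : 2 < p)
include hp2

lemma two_ne_zero_zmod : (2 : ZMod p) ≠ 0 := by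
  intro h
  rw [show (2 : ZMod p) = ((2 : ℕ) : ZMod p) by norm_num, ZMod.natCast_eq_zero_iff] at h
  have := Nat.le_of_dvd (by norm_num) h
  omega

lemma riordan_iff (n : ℕ) : (p : ℤ) ∣ riordan n ↔ condK p 0 n := by
  have h2R := two_riordan n
  have hcast : (2 : ZMod p) * ((riordan n : ℤ) : ZMod p)
      = 3 * tz p n - tz p (n + 1) := by
    rw [← tz_cast, ← tz_cast]
    exact_mod_cast congrArg (fun z : ℤ => ((z : ZMod p))) h2R
  rw [← ZMod.intCast_zmod_eq_zero_iff_dvd]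
  unfold condK
  rw [pow_zero, one_mul]
  constructor
  · intro h
    rw [h, mul_zero] at hcast
    linear_combination -hcast
  · intro h
    have : (2 : ZMod p) * ((riordan n : ℤ) : ZMod p) = 0 := by
      rw [hcast, h]; ring
    rcases mul_eq_zero.1 this with h' | h'
    · exact absurd h' (two_ne_zero_zmod hp2)
    · exact h'

include hT

lemma p_ge_five : 5 ≤ p := by
  have h3 := p_mod_three hT hp2
  have h4 : p ≠ 4 := by
    intro h
    rw [h] at hp
    exact absurd hp.out (by norm_num)
  have h3' : p ≠ 3 := by omega
  rcases hp.out.eq_one_or_self_of_dvd 1 ⟨p, (one_mul p).symm⟩ with h | h <;> omega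

lemma one_mem_A : condK p 0 1 := by
  unfold condK
  rw [pow_zero, one_mul, tz_one_eq, show (1 + 1 : ℕ) = 2 from rfl, tz_two_eq]
  norm_num

lemma numer_ge (hm1 : tz p (p - 1) = -1) : condK p 1 (p - 2) := by
  unfold condK
  rw [pow_one, show p - 2 + 1 = p - 1 by omega, hm1, tz_pm2 hT hp2 hm1]
  ring

lemma A_eq_B_of_one (hone : tz p (p - 1) = 1) (n : ℕ) : condK p 0 n ↔ condK p 1 n := by
  unfold condK
  rw [hone]
  simp

end P8

lemma log_div_tendsto (p : ℕ) (hp1 : 1 < p) :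
    Tendsto (fun N : ℕ => (Nat.log p N : ℝ) / N) atTop (nhds 0) := by
  have hlog : Tendsto (fun x : ℝ => Real.log x / x) atTop (nhds 0) :=
    Real.isLittleO_log_id_atTop.tendsto_div_nhds_zero
  have hcomp : Tendsto (fun N : ℕ => Real.log N / N) atTop (nhds 0) :=
    hlog.comp tendsto_natCast_atTop_atTop
  have hconst : Tendsto (fun N : ℕ => (Real.log 2)⁻¹ * (Real.log N / N)) atTop (nhds 0) := by
    simpa using hcomp.const_mul (Real.log 2)⁻¹
  apply squeeze_zero' ?_ ?_ hconst
  · filter_upwards [eventually_ge_atTop 1] with N hN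
    positivity
  · filter_upwards [eventually_ge_atTop 1] with N hN
    have hNpos : (0:ℝ) < N := by exact_mod_cast hN
    have h1 : (Nat.log p N : ℝ) ≤ (Nat.log 2 N : ℝ) := by
      exact_mod_cast Nat.log_anti_left (by norm_num) (by omega) (n := N)
    have h2 : (Nat.log 2 N : ℝ) ≤ Real.logb 2 N := Real.natLog_le_logb N 2
    have h3 : Real.logb 2 (N : ℝ) = (Real.log 2)⁻¹ * Real.log N := by
      rw [Real.logb]; ring
    rw [show (Real.log 2)⁻¹ * (Real.log N / N) = ((Real.log 2)⁻¹ * Real.log N) / N by ring]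
    gcongr
    calc (Nat.log p N : ℝ) ≤ Real.logb 2 N := h1.trans h2
      _ = (Real.log 2)⁻¹ * Real.log N := h3

section P9
variable {p : ℕ} [hp : Fact p.Prime]
variable (hT : ∀ n < p, ¬ (p : ℤ) ∣ centralTrinomial n) (hp2 : 2 < p)
include hT hp2

lemma key_estimate (N : ℕ) (hN : 1 ≤ N) :
    |(((Finset.range N).filter (fun n => condK p 0 n)).card : ℝ)
        - (N : ℝ) * (((p : ℝ) * (((Finset.range (p - 1)).filter (fun d => condK p 0 d)).card : ℝ)
            + (((Finset.range (p - 1)).filter (fun d => condK p 1 d)).card : ℝ)) / ((p:ℝ)^2 - 1))|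
      ≤ ((2 * (Nat.log p N + 1) : ℕ) : ℝ) * (p : ℝ)
        + (((p : ℝ) * (((Finset.range (p - 1)).filter (fun d => condK p 0 d)).card : ℝ)
            + (((Finset.range (p - 1)).filter (fun d => condK p 1 d)).card : ℝ)) / ((p:ℝ)^2 - 1)) := by
  have hp0 := hp.out.pos
  have hp5 := p_ge_five hT hp2
  have hp5R : (5 : ℝ) ≤ (p : ℝ) := by exact_mod_cast hp5
  set a := (((Finset.range (p - 1)).filter (fun d => condK p 0 d)).card : ℝ) with ha
  set b := (((Finset.range (p - 1)).filter (fun d => condK p 1 d)).card : ℝ) with hb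
  set m := Nat.log p N + 1 with hm
  set D := ((p : ℝ) * a + b) / ((p:ℝ)^2 - 1) with hD
  have hdec : (((Finset.range N).filter (fun n => condK p 0 n)).card : ℝ)
      = ∑ j ∈ Finset.range (2 * m),
          ((((Finset.range N).filter (fun n => InS p j n)).card : ℝ)) := by
    exact_mod_cast congrArg (Nat.cast : ℕ → ℝ) (count_decomp hT hp2 N)
  have hstep1 : |(((Finset.range N).filter (fun n => condK p 0 n)).card : ℝ)
      - ∑ j ∈ Finset.range (2*m),
          (N : ℝ) * ((((Finset.range (p-1)).filter (fun d => condK p j d)).card : ℝ)) / (p:ℝ)^(j+1)|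
      ≤ ((2*m : ℕ) : ℝ) * (p : ℝ) := by
    rw [hdec, ← Finset.sum_sub_distrib]
    refine (Finset.abs_sum_le_sum_abs _ _).trans ?_
    have hterm : ∀ j ∈ Finset.range (2*m),
        |((((Finset.range N).filter (fun n => InS p j n)).card : ℝ))
          - (N : ℝ) * ((((Finset.range (p-1)).filter (fun d => condK p j d)).card : ℝ)) / (p:ℝ)^(j+1)|
        ≤ (p : ℝ) := by
      intro j _
      refine (count_InS_bound hT hp2 j N).trans ?_
      have : ((Finset.range (p-1)).filter (fun d => condK p j d)).card ≤ p :=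
        (Finset.card_filter_le _ _).trans (by rw [Finset.card_range]; omega)
      exact_mod_cast this
    refine (Finset.sum_le_sum hterm).trans ?_
    rw [Finset.sum_const, Finset.card_range, nsmul_eq_mul]
  have hhead : ∑ j ∈ Finset.range (2*m),
      (N : ℝ) * ((((Finset.range (p-1)).filter (fun d => condK p j d)).card : ℝ)) / (p:ℝ)^(j+1)
      = (N : ℝ) * (D * (1 - (((p:ℝ)^2)⁻¹)^m)) := by
    have hcongr : ∀ j ∈ Finset.range (2*m),
        (N : ℝ) * ((((Finset.range (p-1)).filter (fun d => condK p j d)).card : ℝ)) / (p:ℝ)^(j+1)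
        = (N : ℝ) * ((if Even j then a else b) / (p:ℝ)^(j+1)) := by
      intro j _
      rw [cnt_parity hT hp2 j]
      by_cases hj : Even j
      · simp only [if_pos hj, ha]; ring
      · simp only [if_neg hj, hb]; ring
    rw [Finset.sum_congr rfl hcongr, ← Finset.mul_sum,
      head_sum_eq (p:ℝ) (by exact_mod_cast hp.out.one_lt) a b m, hD]
  have hxm : (N : ℝ) * (((p:ℝ)^2)⁻¹)^m ≤ 1 := by
    have hpm : N < p ^ m := Nat.lt_pow_succ_log_self hp.out.one_lt N
    have hNle : (N : ℝ) ≤ (p:ℝ) ^ m := by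
      have : (N : ℝ) < (p:ℝ) ^ m := by exact_mod_cast hpm
      linarith
    have hple : (p:ℝ) ^ m ≤ (p:ℝ) ^ (2*m) :=
      pow_le_pow_right₀ (by linarith) (by omega)
    rw [inv_pow, ← pow_mul, ← div_eq_mul_inv, div_le_one (by positivity)]
    linarith
  have hDnn : 0 ≤ D := by
    rw [hD]
    apply div_nonneg
    · positivity
    · nlinarith
  have htri : |(((Finset.range N).filter (fun n => condK p 0 n)).card : ℝ) - (N : ℝ) * D|
      ≤ ((2*m : ℕ) : ℝ) * (p : ℝ) + (N : ℝ) * D * (((p:ℝ)^2)⁻¹)^m := by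
    have h2 : |(N : ℝ) * (D * (1 - (((p:ℝ)^2)⁻¹)^m)) - (N : ℝ) * D|
        = (N : ℝ) * D * (((p:ℝ)^2)⁻¹)^m := by
      rw [show (N : ℝ) * (D * (1 - (((p:ℝ)^2)⁻¹)^m)) - (N : ℝ) * D
          = -((N : ℝ) * D * (((p:ℝ)^2)⁻¹)^m) by ring, abs_neg, abs_of_nonneg (by positivity)]
    calc |(((Finset.range N).filter (fun n => condK p 0 n)).card : ℝ) - (N : ℝ) * D|
        ≤ |(((Finset.range N).filter (fun n => condK p 0 n)).card : ℝ)
            - ∑ j ∈ Finset.range (2*m), (N : ℝ) * ((((Finset.range (p-1)).filter (fun d => condK p j d)).card : ℝ)) / (p:ℝ)^(j+1)|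
          + |∑ j ∈ Finset.range (2*m), (N : ℝ) * ((((Finset.range (p-1)).filter (fun d => condK p j d)).card : ℝ)) / (p:ℝ)^(j+1)
            - (N : ℝ) * D| := abs_sub_le _ _ _
      _ ≤ ((2*m : ℕ) : ℝ) * (p : ℝ) + (N : ℝ) * D * (((p:ℝ)^2)⁻¹)^m := by
          have h2' : |∑ j ∈ Finset.range (2*m), (N : ℝ) * ((((Finset.range (p-1)).filter (fun d => condK p j d)).card : ℝ)) / (p:ℝ)^(j+1)
              - (N : ℝ) * D| = (N : ℝ) * D * (((p:ℝ)^2)⁻¹)^m := by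
            rw [hhead]; exact h2
          exact add_le_add hstep1 h2'.le
  refine htri.trans ?_
  have : (N : ℝ) * D * (((p:ℝ)^2)⁻¹)^m ≤ D := by
    calc (N : ℝ) * D * (((p:ℝ)^2)⁻¹)^m = D * ((N : ℝ) * (((p:ℝ)^2)⁻¹)^m) := by ring
      _ ≤ D * 1 := mul_le_mul_of_nonneg_left hxm hDnn
      _ = D := mul_one D
  exact add_le_add_right this _

end P9

open scoped Classical in
theorem stmt17 (p : ℕ) (hp : p.Prime) (hp2 : 2 < p)
    (hT : ∀ n < p, ¬ (p : ℤ) ∣ centralTrinomial n) :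
    Tendsto
      (fun N : ℕ =>
        (((Finset.range N).filter (fun n => (p : ℤ) ∣ riordan n)).card : ℝ) / N)
      atTop
      (nhds
        (((((Finset.range (p - 1)).filter
            (fun m => 3 * centralTrinomial m ≡
              centralTrinomial (p - 1) * centralTrinomial (m + 1) [ZMOD (p : ℤ)])).card : ℝ) +
          (p : ℝ) * (((Finset.range (p - 1)).filter
            (fun m => 3 * centralTrinomial m ≡ centralTrinomial (m + 1) [ZMOD (p : ℤ)])).card : ℝ)) /
          (((p : ℝ) - 1) * ((p : ℝ) + 1)))) ∧
    1 / ((p : ℝ) - 1) ≤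
      ((((Finset.range (p - 1)).filter
          (fun m => 3 * centralTrinomial m ≡
            centralTrinomial (p - 1) * centralTrinomial (m + 1) [ZMOD (p : ℤ)])).card : ℝ) +
        (p : ℝ) * (((Finset.range (p - 1)).filter
          (fun m => 3 * centralTrinomial m ≡ centralTrinomial (m + 1) [ZMOD (p : ℤ)])).card : ℝ)) /
        (((p : ℝ) - 1) * ((p : ℝ) + 1)) := by
  haveI hF : Fact p.Prime := ⟨hp⟩
  have hp5 := p_ge_five hT hp2
  have hp5R : (5:ℝ) ≤ (p:ℝ) := by exact_mod_cast hp5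
  have hAiff : ∀ m : ℕ,
      (3 * centralTrinomial m ≡ centralTrinomial (m + 1) [ZMOD (p : ℤ)]) ↔ condK p 0 m := by
    intro m
    rw [← ZMod.intCast_eq_intCast_iff]
    have e1 : ((3 * centralTrinomial m : ℤ) : ZMod p) = 3 * tz p m := by
      push_cast [tz_cast]; ring
    have e2 : ((centralTrinomial (m+1) : ℤ) : ZMod p) = tz p (m+1) := tz_cast _
    rw [e1, e2]
    unfold condK
    rw [pow_zero, one_mul]
  have hBiff : ∀ m : ℕ,
      (3 * centralTrinomial m ≡ centralTrinomial (p-1) * centralTrinomial (m + 1) [ZMOD (p : ℤ)])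
        ↔ condK p 1 m := by
    intro m
    rw [← ZMod.intCast_eq_intCast_iff]
    have e1 : ((3 * centralTrinomial m : ℤ) : ZMod p) = 3 * tz p m := by
      push_cast [tz_cast]; ring
    have e2 : ((centralTrinomial (p-1) * centralTrinomial (m+1) : ℤ) : ZMod p)
        = tz p (p-1) * tz p (m+1) := by
      push_cast [tz_cast]; ring
    rw [e1, e2]
    unfold condK
    rw [pow_one]
  have hsetA : (Finset.range (p-1)).filter
      (fun m => 3 * centralTrinomial m ≡ centralTrinomial (m+1) [ZMOD (p:ℤ)])
      = (Finset.range (p-1)).filter (fun d => condK p 0 d) := by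
    ext x
    simp only [Finset.mem_filter]
    exact and_congr Iff.rfl (hAiff x)
  have hsetB : (Finset.range (p-1)).filter
      (fun m => 3 * centralTrinomial m ≡ centralTrinomial (p-1) * centralTrinomial (m+1) [ZMOD (p:ℤ)])
      = (Finset.range (p-1)).filter (fun d => condK p 1 d) := by
    ext x
    simp only [Finset.mem_filter]
    exact and_congr Iff.rfl (hBiff x)
  have hsetR : ∀ N : ℕ, (Finset.range N).filter (fun n => (p:ℤ) ∣ riordan n)
      = (Finset.range N).filter (fun n => condK p 0 n) := by
    intro N; ext n
    simp only [Finset.mem_filter]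
    exact and_congr Iff.rfl (riordan_iff hp2 n)
  rw [hsetA, hsetB]
  set a := (((Finset.range (p-1)).filter (fun d => condK p 0 d)).card : ℝ) with ha
  set b := (((Finset.range (p-1)).filter (fun d => condK p 1 d)).card : ℝ) with hb
  have hDeq : (b + (p:ℝ) * a) / (((p:ℝ)-1) * ((p:ℝ)+1)) = ((p:ℝ) * a + b) / ((p:ℝ)^2 - 1) := by
    rw [show ((p:ℝ)-1)*((p:ℝ)+1) = (p:ℝ)^2 - 1 by ring, add_comm]
  rw [hDeq]
  set D := ((p:ℝ) * a + b) / ((p:ℝ)^2 - 1) with hD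
  have hfun : (fun N : ℕ => (((Finset.range N).filter (fun n => (p:ℤ) ∣ riordan n)).card : ℝ) / N)
      = (fun N : ℕ => (((Finset.range N).filter (fun n => condK p 0 n)).card : ℝ) / N) := by
    funext N
    rw [hsetR N]
  rw [hfun]
  have ha1 : (1:ℝ) ≤ a := by
    rw [ha]
    have : 0 < ((Finset.range (p-1)).filter (fun d => condK p 0 d)).card :=
      Finset.card_pos.2 ⟨1, Finset.mem_filter.2
        ⟨Finset.mem_range.2 (by omega), one_mem_A hT hp2⟩⟩
    exact_mod_cast this
  have hann : (0:ℝ) ≤ a := by positivity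
  have hbnn : (0:ℝ) ≤ b := by positivity
  have hnum : (p:ℝ) + 1 ≤ b + (p:ℝ) * a := by
    rcases tz_pm1_cases hT hp2 with h1 | h1
    · have hBA : (Finset.range (p-1)).filter (fun d => condK p 1 d)
          = (Finset.range (p-1)).filter (fun d => condK p 0 d) := by
        ext x
        simp only [Finset.mem_filter]
        exact and_congr Iff.rfl (A_eq_B_of_one hT hp2 h1 x).symm
      have hba : b = a := by rw [hb, hBA, ← ha]
      rw [hba]
      nlinarith
    · have hb1 : (1:ℝ) ≤ b := by
        rw [hb]
        have : 0 < ((Finset.range (p-1)).filter (fun d => condK p 1 d)).card :=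
          Finset.card_pos.2 ⟨p - 2, Finset.mem_filter.2
            ⟨Finset.mem_range.2 (by omega), numer_ge hT hp2 h1⟩⟩
        exact_mod_cast this
      nlinarith
  constructor
  · -- the density limit
    have hg : Tendsto (fun N : ℕ => 2*(p:ℝ) * ((Nat.log p N : ℝ)/N) + (2*(p:ℝ) + D) * (1/(N:ℝ)))
        atTop (nhds 0) := by
      have t1 := (log_div_tendsto p hp.one_lt).const_mul (2*(p:ℝ))
      have t2 : Tendsto (fun N : ℕ => (2*(p:ℝ) + D) * (1/(N:ℝ))) atTop (nhds 0) := by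
        have := tendsto_one_div_atTop_nhds_zero_nat.const_mul (2*(p:ℝ) + D)
        simpa using this
      have := t1.add t2
      simpa using this
    have hbound : ∀ᶠ N : ℕ in atTop,
        ‖(((Finset.range N).filter (fun n => condK p 0 n)).card : ℝ)/N - D‖
          ≤ 2*(p:ℝ) * ((Nat.log p N : ℝ)/N) + (2*(p:ℝ) + D) * (1/(N:ℝ)) := by
      filter_upwards [eventually_ge_atTop 1] with N hN
      have hNR : (0:ℝ) < N := by exact_mod_cast hN
      have hkey := key_estimate hT hp2 N hN
      rw [Real.norm_eq_abs,
        show (((Finset.range N).filter (fun n => condK p 0 n)).card : ℝ)/N - D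
          = ((((Finset.range N).filter (fun n => condK p 0 n)).card : ℝ) - (N:ℝ) * D)/(N:ℝ) by
            field_simp,
        abs_div, abs_of_pos hNR]
      rw [show 2*(p:ℝ) * ((Nat.log p N : ℝ)/N) + (2*(p:ℝ) + D) * (1/(N:ℝ))
          = (2*(p:ℝ) * (Nat.log p N : ℝ) + (2*(p:ℝ) + D))/(N:ℝ) by ring]
      gcongr
      calc |(((Finset.range N).filter (fun n => condK p 0 n)).card : ℝ) - (N:ℝ) * D|
          ≤ ((2 * (Nat.log p N + 1) : ℕ) : ℝ) * (p : ℝ) + D := hkey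
        _ = 2*(p:ℝ) * (Nat.log p N : ℝ) + (2*(p:ℝ) + D) := by push_cast; ring
    have hdiff : Tendsto (fun N : ℕ =>
        (((Finset.range N).filter (fun n => condK p 0 n)).card : ℝ)/N - D) atTop (nhds 0) :=
      squeeze_zero_norm' hbound hg
    have := hdiff.add_const D
    simpa using this
  · -- the lower bound
    have hden1 : (0:ℝ) < (p:ℝ) - 1 := by linarith
    have hden2 : (0:ℝ) < (p:ℝ)^2 - 1 := by nlinarith
    rw [hD, div_le_div_iff₀ hden1 hden2]
    nlinarith
end
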